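/- arXiv:1808.08854 — 9 statements merged into one kernel-verified Lean document; each statement's English description precedes it below -/
import Mathlib

section
/- Let n ≥ 1 and let C be an additive subgroup of the n×n matrices over F₂ with |C| = 2^(2n) such that every nonzero matrix in C has rank at least n−1. Then there exist additive subgroups S₁ and S₂ of C, each of cardinality 2^n, such that every nonzero matrix in S₁ and every nonzero matrix in S₂ is invertible, S₁ ∩ S₂ = {0}, and C = S₁ + S₂ = {X + Y : X ∈ S₁, Y ∈ S₂}. -/
open Matrix Finset

private lemma zmod2_cases (a : ZMod 2) : a = 0 ∨ a = 1 := by revert a; decide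

private lemma zmod2_add_self (a : ZMod 2) : a + a = 0 := by revert a; decide

private lemma vec_add_self {α : Type*} (v : α → ZMod 2) : v + v = 0 := by
  funext i; exact zmod2_add_self (v i)

private lemma mat_add_self {n : ℕ} (A : Matrix (Fin n) (Fin n) (ZMod 2)) : A + A = 0 := by
  ext i j; exact zmod2_add_self (A i j)

private lemma zmod2_add_eq_zero {a b : ZMod 2} (h : a + b = 0) : a = b := by
  revert h; revert a b; decide

private lemma mat_add_eq_zero {n : ℕ} {A B : Matrix (Fin n) (Fin n) (ZMod 2)}
    (h : A + B = 0) : A = B := by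
  ext i j
  exact zmod2_add_eq_zero (congrFun (congrFun h i) j)

private lemma vec_add_eq_zero {α : Type*} {u v : α → ZMod 2} (h : u + v = 0) : u = v := by
  funext i
  exact zmod2_add_eq_zero (congrFun h i)

private lemma three_in_two {α : Type*} [DecidableEq α] {s : Finset α} (h2 : s.card = 2)
    {a b c : α} (ha : a ∈ s) (hb : b ∈ s) (hc : c ∈ s) (hba : b ≠ a) (hca : c ≠ a) : b = c := by
  obtain ⟨u, w, huw, rfl⟩ := Finset.card_eq_two.mp h2
  simp only [Finset.mem_insert, Finset.mem_singleton] at ha hb hc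
  rcases ha with rfl | rfl <;> rcases hb with rfl | rfl <;> rcases hc with rfl | rfl <;> tauto

private lemma pair_li {n : ℕ} {x y : Fin n → ZMod 2} (hx : x ≠ 0) (hy : y ≠ 0) (hxy : x ≠ y) :
    LinearIndependent (ZMod 2) ![x, y] := by
  rw [LinearIndependent.pair_iff]
  intro s t hst
  rcases zmod2_cases s with rfl | rfl <;> rcases zmod2_cases t with rfl | rfl
  · exact ⟨rfl, rfl⟩
  · exact absurd (by simpa using hst) hy
  · exact absurd (by simpa using hst) hx
  · refine absurd ?_ hxy
    have h : x + y = 0 := by simpa using hst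
    have := congrArg (· + y) h
    simpa [add_assoc, vec_add_self y] using this

private lemma kills_two {n : ℕ} {A : Matrix (Fin n) (Fin n) (ZMod 2)}
    (hr : n - 1 ≤ A.rank) (hn : 2 ≤ n)
    {x y : Fin n → ZMod 2} (hx : x ≠ 0) (hy : y ≠ 0) (hxy : x ≠ y)
    (hAx : A.mulVec x = 0) (hAy : A.mulVec y = 0) : False := by
  have hli := pair_li hx hy hxy
  have hspan : Submodule.span (ZMod 2) (Set.range ![x, y]) ≤ LinearMap.ker A.mulVecLin := by
    rw [Submodule.span_le]
    rintro z ⟨i, rfl⟩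
    fin_cases i <;> simp [LinearMap.mem_ker, mulVecLin_apply, hAx, hAy]
  have h2 : 2 ≤ Module.finrank (ZMod 2) (LinearMap.ker A.mulVecLin) := by
    have := Submodule.finrank_mono hspan
    rwa [finrank_span_eq_card hli, Fintype.card_fin] at this
  have hrn := LinearMap.finrank_range_add_finrank_ker A.mulVecLin
  have hdef : A.rank = Module.finrank (ZMod 2) (LinearMap.range A.mulVecLin) := rfl
  rw [Module.finrank_pi, Fintype.card_fin] at hrn
  omega

section Main

variable {n : ℕ}

private abbrev Mat (n : ℕ) := Matrix (Fin n) (Fin n) (ZMod 2)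
private abbrev Vec (n : ℕ) := Fin n → ZMod 2

private lemma card_vec : Nat.card (Vec n) = 2 ^ n := by
  simp [Nat.card_eq_fintype_card]

private lemma ev_uniq {C : AddSubgroup (Mat n)} (hn : 2 ≤ n)
    (hrank : ∀ A ∈ C, A ≠ 0 → n - 1 ≤ A.rank)
    {x y : Vec n} (hx : x ≠ 0) (hy : y ≠ 0) (hxy : x ≠ y)
    {A B : Mat n} (hA : A ∈ C) (hB : B ∈ C)
    (h1 : A.mulVec x = B.mulVec x) (h2 : A.mulVec y = B.mulVec y) : A = B := by
  by_contra hne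
  have hmem : A - B ∈ C := sub_mem hA hB
  have hne0 : A - B ≠ 0 := sub_ne_zero.mpr hne
  exact kills_two (hrank _ hmem hne0) hn hx hy hxy
    (by rw [Matrix.sub_mulVec, h1, sub_self])
    (by rw [Matrix.sub_mulVec, h2, sub_self])

private lemma ev_surj {C : AddSubgroup (Mat n)} (hn : 2 ≤ n)
    (hcard : Nat.card C = 2 ^ (2 * n))
    (hrank : ∀ A ∈ C, A ≠ 0 → n - 1 ≤ A.rank)
    {x y : Vec n} (hx : x ≠ 0) (hy : y ≠ 0) (hxy : x ≠ y)
    (u w : Vec n) : ∃ A ∈ C, A.mulVec x = u ∧ A.mulVec y = w := by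
  set f : C → Vec n × Vec n := fun A => ((A : Mat n).mulVec x, (A : Mat n).mulVec y) with hf
  have hinj : Function.Injective f := by
    intro A B hAB
    have h1 := congrArg Prod.fst hAB
    have h2 := congrArg Prod.snd hAB
    exact Subtype.ext (ev_uniq hn hrank hx hy hxy A.2 B.2 h1 h2)
  have hbij : Function.Bijective f := by
    rw [Nat.bijective_iff_injective_and_card]
    refine ⟨hinj, ?_⟩
    rw [hcard, Nat.card_prod, card_vec, two_mul, pow_add]
  obtain ⟨A, hA⟩ := hbij.surjective (u, w)
  exact ⟨A, A.2, congrArg Prod.fst hA, congrArg Prod.snd hA⟩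

end Main

/-- **Main Theorem.** Every binary additive MRD code in `M_n(F₂)` with
minimum distance `n - 1` is the internal direct sum of two semifield spread sets. -/
theorem binary_MRD_is_sum_of_two_semifield_spread_sets (n : ℕ) (hn : 1 ≤ n)
    (C : AddSubgroup (Matrix (Fin n) (Fin n) (ZMod 2)))
    (hcard : Nat.card C = 2 ^ (2 * n))
    (hrank : ∀ A ∈ C, A ≠ 0 → n - 1 ≤ A.rank) :
    ∃ S₁ S₂ : AddSubgroup (Matrix (Fin n) (Fin n) (ZMod 2)),
      (S₁ : Set (Matrix (Fin n) (Fin n) (ZMod 2))) ⊆ (C : Set (Matrix (Fin n) (Fin n) (ZMod 2))) ∧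
      (S₂ : Set (Matrix (Fin n) (Fin n) (ZMod 2))) ⊆ (C : Set (Matrix (Fin n) (Fin n) (ZMod 2))) ∧
      Nat.card S₁ = 2 ^ n ∧ Nat.card S₂ = 2 ^ n ∧
      (∀ A ∈ S₁, A ≠ 0 → IsUnit A) ∧
      (∀ A ∈ S₂, A ≠ 0 → IsUnit A) ∧
      (S₁ : Set (Matrix (Fin n) (Fin n) (ZMod 2))) ∩ (S₂ : Set (Matrix (Fin n) (Fin n) (ZMod 2)))
        = {0} ∧
      (C : Set (Matrix (Fin n) (Fin n) (ZMod 2)))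
        = {Z | ∃ X ∈ S₁, ∃ Y ∈ S₂, Z = X + Y} := by
  classical
  rcases eq_or_lt_of_le hn with h1 | hn2
  · -- n = 1 : impossible by cardinality
    exfalso
    have hle : Nat.card C ≤ Nat.card (Matrix (Fin n) (Fin n) (ZMod 2)) :=
      Nat.card_le_card_of_injective _ Subtype.val_injective
    have hM : Nat.card (Matrix (Fin n) (Fin n) (ZMod 2)) = 2 ^ (n * n) := by
      rw [Nat.card_eq_fintype_card]
      show Fintype.card (Fin n → Fin n → ZMod 2) = _
      simp [Fintype.card_fun, pow_mul]
    rw [hcard, hM] at hle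
    have : (2:ℕ) ^ (2 * n) ≤ 2 ^ (n * n) := hle
    rw [← h1] at this
    norm_num at this
  · -- main case : n ≥ 2
    have hn2 : 2 ≤ n := hn2
    haveI : NeZero n := ⟨by omega⟩
    -- a concrete nonzero vector
    set x₀ : Fin n → ZMod 2 := fun _ => 1 with hx₀def
    have hx₀ : x₀ ≠ 0 := by
      intro h
      have := congrFun h ⟨0, by omega⟩
      simp [hx₀def] at this
    -- nonunit iff kernel vector
    have hker : ∀ A : Matrix (Fin n) (Fin n) (ZMod 2),
        ¬IsUnit A ↔ ∃ z, z ≠ 0 ∧ A.mulVec z = 0 := by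
      intro A
      have h1 : IsUnit A ↔ A.det ≠ 0 := by
        rw [Matrix.isUnit_iff_isUnit_det, isUnit_iff_ne_zero]
      have h2 := Matrix.exists_mulVec_eq_zero_iff (M := A)
      constructor
      · intro h
        obtain ⟨v, hv, hv0⟩ := h2.mpr (by simpa [h1, not_not] using h)
        exact ⟨v, hv, hv0⟩
      · rintro ⟨z, hz, hz0⟩
        rw [h1, not_not, ← h2]
        exact ⟨z, hz, hz0⟩
    have hunit0 : ¬IsUnit (0 : Matrix (Fin n) (Fin n) (ZMod 2)) :=
      (hker 0).mpr ⟨x₀, hx₀, by simp⟩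
    have hunitne : ∀ {A : Matrix (Fin n) (Fin n) (ZMod 2)}, IsUnit A → A ≠ 0 := by
      rintro A hA rfl; exact hunit0 hA
    have hunitmv : ∀ {A : Matrix (Fin n) (Fin n) (ZMod 2)}, IsUnit A →
        ∀ {z : Fin n → ZMod 2}, z ≠ 0 → A.mulVec z ≠ 0 := by
      intro A hA z hz h0
      exact absurd hA ((hker A).mpr ⟨z, hz, h0⟩)
    -- uniqueness of kernel vector for members of C
    have hkuniq : ∀ {A : Matrix (Fin n) (Fin n) (ZMod 2)}, A ∈ C → A ≠ 0 →
        ∀ {z₁ z₂ : Fin n → ZMod 2}, z₁ ≠ 0 → z₂ ≠ 0 →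
        A.mulVec z₁ = 0 → A.mulVec z₂ = 0 → z₁ = z₂ := by
      intro A hA hA0 z₁ z₂ h₁ h₂ k₁ k₂
      by_contra hne
      exact kills_two (hrank A hA hA0) hn2 h₁ h₂ hne k₁ k₂
    -- evaluation uniqueness / surjectivity
    have hevu : ∀ {x y : Fin n → ZMod 2}, x ≠ 0 → y ≠ 0 → x ≠ y →
        ∀ {A B : Matrix (Fin n) (Fin n) (ZMod 2)}, A ∈ C → B ∈ C →
        A.mulVec x = B.mulVec x → A.mulVec y = B.mulVec y → A = B :=
      by intro x y hx hy hxy A B hA hB h1 h2; exact ev_uniq hn2 hrank hx hy hxy hA hB h1 h2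
    have hevs : ∀ {x y : Fin n → ZMod 2}, x ≠ 0 → y ≠ 0 → x ≠ y →
        ∀ u w, ∃ A ∈ C, A.mulVec x = u ∧ A.mulVec y = w :=
      by intro x y hx hy hxy u w; exact ev_surj hn2 hcard hrank hx hy hxy u w
    -- finsets
    set HF : Finset (Matrix (Fin n) (Fin n) (ZMod 2)) :=
      Finset.univ.filter (fun A => A ∈ C ∧ IsUnit A) with hHFdef
    have memHF : ∀ A, A ∈ HF ↔ A ∈ C ∧ IsUnit A := by
      intro A; simp [hHFdef]
    set UF : (Fin n → ZMod 2) → (Fin n → ZMod 2) → Finset (Matrix (Fin n) (Fin n) (ZMod 2)) :=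
      fun x v => Finset.univ.filter (fun A => A ∈ C ∧ A.mulVec x = v ∧ IsUnit A) with hUFdef
    have memUF : ∀ x v A, A ∈ UF x v ↔ A ∈ C ∧ A.mulVec x = v ∧ IsUnit A := by
      intro x v A; simp [hUFdef]
    -- fiber cardinality
    have hFF : ∀ x : Fin n → ZMod 2, x ≠ 0 → ∀ v,
        (Finset.univ.filter
          (fun A : Matrix (Fin n) (Fin n) (ZMod 2) => A ∈ C ∧ A.mulVec x = v)).card = 2 ^ n := by
      intro x hx v
      obtain ⟨y, hy0, hyx⟩ : ∃ y : Fin n → ZMod 2, y ≠ 0 ∧ y ≠ x := by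
        by_contra h
        push_neg at h
        have hsub : (Finset.univ : Finset (Fin n → ZMod 2)) ⊆ {0, x} := by
          intro y _
          rcases eq_or_ne y 0 with rfl | hy
          · exact Finset.mem_insert_self _ _
          · simp [h y hy]
        have hc := Finset.card_le_card hsub
        have hcu : Fintype.card (Fin n → ZMod 2) = 2 ^ n := by simp [Fintype.card_fun]
        rw [Finset.card_univ, hcu] at hc
        have h2 : ({0, x} : Finset (Fin n → ZMod 2)).card ≤ 2 := Finset.card_le_two
        have h4 : 4 ≤ 2 ^ n := by
          calc (4:ℕ) = 2 ^ 2 := rfl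
          _ ≤ 2 ^ n := Nat.pow_le_pow_right (by norm_num) hn2
        omega
      have hxy : x ≠ y := fun h => hyx h.symm
      rw [show (2:ℕ) ^ n = (Finset.univ : Finset (Fin n → ZMod 2)).card by
        simp [Finset.card_univ, Fintype.card_fun]]
      apply Finset.card_bij (fun A _ => A.mulVec y)
      · intro A _; exact Finset.mem_univ _
      · intro A₁ h₁ A₂ h₂ heq
        rw [Finset.mem_filter] at h₁ h₂
        exact hevu hx hy0 hxy h₁.2.1 h₂.2.1 (h₁.2.2.trans h₂.2.2.symm) heq
      · intro b _
        obtain ⟨A, hA, hAx, hAy⟩ := hevs hx hy0 hxy v b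
        exact ⟨A, Finset.mem_filter.mpr ⟨Finset.mem_univ _, hA, hAx⟩, hAy⟩
    -- singular fiber cardinality
    have hSF : ∀ x v : Fin n → ZMod 2, x ≠ 0 → v ≠ 0 →
        (Finset.univ.filter
          (fun A : Matrix (Fin n) (Fin n) (ZMod 2) =>
            A ∈ C ∧ A.mulVec x = v ∧ ¬IsUnit A)).card = 2 ^ n - 2 := by
      intro x v hx hv
      have hx0 : (0 : Fin n → ZMod 2) ≠ x := fun h => hx h.symm
      have hWcard : (({0, x} : Finset (Fin n → ZMod 2))ᶜ).card = 2 ^ n - 2 := by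
        rw [Finset.card_compl, Finset.card_pair hx0]
        have hcu : Fintype.card (Fin n → ZMod 2) = 2 ^ n := by simp [Fintype.card_fun]
        rw [hcu]
      rw [← hWcard]
      apply Finset.card_bij
        (fun A hA => ((hker A).mp (Finset.mem_filter.mp hA).2.2.2).choose)
      · intro A hA
        obtain ⟨hA', hAx, hAn⟩ := (Finset.mem_filter.mp hA).2
        obtain ⟨hz0, hz⟩ := ((hker A).mp hAn).choose_spec
        rw [Finset.mem_compl, Finset.mem_insert, Finset.mem_singleton]
        push_neg
        refine ⟨hz0, ?_⟩
        intro h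
        rw [h] at hz
        rw [hz] at hAx
        exact hv hAx.symm
      · intro A₁ h₁ A₂ h₂ heq
        obtain ⟨hm₁, hx₁, hn₁⟩ := (Finset.mem_filter.mp h₁).2
        obtain ⟨hm₂, hx₂, hn₂⟩ := (Finset.mem_filter.mp h₂).2
        obtain ⟨hz₁0, hz₁⟩ := ((hker A₁).mp hn₁).choose_spec
        obtain ⟨hz₂0, hz₂⟩ := ((hker A₂).mp hn₂).choose_spec
        rw [heq] at hz₁
        have hxz : x ≠ ((hker A₂).mp hn₂).choose := by
          intro h
          rw [← h] at hz₂
          rw [hz₂] at hx₂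
          exact hv hx₂.symm
        exact hevu hx hz₂0 hxz hm₁ hm₂ (hx₁.trans hx₂.symm) (hz₁.trans hz₂.symm)
      · intro y hy
        rw [Finset.mem_compl, Finset.mem_insert, Finset.mem_singleton] at hy
        push_neg at hy
        obtain ⟨hy0, hyx⟩ := hy
        obtain ⟨A, hA, hAx, hAy⟩ := hevs hx hy0 (fun h => hyx h.symm) v 0
        have hAn : ¬IsUnit A := (hker A).mpr ⟨y, hy0, hAy⟩
        have hA0 : A ≠ 0 := by
          intro h; rw [h] at hAx; exact hv (by simpa using hAx.symm)
        have hmem : A ∈ Finset.univ.filter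
            (fun A : Matrix (Fin n) (Fin n) (ZMod 2) => A ∈ C ∧ A.mulVec x = v ∧ ¬IsUnit A) :=
          Finset.mem_filter.mpr ⟨Finset.mem_univ _, hA, hAx, hAn⟩
        refine ⟨A, hmem, ?_⟩
        obtain ⟨hz0, hz⟩ := ((hker A).mp (Finset.mem_filter.mp hmem).2.2.2).choose_spec
        exact hkuniq hA hA0 hz0 hy0 hz hAy
    -- exactly two units per fiber
    have hU2 : ∀ x v : Fin n → ZMod 2, x ≠ 0 → v ≠ 0 → (UF x v).card = 2 := by
      intro x v hx hv
      have hsub : Finset.univ.filter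
          (fun A : Matrix (Fin n) (Fin n) (ZMod 2) => A ∈ C ∧ A.mulVec x = v ∧ ¬IsUnit A) ⊆
          Finset.univ.filter
          (fun A : Matrix (Fin n) (Fin n) (ZMod 2) => A ∈ C ∧ A.mulVec x = v) := by
        intro A hA
        rw [Finset.mem_filter] at hA ⊢
        exact ⟨hA.1, hA.2.1, hA.2.2.1⟩
      have hdiff : UF x v = Finset.univ.filter
          (fun A : Matrix (Fin n) (Fin n) (ZMod 2) => A ∈ C ∧ A.mulVec x = v) \
          Finset.univ.filter
          (fun A : Matrix (Fin n) (Fin n) (ZMod 2) => A ∈ C ∧ A.mulVec x = v ∧ ¬IsUnit A) := by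
        ext A
        rw [memUF, Finset.mem_sdiff, Finset.mem_filter, Finset.mem_filter]
        constructor
        · rintro ⟨h1, h2, h3⟩
          exact ⟨⟨Finset.mem_univ _, h1, h2⟩, fun h => h.2.2.2 h3⟩
        · rintro ⟨⟨_, h1, h2⟩, h3⟩
          refine ⟨h1, h2, ?_⟩
          by_contra hnu
          exact h3 ⟨Finset.mem_univ _, h1, h2, hnu⟩
      have h4 : 4 ≤ 2 ^ n := by
        calc (4:ℕ) = 2 ^ 2 := rfl
        _ ≤ 2 ^ n := Nat.pow_le_pow_right (by norm_num) hn2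
      rw [hdiff, Finset.card_sdiff_of_subset hsub, hFF x hx v, hSF x v hx hv]
      omega
    have h4 : 4 ≤ 2 ^ n := by
      calc (4:ℕ) = 2 ^ 2 := rfl
      _ ≤ 2 ^ n := Nat.pow_le_pow_right (by norm_num) hn2
    have hcu : Fintype.card (Fin n → ZMod 2) = 2 ^ n := by simp [Fintype.card_fun]
    -- HF has 2*2^n - 2 elements
    have hHFcard : HF.card = 2 * 2 ^ n - 2 := by
      have hmaps : ∀ A ∈ HF, A.mulVec x₀ ∈ ({0}ᶜ : Finset (Fin n → ZMod 2)) := by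
        intro A hA
        rw [Finset.mem_compl, Finset.mem_singleton]
        exact hunitmv ((memHF A).mp hA).2 hx₀
      rw [Finset.card_eq_sum_card_fiberwise hmaps]
      have hfib : ∀ v ∈ ({0}ᶜ : Finset (Fin n → ZMod 2)),
          (HF.filter (fun A => A.mulVec x₀ = v)).card = 2 := by
        intro v hv
        rw [Finset.mem_compl, Finset.mem_singleton] at hv
        have heq : HF.filter (fun A => A.mulVec x₀ = v) = UF x₀ v := by
          ext A
          rw [Finset.mem_filter, memHF, memUF]
          tauto
        rw [heq]
        exact hU2 x₀ v hx₀ hv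
      rw [Finset.sum_congr rfl hfib, Finset.sum_const, Finset.card_compl,
        Finset.card_singleton, hcu, smul_eq_mul]
      omega
    -- each unit has exactly 2^n - 1 "singular" partners
    have hdeg' : ∀ A ∈ HF,
        (HF.filter (fun B => A + B ≠ 0 ∧ ¬IsUnit (A + B))).card = 2 ^ n - 1 := by
      intro A hA
      obtain ⟨hAC, hAu⟩ := (memHF A).mp hA
      have hWc : ((({0} : Finset (Fin n → ZMod 2)))ᶜ).card = 2 ^ n - 1 := by
        rw [Finset.card_compl, Finset.card_singleton, hcu]
      rw [← hWc]
      apply Finset.card_bij (fun B hB =>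
        ((hker (A + B)).mp (Finset.mem_filter.mp hB).2.2).choose)
      · intro B hB
        obtain ⟨hz0, hz⟩ := ((hker (A + B)).mp (Finset.mem_filter.mp hB).2.2).choose_spec
        rw [Finset.mem_compl, Finset.mem_singleton]
        exact hz0
      · intro B₁ h₁ B₂ h₂ heq
        obtain ⟨hBH₁, hne₁, hnu₁⟩ := Finset.mem_filter.mp h₁
        obtain ⟨hBH₂, hne₂, hnu₂⟩ := Finset.mem_filter.mp h₂
        obtain ⟨hBC₁, hBu₁⟩ := (memHF B₁).mp hBH₁
        obtain ⟨hBC₂, hBu₂⟩ := (memHF B₂).mp hBH₂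
        obtain ⟨hz₁0, hz₁⟩ := ((hker (A + B₁)).mp hnu₁).choose_spec
        obtain ⟨hz₂0, hz₂⟩ := ((hker (A + B₂)).mp hnu₂).choose_spec
        set z := ((hker (A + B₁)).mp hnu₁).choose with hzdef
        rw [heq] at hz₁
        -- both B₁ B₂ lie in UF z' (A *ᵥ z') with z' the common kernel vector
        have hAz : A.mulVec (((hker (A + B₂)).mp hnu₂).choose) ≠ 0 := hunitmv hAu hz₂0
        have hB₁z : B₁.mulVec (((hker (A + B₂)).mp hnu₂).choose)
            = A.mulVec (((hker (A + B₂)).mp hnu₂).choose) := by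
          rw [Matrix.add_mulVec] at hz₁
          exact (vec_add_eq_zero hz₁).symm
        have hB₂z : B₂.mulVec (((hker (A + B₂)).mp hnu₂).choose)
            = A.mulVec (((hker (A + B₂)).mp hnu₂).choose) := by
          rw [Matrix.add_mulVec] at hz₂
          exact (vec_add_eq_zero hz₂).symm
        have hc2 := hU2 _ _ hz₂0 hAz
        have hmem₁ : B₁ ∈ UF (((hker (A + B₂)).mp hnu₂).choose)
            (A.mulVec (((hker (A + B₂)).mp hnu₂).choose)) :=
          (memUF _ _ _).mpr ⟨hBC₁, hB₁z, hBu₁⟩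
        have hmem₂ : B₂ ∈ UF (((hker (A + B₂)).mp hnu₂).choose)
            (A.mulVec (((hker (A + B₂)).mp hnu₂).choose)) :=
          (memUF _ _ _).mpr ⟨hBC₂, hB₂z, hBu₂⟩
        have hmemA : A ∈ UF (((hker (A + B₂)).mp hnu₂).choose)
            (A.mulVec (((hker (A + B₂)).mp hnu₂).choose)) :=
          (memUF _ _ _).mpr ⟨hAC, rfl, hAu⟩
        have hBA₁ : B₁ ≠ A := by
          intro h
          rw [h] at hne₁
          exact hne₁ (mat_add_self A)
        have hBA₂ : B₂ ≠ A := by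
          intro h
          rw [h] at hne₂
          exact hne₂ (mat_add_self A)
        exact three_in_two hc2 hmemA hmem₁ hmem₂ hBA₁ hBA₂
      · intro y hy
        rw [Finset.mem_compl, Finset.mem_singleton] at hy
        have hAy : A.mulVec y ≠ 0 := hunitmv hAu hy
        have hc2 := hU2 y (A.mulVec y) hy hAy
        obtain ⟨a, b, hab, hpair⟩ := Finset.card_eq_two.mp hc2
        have hmemA : A ∈ UF y (A.mulVec y) := (memUF _ _ _).mpr ⟨hAC, rfl, hAu⟩
        -- B is the other element of the pair
        have hother : ∃ B, B ∈ UF y (A.mulVec y) ∧ B ≠ A := by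
          rw [hpair] at hmemA
          simp only [Finset.mem_insert, Finset.mem_singleton] at hmemA
          rcases hmemA with rfl | rfl
          · exact ⟨b, by rw [hpair]; simp, fun h => hab h.symm⟩
          · exact ⟨a, by rw [hpair]; simp, hab⟩
        obtain ⟨B, hBm, hBA⟩ := hother
        obtain ⟨hBC, hBy, hBu⟩ := (memUF _ _ _).mp hBm
        have hABy : (A + B).mulVec y = 0 := by
          rw [Matrix.add_mulVec, hBy]
          exact vec_add_self _
        have hABne : A + B ≠ 0 := fun h => hBA (mat_add_eq_zero h).symm
        have hABnu : ¬IsUnit (A + B) := (hker _).mpr ⟨y, hy, hABy⟩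
        have hBmem : B ∈ HF.filter (fun B => A + B ≠ 0 ∧ ¬IsUnit (A + B)) :=
          Finset.mem_filter.mpr ⟨(memHF B).mpr ⟨hBC, hBu⟩, hABne, hABnu⟩
        refine ⟨B, hBmem, ?_⟩
        obtain ⟨hz0, hz⟩ := ((hker (A + B)).mp (Finset.mem_filter.mp hBmem).2.2).choose_spec
        exact hkuniq (add_mem hAC hBC) hABne hz0 hy hz hABy
    -- each unit has exactly 2^n - 2 unit partners
    have hdeg : ∀ A ∈ HF, (HF.filter (fun B => IsUnit (A + B))).card = 2 ^ n - 2 := by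
      intro A hA
      have hsplit := Finset.card_filter_add_card_filter_not
        (s := HF) (p := fun B => IsUnit (A + B))
      have hre : HF.filter (fun B => ¬IsUnit (A + B))
          = insert A (HF.filter (fun B => A + B ≠ 0 ∧ ¬IsUnit (A + B))) := by
        ext B
        simp only [Finset.mem_filter, Finset.mem_insert]
        constructor
        · rintro ⟨hBH, hBnu⟩
          rcases eq_or_ne (A + B) 0 with h0 | h0
          · exact Or.inl (mat_add_eq_zero h0).symm
          · exact Or.inr ⟨hBH, h0, hBnu⟩
        · rintro (rfl | ⟨hBH, _, hnu⟩)
          · rw [mat_add_self]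
            exact ⟨hA, hunit0⟩
          · exact ⟨hBH, hnu⟩
      have hnm : A ∉ HF.filter (fun B => A + B ≠ 0 ∧ ¬IsUnit (A + B)) := by
        rw [Finset.mem_filter]
        rintro ⟨-, hne, -⟩
        exact hne (mat_add_self A)
      rw [hre, Finset.card_insert_of_notMem hnm, hdeg' A hA, hHFcard] at hsplit
      omega
    -- every singular element of C is the sum of two units of C
    have hrge1 : ∀ M ∈ C, M ≠ 0 → ¬IsUnit M →
        ∃ A B, A ∈ HF ∧ B ∈ HF ∧ A + B = M := by
      intro M hMC hM0 hMnu
      obtain ⟨x, hx0, hMx⟩ := (hker M).mp hMnu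
      by_contra hcon
      push_neg at hcon
      have hnu : ∀ A ∈ HF, ¬IsUnit (A + M) := by
        intro A hA hu
        obtain ⟨hAC, hAu⟩ := (memHF A).mp hA
        have hBH : A + M ∈ HF := (memHF _).mpr ⟨add_mem hAC hMC, hu⟩
        refine hcon A (A + M) hA hBH ?_
        rw [← add_assoc, mat_add_self, zero_add]
      have hne0 : ∀ A ∈ HF, A + M ≠ 0 := by
        intro A hA h0
        exact hMnu ((mat_add_eq_zero h0) ▸ ((memHF A).mp hA).2)
      set f : Matrix (Fin n) (Fin n) (ZMod 2) → (Fin n → ZMod 2) := fun A =>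
        if h : ∃ z, z ≠ 0 ∧ (A + M).mulVec z = 0 then h.choose else 0 with hfdef
      have hfspec : ∀ A ∈ HF, f A ≠ 0 ∧ (A + M).mulVec (f A) = 0 := by
        intro A hA
        have hex : ∃ z, z ≠ 0 ∧ (A + M).mulVec z = 0 := (hker _).mp (hnu A hA)
        rw [hfdef]
        simp only [dif_pos hex]
        exact hex.choose_spec
      have hfx : ∀ A ∈ HF, f A ≠ x := by
        intro A hA h
        obtain ⟨hf0, hfk⟩ := hfspec A hA
        rw [h, Matrix.add_mulVec, hMx, add_zero] at hfk
        exact hunitmv ((memHF A).mp hA).2 hx0 hfk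
      have himg : HF.image f ⊆ ({0, x} : Finset (Fin n → ZMod 2))ᶜ := by
        intro b hb
        obtain ⟨A, hA, rfl⟩ := Finset.mem_image.mp hb
        rw [Finset.mem_compl, Finset.mem_insert, Finset.mem_singleton]
        push_neg
        exact ⟨(hfspec A hA).1, hfx A hA⟩
      have hfibers : ∀ b ∈ HF.image f, (HF.filter (fun A => f A = b)).card ≤ 2 := by
        intro b hb
        have hbW := himg hb
        rw [Finset.mem_compl, Finset.mem_insert, Finset.mem_singleton] at hbW
        push_neg at hbW
        obtain ⟨hb0, hbx⟩ := hbW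
        have hMb : M.mulVec b ≠ 0 := by
          intro h
          exact hbx (hkuniq hMC hM0 hb0 hx0 h hMx)
        have hsub : HF.filter (fun A => f A = b) ⊆ UF b (M.mulVec b) := by
          intro A hA
          obtain ⟨hAH, hfA⟩ := Finset.mem_filter.mp hA
          obtain ⟨hAC, hAu⟩ := (memHF A).mp hAH
          obtain ⟨hf0, hfk⟩ := hfspec A hAH
          rw [hfA, Matrix.add_mulVec] at hfk
          exact (memUF _ _ _).mpr ⟨hAC, vec_add_eq_zero hfk, hAu⟩
        calc (HF.filter (fun A => f A = b)).card ≤ (UF b (M.mulVec b)).card :=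
              Finset.card_le_card hsub
        _ = 2 := hU2 b (M.mulVec b) hb0 hMb
      have hbound := Finset.card_le_mul_card_image (s := HF) (f := f) 2 hfibers
      have himgc : (HF.image f).card ≤ 2 ^ n - 2 := by
        calc (HF.image f).card ≤ (({0, x} : Finset (Fin n → ZMod 2))ᶜ).card :=
              Finset.card_le_card himg
        _ = 2 ^ n - 2 := by
            rw [Finset.card_compl, Finset.card_pair (fun h => hx0 h.symm), hcu]
      rw [hHFcard] at hbound
      omega
    -- key injectivity : distinct unit pairs have distinct sums
    have hkey : ∀ x : Fin n → ZMod 2, x ≠ 0 → ∀ v₁ v₂, v₁ ≠ 0 → v₂ ≠ 0 →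
        (UF x v₁).sum id = (UF x v₂).sum id → v₁ = v₂ := by
      intro x hx
      set SingX : Finset (Matrix (Fin n) (Fin n) (ZMod 2)) :=
        Finset.univ.filter (fun M => M ∈ C ∧ M ≠ 0 ∧ M.mulVec x = 0) with hSXdef
      have memSX : ∀ M, M ∈ SingX ↔ M ∈ C ∧ M ≠ 0 ∧ M.mulVec x = 0 := by
        intro M; simp [hSXdef]
      have hSXcard : SingX.card = 2 ^ n - 1 := by
        have hins : Finset.univ.filter
            (fun A : Matrix (Fin n) (Fin n) (ZMod 2) => A ∈ C ∧ A.mulVec x = 0)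
            = insert 0 SingX := by
          ext A
          simp only [Finset.mem_filter, Finset.mem_insert, memSX, Finset.mem_univ, true_and]
          constructor
          · rintro ⟨h1, h2⟩
            rcases eq_or_ne A 0 with rfl | h0
            · exact Or.inl rfl
            · exact Or.inr ⟨h1, h0, h2⟩
          · rintro (rfl | ⟨h1, h0, h2⟩)
            · exact ⟨zero_mem C, Matrix.zero_mulVec x⟩
            · exact ⟨h1, h2⟩
        have h0nm : (0 : Matrix (Fin n) (Fin n) (ZMod 2)) ∉ SingX := by
          rw [memSX]
          rintro ⟨-, h, -⟩
          exact h rfl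
        have := hFF x hx 0
        rw [hins, Finset.card_insert_of_notMem h0nm] at this
        omega
      have gmaps : ∀ v ∈ ({0} : Finset (Fin n → ZMod 2))ᶜ, (UF x v).sum id ∈ SingX := by
        intro v hv
        rw [Finset.mem_compl, Finset.mem_singleton] at hv
        obtain ⟨a, b, hab, hpair⟩ := Finset.card_eq_two.mp (hU2 x v hx hv)
        have ham : a ∈ UF x v := by rw [hpair]; simp
        have hbm : b ∈ UF x v := by rw [hpair]; simp
        obtain ⟨haC, hax, hau⟩ := (memUF _ _ _).mp ham
        obtain ⟨hbC, hbx, hbu⟩ := (memUF _ _ _).mp hbm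
        rw [hpair, Finset.sum_pair hab]
        simp only [id_eq]
        rw [memSX]
        refine ⟨add_mem haC hbC, fun h => hab (mat_add_eq_zero h), ?_⟩
        rw [Matrix.add_mulVec, hax, hbx]
        exact vec_add_self v
      have gsurj : ∀ M ∈ SingX, ∃ v ∈ ({0} : Finset (Fin n → ZMod 2))ᶜ,
          (UF x v).sum id = M := by
        intro M hM
        obtain ⟨hMC, hM0, hMx⟩ := (memSX M).mp hM
        have hMnu : ¬IsUnit M := (hker M).mpr ⟨x, hx, hMx⟩
        obtain ⟨A, B, hAH, hBH, hABM⟩ := hrge1 M hMC hM0 hMnu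
        obtain ⟨hAC, hAu⟩ := (memHF A).mp hAH
        obtain ⟨hBC, hBu⟩ := (memHF B).mp hBH
        have hv0 : A.mulVec x ≠ 0 := hunitmv hAu hx
        have hBx : B.mulVec x = A.mulVec x := by
          have : (A + B).mulVec x = 0 := by rw [hABM, hMx]
          rw [Matrix.add_mulVec] at this
          exact (vec_add_eq_zero this).symm
        have hABne : A ≠ B := by
          intro h
          rw [h, mat_add_self] at hABM
          exact hM0 hABM.symm
        have hsub : ({A, B} : Finset (Matrix (Fin n) (Fin n) (ZMod 2))) ⊆ UF x (A.mulVec x) := by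
          intro E hE
          rw [Finset.mem_insert, Finset.mem_singleton] at hE
          rcases hE with rfl | rfl
          · exact (memUF _ _ _).mpr ⟨hAC, rfl, hAu⟩
          · exact (memUF _ _ _).mpr ⟨hBC, hBx, hBu⟩
        have heq : ({A, B} : Finset (Matrix (Fin n) (Fin n) (ZMod 2))) = UF x (A.mulVec x) :=
          Finset.eq_of_subset_of_card_le hsub
            (by rw [hU2 x _ hx hv0, Finset.card_pair hABne])
        refine ⟨A.mulVec x, by simpa using hv0, ?_⟩
        rw [← heq, Finset.sum_pair hABne]
        simpa using hABM
      have himgeq : (({0} : Finset (Fin n → ZMod 2))ᶜ).image (fun v => (UF x v).sum id)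
          = SingX := by
        apply Finset.Subset.antisymm
        · intro b hb
          obtain ⟨v, hv, rfl⟩ := Finset.mem_image.mp hb
          exact gmaps v hv
        · intro M hM
          obtain ⟨v, hv, hgv⟩ := gsurj M hM
          exact Finset.mem_image.mpr ⟨v, hv, hgv⟩
      have hinjOn := Finset.injOn_of_card_image_eq (f := fun v => (UF x v).sum id)
        (s := ({0} : Finset (Fin n → ZMod 2))ᶜ) (by
          rw [himgeq, hSXcard, Finset.card_compl, Finset.card_singleton, hcu])
      intro v₁ v₂ hv₁ hv₂ hgg
      exact hinjOn (by simpa using hv₁) (by simpa using hv₂) hgg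
    -- transitivity of the relation "sum is zero or a unit"
    have htrans : ∀ a b c, a ∈ HF → b ∈ HF → c ∈ HF →
        (a = b ∨ IsUnit (a + b)) → (b = c ∨ IsUnit (b + c)) → (a = c ∨ IsUnit (a + c)) := by
      intro a b c haH hbH hcH hab hbc
      rcases hab with rfl | hab
      · exact hbc
      rcases hbc with rfl | hbc
      · exact Or.inr hab
      rcases eq_or_ne a c with rfl | hac
      · exact Or.inl rfl
      right
      by_contra hMnu
      obtain ⟨haC, hau⟩ := (memHF a).mp haH
      obtain ⟨hbC, hbu⟩ := (memHF b).mp hbH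
      obtain ⟨hcC, hcu⟩ := (memHF c).mp hcH
      have hM0 : a + c ≠ 0 := fun h => hac (mat_add_eq_zero h)
      obtain ⟨x, hx0, hMx⟩ := (hker (a + c)).mp hMnu
      -- first pair {a, c}
      have hv₁ : a.mulVec x ≠ 0 := hunitmv hau hx0
      have hcx : c.mulVec x = a.mulVec x := by
        rw [Matrix.add_mulVec] at hMx
        exact (vec_add_eq_zero hMx).symm
      have hsub₁ : ({a, c} : Finset (Matrix (Fin n) (Fin n) (ZMod 2))) ⊆ UF x (a.mulVec x) := by
        intro E hE
        rw [Finset.mem_insert, Finset.mem_singleton] at hE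
        rcases hE with rfl | rfl
        · exact (memUF _ _ _).mpr ⟨haC, rfl, hau⟩
        · exact (memUF _ _ _).mpr ⟨hcC, hcx, hcu⟩
      have heq₁ : ({a, c} : Finset (Matrix (Fin n) (Fin n) (ZMod 2))) = UF x (a.mulVec x) :=
        Finset.eq_of_subset_of_card_le hsub₁
          (by rw [hU2 x _ hx0 hv₁, Finset.card_pair hac])
      -- second pair {a + b, b + c}
      have hsum2 : (a + b) + (b + c) = a + c := by
        have h' : (a + b) + (b + c) = a + (b + b) + c := by abel
        rw [h', mat_add_self, add_zero]
      have hne2 : a + b ≠ b + c := by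
        intro h
        apply hac
        calc a = (a + b) + b := by rw [add_assoc, mat_add_self, add_zero]
        _ = (b + c) + b := by rw [h]
        _ = (b + b) + c := by abel
        _ = c := by rw [mat_add_self, zero_add]
      have habH : a + b ∈ HF := (memHF _).mpr ⟨add_mem haC hbC, hab⟩
      have hbcH : b + c ∈ HF := (memHF _).mpr ⟨add_mem hbC hcC, hbc⟩
      have hv₂ : (a + b).mulVec x ≠ 0 := hunitmv hab hx0
      have hbcx : (b + c).mulVec x = (a + b).mulVec x := by
        have h0 : ((a + b) + (b + c)).mulVec x = 0 := by rw [hsum2, hMx]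
        rw [Matrix.add_mulVec] at h0
        exact (vec_add_eq_zero h0).symm
      have hsub₂ : ({a + b, b + c} : Finset (Matrix (Fin n) (Fin n) (ZMod 2)))
          ⊆ UF x ((a + b).mulVec x) := by
        intro E hE
        rw [Finset.mem_insert, Finset.mem_singleton] at hE
        rcases hE with rfl | rfl
        · exact (memUF _ _ _).mpr ⟨add_mem haC hbC, rfl, hab⟩
        · exact (memUF _ _ _).mpr ⟨add_mem hbC hcC, hbcx, hbc⟩
      have heq₂ : ({a + b, b + c} : Finset (Matrix (Fin n) (Fin n) (ZMod 2)))
          = UF x ((a + b).mulVec x) :=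
        Finset.eq_of_subset_of_card_le hsub₂
          (by rw [hU2 x _ hx0 hv₂, Finset.card_pair hne2])
      -- both sums equal a + c, so the fibers coincide
      have hs₁ : (UF x (a.mulVec x)).sum id = a + c := by
        rw [← heq₁, Finset.sum_pair hac]
        simp
      have hs₂ : (UF x ((a + b).mulVec x)).sum id = a + c := by
        rw [← heq₂, Finset.sum_pair hne2]
        simpa using hsum2
      have hveq : a.mulVec x = (a + b).mulVec x :=
        hkey x hx0 _ _ hv₁ hv₂ (hs₁.trans hs₂.symm)
      have hffeq : ({a, c} : Finset (Matrix (Fin n) (Fin n) (ZMod 2)))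
          = ({a + b, b + c} : Finset (Matrix (Fin n) (Fin n) (ZMod 2))) := by
        rw [heq₁, heq₂, hveq]
      have hamem : a ∈ ({a + b, b + c} : Finset (Matrix (Fin n) (Fin n) (ZMod 2))) := by
        rw [← hffeq]
        simp
      rw [Finset.mem_insert, Finset.mem_singleton] at hamem
      rcases hamem with h | h
      · -- a = a + b forces b = 0
        have hb0 : b = 0 := by
          have h' := congrArg (fun E => a + E) h
          rw [mat_add_self, ← add_assoc, mat_add_self, zero_add] at h'
          exact h'.symm
        exact hunitne hbu hb0
      · -- a = b + c forces a + c = b, a unit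
        apply hMnu
        have : a + c = b := by
          rw [h, add_assoc, mat_add_self, add_zero]
        rw [this]
        exact hbu
    -- pick a base unit and split the units into two classes
    have hHFne : HF.Nonempty := by
      rw [← Finset.card_pos, hHFcard]
      omega
    obtain ⟨A₀, hA₀⟩ := hHFne
    obtain ⟨hA₀C, hA₀u⟩ := (memHF A₀).mp hA₀
    set P : Matrix (Fin n) (Fin n) (ZMod 2) → Prop := fun m => A₀ = m ∨ IsUnit (A₀ + m)
      with hPdef
    set K₁ := HF.filter P with hK₁def
    set K₂ := HF.filter (fun m => ¬ P m) with hK₂def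
    -- class cardinality (generic)
    have hclass : ∀ a ∈ HF, (HF.filter (fun m => a = m ∨ IsUnit (a + m))).card = 2 ^ n - 1 := by
      intro a haH
      have hre : HF.filter (fun m => a = m ∨ IsUnit (a + m))
          = insert a (HF.filter (fun m => IsUnit (a + m))) := by
        ext m
        simp only [Finset.mem_filter, Finset.mem_insert]
        constructor
        · rintro ⟨hmH, rfl | hu⟩
          · exact Or.inl rfl
          · exact Or.inr ⟨hmH, hu⟩
        · rintro (rfl | ⟨hmH, hu⟩)
          · exact ⟨haH, Or.inl rfl⟩
          · exact ⟨hmH, Or.inr hu⟩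
      have hnm : a ∉ HF.filter (fun m => IsUnit (a + m)) := by
        rw [Finset.mem_filter, mat_add_self]
        rintro ⟨-, hu⟩
        exact hunit0 hu
      rw [hre, Finset.card_insert_of_notMem hnm, hdeg a haH]
      omega
    have hK₁card : K₁.card = 2 ^ n - 1 := hclass A₀ hA₀
    have hK₂card : K₂.card = 2 ^ n - 1 := by
      have hsplit := Finset.card_filter_add_card_filter_not (s := HF) (p := P)
      rw [← hK₁def] at hsplit
      have : HF.filter (fun m => ¬ P m) = K₂ := by rw [hK₂def]
      rw [this, hK₁card, hHFcard] at hsplit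
      omega
    -- the complement of the class of A₀ is also a class
    have htr2 : ∀ a ∈ HF, ∀ b ∈ HF, ¬ P a → ¬ P b → (a = b ∨ IsUnit (a + b)) := by
      intro a haH b hbH hPa hPb
      have hdisj : Disjoint K₁ (HF.filter (fun m => a = m ∨ IsUnit (a + m))) := by
        rw [Finset.disjoint_left]
        intro m hm₁ hm₂
        obtain ⟨hmH, hPm⟩ := Finset.mem_filter.mp hm₁
        obtain ⟨-, ham⟩ := Finset.mem_filter.mp hm₂
        have hma : m = a ∨ IsUnit (m + a) := by
          rcases ham with rfl | hu
          · exact Or.inl rfl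
          · exact Or.inr (by rwa [add_comm])
        exact hPa (htrans A₀ m a hA₀ hmH haH hPm hma)
      have hsub : K₁ ∪ HF.filter (fun m => a = m ∨ IsUnit (a + m)) ⊆ HF := by
        intro m hm
        rcases Finset.mem_union.mp hm with h | h
        · exact (Finset.mem_filter.mp h).1
        · exact (Finset.mem_filter.mp h).1
      have hcard2 : (K₁ ∪ HF.filter (fun m => a = m ∨ IsUnit (a + m))).card = HF.card := by
        rw [Finset.card_union_of_disjoint hdisj, hK₁card, hclass a haH, hHFcard]
        omega
      have huniv : K₁ ∪ HF.filter (fun m => a = m ∨ IsUnit (a + m)) = HF :=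
        Finset.eq_of_subset_of_card_le hsub (by rw [hcard2])
      have hbm : b ∈ K₁ ∪ HF.filter (fun m => a = m ∨ IsUnit (a + m)) := by
        rw [huniv]; exact hbH
      rcases Finset.mem_union.mp hbm with h | h
      · exact absurd (Finset.mem_filter.mp h).2 hPb
      · exact (Finset.mem_filter.mp h).2
    -- closure of each class together with 0
    have hcl₁ : ∀ m₁ ∈ insert (0 : Matrix (Fin n) (Fin n) (ZMod 2)) K₁,
        ∀ m₂ ∈ insert (0 : Matrix (Fin n) (Fin n) (ZMod 2)) K₁,
        m₁ + m₂ ∈ insert (0 : Matrix (Fin n) (Fin n) (ZMod 2)) K₁ := by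
      intro m₁ h₁ m₂ h₂
      rw [Finset.mem_insert] at h₁ h₂
      rcases h₁ with rfl | h₁
      · rw [zero_add]; exact Finset.mem_insert.mpr h₂
      rcases h₂ with rfl | h₂
      · rw [add_zero]; exact Finset.mem_insert.mpr (Or.inr h₁)
      obtain ⟨h₁H, hP₁⟩ := Finset.mem_filter.mp h₁
      obtain ⟨h₂H, hP₂⟩ := Finset.mem_filter.mp h₂
      rcases eq_or_ne m₁ m₂ with rfl | hne
      · rw [mat_add_self]
        exact Finset.mem_insert_self _ _
      have hrel : m₁ = m₂ ∨ IsUnit (m₁ + m₂) := by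
        have hP₁' : m₁ = A₀ ∨ IsUnit (m₁ + A₀) := by
          rcases hP₁ with h | h
          · exact Or.inl h.symm
          · exact Or.inr (by rwa [add_comm])
        exact htrans m₁ A₀ m₂ h₁H hA₀ h₂H hP₁' hP₂
      rcases hrel with rfl | hu
      · exact absurd rfl hne
      have hmH : m₁ + m₂ ∈ HF :=
        (memHF _).mpr ⟨add_mem ((memHF _).mp h₁H).1 ((memHF _).mp h₂H).1, hu⟩
      have hrel2 : m₁ = m₁ + m₂ ∨ IsUnit (m₁ + (m₁ + m₂)) := by
        right
        rw [← add_assoc, mat_add_self, zero_add]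
        exact ((memHF _).mp h₂H).2
      have := htrans A₀ m₁ (m₁ + m₂) hA₀ h₁H hmH hP₁ hrel2
      apply Finset.mem_insert_of_mem
      exact Finset.mem_filter.mpr ⟨hmH, this⟩
    have hcl₂ : ∀ m₁ ∈ insert (0 : Matrix (Fin n) (Fin n) (ZMod 2)) K₂,
        ∀ m₂ ∈ insert (0 : Matrix (Fin n) (Fin n) (ZMod 2)) K₂,
        m₁ + m₂ ∈ insert (0 : Matrix (Fin n) (Fin n) (ZMod 2)) K₂ := by
      intro m₁ h₁ m₂ h₂
      rw [Finset.mem_insert] at h₁ h₂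
      rcases h₁ with rfl | h₁
      · rw [zero_add]; exact Finset.mem_insert.mpr h₂
      rcases h₂ with rfl | h₂
      · rw [add_zero]; exact Finset.mem_insert.mpr (Or.inr h₁)
      obtain ⟨h₁H, hP₁⟩ := Finset.mem_filter.mp h₁
      obtain ⟨h₂H, hP₂⟩ := Finset.mem_filter.mp h₂
      rcases eq_or_ne m₁ m₂ with rfl | hne
      · rw [mat_add_self]
        exact Finset.mem_insert_self _ _
      have hrel := htr2 m₁ h₁H m₂ h₂H hP₁ hP₂
      rcases hrel with rfl | hu
      · exact absurd rfl hne
      have hmH : m₁ + m₂ ∈ HF :=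
        (memHF _).mpr ⟨add_mem ((memHF _).mp h₁H).1 ((memHF _).mp h₂H).1, hu⟩
      have hPnm : ¬ P (m₁ + m₂) := by
        intro hPm
        have hrel2 : m₁ + m₂ = m₁ ∨ IsUnit ((m₁ + m₂) + m₁) := by
          right
          have h' : (m₁ + m₂) + m₁ = (m₁ + m₁) + m₂ := by abel
          rw [h', mat_add_self, zero_add]
          exact ((memHF _).mp h₂H).2
        exact hP₁ (htrans A₀ (m₁ + m₂) m₁ hA₀ hmH h₁H hPm hrel2)
      apply Finset.mem_insert_of_mem
      exact Finset.mem_filter.mpr ⟨hmH, hPnm⟩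
    -- negation is trivial in characteristic two
    have hnegself : ∀ m : Matrix (Fin n) (Fin n) (ZMod 2), -m = m := by
      intro m
      exact neg_eq_of_add_eq_zero_left (mat_add_self m)
    -- build the subgroups
    set S₁ : AddSubgroup (Matrix (Fin n) (Fin n) (ZMod 2)) :=
      { carrier := (↑(insert (0 : Matrix (Fin n) (Fin n) (ZMod 2)) K₁) : Set _)
        zero_mem' := by simp
        add_mem' := fun {p q} hp hq => hcl₁ p hp q hq
        neg_mem' := fun {p} hp => by rwa [hnegself p] } with hS₁def
    set S₂ : AddSubgroup (Matrix (Fin n) (Fin n) (ZMod 2)) :=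
      { carrier := (↑(insert (0 : Matrix (Fin n) (Fin n) (ZMod 2)) K₂) : Set _)
        zero_mem' := by simp
        add_mem' := fun {p q} hp hq => hcl₂ p hp q hq
        neg_mem' := fun {p} hp => by rwa [hnegself p] } with hS₂def
    have memS₁ : ∀ m, m ∈ S₁ ↔ m = 0 ∨ m ∈ K₁ := by
      intro m
      have : m ∈ S₁ ↔ m ∈ insert (0 : Matrix (Fin n) (Fin n) (ZMod 2)) K₁ := Iff.rfl
      rw [this, Finset.mem_insert]
    have memS₂ : ∀ m, m ∈ S₂ ↔ m = 0 ∨ m ∈ K₂ := by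
      intro m
      have : m ∈ S₂ ↔ m ∈ insert (0 : Matrix (Fin n) (Fin n) (ZMod 2)) K₂ := Iff.rfl
      rw [this, Finset.mem_insert]
    have h0K₁ : (0 : Matrix (Fin n) (Fin n) (ZMod 2)) ∉ K₁ := by
      intro h
      exact hunit0 ((memHF _).mp (Finset.mem_filter.mp h).1).2
    have h0K₂ : (0 : Matrix (Fin n) (Fin n) (ZMod 2)) ∉ K₂ := by
      intro h
      exact hunit0 ((memHF _).mp (Finset.mem_filter.mp h).1).2
    have hcard₁ : Nat.card S₁ = 2 ^ n := by
      have he : Nat.card S₁ = Nat.card {m // m ∈ insert (0 : Matrix (Fin n) (Fin n) (ZMod 2)) K₁} :=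
        Nat.card_congr (Equiv.subtypeEquivRight (fun m => by
          rw [memS₁ m, Finset.mem_insert]))
      rw [he, Nat.card_eq_fintype_card, Fintype.card_coe,
        Finset.card_insert_of_notMem h0K₁, hK₁card]
      omega
    have hcard₂ : Nat.card S₂ = 2 ^ n := by
      have he : Nat.card S₂ = Nat.card {m // m ∈ insert (0 : Matrix (Fin n) (Fin n) (ZMod 2)) K₂} :=
        Nat.card_congr (Equiv.subtypeEquivRight (fun m => by
          rw [memS₂ m, Finset.mem_insert]))
      rw [he, Nat.card_eq_fintype_card, Fintype.card_coe,
        Finset.card_insert_of_notMem h0K₂, hK₂card]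
      omega
    refine ⟨S₁, S₂, ?_, ?_, hcard₁, hcard₂, ?_, ?_, ?_, ?_⟩
    · intro m hm
      rcases (memS₁ m).mp hm with rfl | h
      · exact zero_mem C
      · exact ((memHF _).mp (Finset.mem_filter.mp h).1).1
    · intro m hm
      rcases (memS₂ m).mp hm with rfl | h
      · exact zero_mem C
      · exact ((memHF _).mp (Finset.mem_filter.mp h).1).1
    · intro m hm hm0
      rcases (memS₁ m).mp hm with rfl | h
      · exact absurd rfl hm0
      · exact ((memHF _).mp (Finset.mem_filter.mp h).1).2
    · intro m hm hm0
      rcases (memS₂ m).mp hm with rfl | h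
      · exact absurd rfl hm0
      · exact ((memHF _).mp (Finset.mem_filter.mp h).1).2
    · ext m
      simp only [Set.mem_inter_iff, Set.mem_singleton_iff, SetLike.mem_coe]
      constructor
      · rintro ⟨h₁, h₂⟩
        rcases (memS₁ m).mp h₁ with rfl | hK1
        · rfl
        rcases (memS₂ m).mp h₂ with rfl | hK2
        · rfl
        exact absurd (Finset.mem_filter.mp hK1).2 (Finset.mem_filter.mp hK2).2
      · rintro rfl
        exact ⟨zero_mem S₁, zero_mem S₂⟩
    · ext Z
      simp only [SetLike.mem_coe, Set.mem_setOf_eq]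
      constructor
      · intro hZ
        rcases eq_or_ne Z 0 with rfl | hZ0
        · exact ⟨0, zero_mem S₁, 0, zero_mem S₂, by rw [add_zero]⟩
        by_cases hZu : IsUnit Z
        · have hZH : Z ∈ HF := (memHF _).mpr ⟨hZ, hZu⟩
          by_cases hPZ : P Z
          · exact ⟨Z, (memS₁ Z).mpr (Or.inr (Finset.mem_filter.mpr ⟨hZH, hPZ⟩)), 0,
              zero_mem S₂, by rw [add_zero]⟩
          · exact ⟨0, zero_mem S₁, Z,
              (memS₂ Z).mpr (Or.inr (Finset.mem_filter.mpr ⟨hZH, hPZ⟩)), by rw [zero_add]⟩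
        · obtain ⟨A, B, hAH, hBH, hABZ⟩ := hrge1 Z hZ hZ0 hZu
          have hAB : ¬ (A = B ∨ IsUnit (A + B)) := by
            rintro (rfl | hu)
            · rw [mat_add_self] at hABZ
              exact hZ0 hABZ.symm
            · rw [hABZ] at hu
              exact hZu hu
          by_cases hPA : P A
          · have hPB : ¬ P B := by
              intro hPB
              have hPA' : A = A₀ ∨ IsUnit (A + A₀) := by
                rcases hPA with h | h
                · exact Or.inl h.symm
                · exact Or.inr (by rwa [add_comm])
              exact hAB (htrans A A₀ B hAH hA₀ hBH hPA' hPB)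
            exact ⟨A, (memS₁ A).mpr (Or.inr (Finset.mem_filter.mpr ⟨hAH, hPA⟩)), B,
              (memS₂ B).mpr (Or.inr (Finset.mem_filter.mpr ⟨hBH, hPB⟩)), hABZ.symm⟩
          · by_cases hPB : P B
            · exact ⟨B, (memS₁ B).mpr (Or.inr (Finset.mem_filter.mpr ⟨hBH, hPB⟩)), A,
                (memS₂ A).mpr (Or.inr (Finset.mem_filter.mpr ⟨hAH, hPA⟩)),
                by rw [add_comm] at hABZ; exact hABZ.symm⟩
            · exact absurd (htr2 A hAH B hBH hPA hPB) hAB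
      · rintro ⟨X, hX, Y, hY, rfl⟩
        have hXC : X ∈ C := by
          rcases (memS₁ X).mp hX with rfl | h
          · exact zero_mem C
          · exact ((memHF _).mp (Finset.mem_filter.mp h).1).1
        have hYC : Y ∈ C := by
          rcases (memS₂ Y).mp hY with rfl | h
          · exact zero_mem C
          · exact ((memHF _).mp (Finset.mem_filter.mp h).1).1
        exact add_mem hXC hYC
end

section
/- Let n ≥ 1 and let C be an additive subgroup of the n×n matrices over F₂ with |C| = 2^(2n) such that every nonzero matrix in C has rank at least n−1. Then there are exactly two additive subgroups S of C with |S| = 2^n in which every nonzero matrix is invertible. -/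
open Finset Matrix
open scoped Classical

namespace BMRD



abbrev V (n : ℕ) := Matrix (Fin n) (Fin n) (ZMod 2)

variable {n : ℕ}

lemma addself (A : V n) : A + A = 0 := by
  ext i j; exact CharTwo.add_self_eq_zero _

lemma vaddself (u : Fin n → ZMod 2) : u + u = 0 := by
  funext i; exact CharTwo.add_self_eq_zero _

noncomputable def Cs (C : AddSubgroup (V n)) : Finset (V n) := univ.filter (· ∈ C)

lemma mem_Cs {C : AddSubgroup (V n)} {A : V n} : A ∈ Cs C ↔ A ∈ C := by
  simp [Cs]

lemma card_Cs {C : AddSubgroup (V n)} (hcard : Nat.card C = 2 ^ (2 * n)) :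
    (Cs C).card = 2 ^ (2 * n) := by
  rw [← hcard, Nat.card_eq_fintype_card (α := C)]
  rw [show (Fintype.card C) = Fintype.card {A : V n // A ∈ C} from rfl]
  rw [Fintype.card_subtype]
  rfl

lemma inj2 {C : AddSubgroup (V n)} (hn : 2 ≤ n)
    (hrank : ∀ A ∈ C, A ≠ 0 → n - 1 ≤ A.rank) {A : V n}
    (hA : A ∈ C) {u v : Fin n → ZMod 2} (hu : u ≠ 0) (hv : v ≠ 0) (huv : u ≠ v)
    (h1 : A.mulVec u = 0) (h2 : A.mulVec v = 0) : A = 0 := by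
  by_contra hA0
  have hr := hrank A hA hA0
  have hrn : A.rank + Module.finrank (ZMod 2) (LinearMap.ker A.mulVecLin) = n := by
    have := LinearMap.finrank_range_add_finrank_ker (A.mulVecLin)
    rw [Module.finrank_fintype_fun_eq_card] at this
    simpa [Matrix.rank] using this
  have hker2 : 2 ≤ Module.finrank (ZMod 2) (LinearMap.ker A.mulVecLin) := by
    have hum : u ∈ LinearMap.ker A.mulVecLin := by
      simpa [LinearMap.mem_ker, Matrix.mulVecLin_apply] using h1
    have hvm : v ∈ LinearMap.ker A.mulVecLin := by
      simpa [LinearMap.mem_ker, Matrix.mulVecLin_apply] using h2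
    have hli : LinearIndependent (ZMod 2)
        ![(⟨u, hum⟩ : LinearMap.ker A.mulVecLin), ⟨v, hvm⟩] := by
      have hli' : LinearIndependent (ZMod 2) ![u, v] := by
        rw [linearIndependent_fin2]
        refine ⟨hv, fun a hav => ?_⟩
        have h01 : ∀ b : ZMod 2, b = 0 ∨ b = 1 := by decide
        rcases h01 a with rfl | rfl
        · simp at hav; exact hu hav.symm
        · simp at hav; exact huv hav.symm
      have hcomp : (LinearMap.ker A.mulVecLin).subtype ∘
          ![(⟨u, hum⟩ : LinearMap.ker A.mulVecLin), ⟨v, hvm⟩] = ![u, v] := by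
        funext i; fin_cases i <;> rfl
      apply LinearIndependent.of_comp (LinearMap.ker A.mulVecLin).subtype
      rw [hcomp]; exact hli'
    have := hli.fintype_card_le_finrank
    simpa using this
  omega

lemma ev2 {C : AddSubgroup (V n)} (hn : 2 ≤ n)
    (hrank : ∀ A ∈ C, A ≠ 0 → n - 1 ≤ A.rank) (hcard : Nat.card C = 2 ^ (2 * n))
    {u v : Fin n → ZMod 2} (hu : u ≠ 0) (hv : v ≠ 0) (huv : u ≠ v)
    (w₁ w₂ : Fin n → ZMod 2) :
    ∃! A : V n, A ∈ C ∧ A.mulVec u = w₁ ∧ A.mulVec v = w₂ := by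
  have hinj : Set.InjOn (fun A : V n => (A.mulVec u, A.mulVec v)) (Cs C) := by
    intro A hA B hB hAB
    simp only [Prod.mk.injEq] at hAB
    have hABC : A - B ∈ C := sub_mem (mem_Cs.1 hA) (mem_Cs.1 hB)
    have h1 : (A - B).mulVec u = 0 := by rw [Matrix.sub_mulVec, hAB.1, sub_self]
    have h2 : (A - B).mulVec v = 0 := by rw [Matrix.sub_mulVec, hAB.2, sub_self]
    have := inj2 hn hrank hABC hu hv huv h1 h2
    exact sub_eq_zero.1 this
  have himg : (Cs C).image (fun A : V n => (A.mulVec u, A.mulVec v)) = univ := by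
    apply Finset.eq_univ_of_card
    rw [Finset.card_image_of_injOn hinj, card_Cs hcard]
    simp [two_mul, pow_add]
  have hmem : (w₁, w₂) ∈ (Cs C).image (fun A : V n => (A.mulVec u, A.mulVec v)) := by
    rw [himg]; exact mem_univ _
  obtain ⟨A, hA, hAe⟩ := Finset.mem_image.1 hmem
  simp only [Prod.mk.injEq] at hAe
  refine ⟨A, ⟨mem_Cs.1 hA, hAe.1, hAe.2⟩, ?_⟩
  intro B hB
  exact hinj (mem_Cs.2 hB.1) hA (by simp [hB.2.1, hB.2.2, hAe.1, hAe.2])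



variable {n : ℕ}

noncomputable def P (n : ℕ) : Finset (Fin n → ZMod 2) := univ.filter (· ≠ 0)

lemma mem_P {u : Fin n → ZMod 2} : u ∈ P n ↔ u ≠ 0 := by simp [P]

lemma card_P : (P n).card + 1 = 2 ^ n := by
  have : (P n)ᶜ = {0} := by
    ext u; simp [P]
  have hc := Finset.card_compl (P n)
  rw [this] at hc
  have hcu : Fintype.card (Fin n → ZMod 2) = 2 ^ n := by simp
  simp only [Finset.card_singleton] at hc
  omega

lemma exists_second (hn : 2 ≤ n) (u : Fin n → ZMod 2) :
    ∃ v : Fin n → ZMod 2, v ≠ 0 ∧ v ≠ u := by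
  by_contra h
  push_neg at h
  have : (univ : Finset (Fin n → ZMod 2)) ⊆ {0, u} := by
    intro v _
    simp only [Finset.mem_insert, Finset.mem_singleton]
    by_cases hv : v = 0
    · exact Or.inl hv
    · exact Or.inr (h v hv)
  have hle := Finset.card_le_card this
  have h2 : ({0, u} : Finset (Fin n → ZMod 2)).card ≤ 2 := Finset.card_insert_le _ _ |>.trans (by simp)
  have hcu : Fintype.card (Fin n → ZMod 2) = 2 ^ n := by simp
  rw [Finset.card_univ, hcu] at hle
  have : 2 ^ 2 ≤ 2 ^ n := Nat.pow_le_pow_right (by norm_num) hn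
  omega

noncomputable def Ku (C : AddSubgroup (V n)) (u : Fin n → ZMod 2) : Finset (V n) :=
  (Cs C).filter (fun A => A.mulVec u = 0)

lemma mem_Ku {C : AddSubgroup (V n)} {u : Fin n → ZMod 2} {A : V n} :
    A ∈ Ku C u ↔ A ∈ C ∧ A.mulVec u = 0 := by simp [Ku, Cs]

lemma card_Ku {C : AddSubgroup (V n)} (hn : 2 ≤ n)
    (hrank : ∀ A ∈ C, A ≠ 0 → n - 1 ≤ A.rank) (hcard : Nat.card C = 2 ^ (2 * n))
    {u : Fin n → ZMod 2} (hu : u ≠ 0) : (Ku C u).card = 2 ^ n := by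
  obtain ⟨v, hv, hvu⟩ := exists_second hn u
  have hbij : ∀ w ∈ (univ : Finset (Fin n → ZMod 2)), ∃! A, A ∈ Ku C u ∧ A.mulVec v = w := by
    intro w _
    obtain ⟨A, hA, hAuniq⟩ := ev2 hn hrank hcard hu hv (Ne.symm hvu) 0 w
    refine ⟨A, ⟨mem_Ku.2 ⟨hA.1, hA.2.1⟩, hA.2.2⟩, ?_⟩
    intro B hB
    exact hAuniq B ⟨(mem_Ku.1 hB.1).1, (mem_Ku.1 hB.1).2, hB.2⟩
  have := Finset.card_bij' (fun (A : V n) _ => A.mulVec v)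
    (fun w hw => (hbij w hw).choose)
    (fun A hA => mem_univ _)
    (fun w hw => ((hbij w hw).choose_spec).1.1)
    ?_ ?_ (s := Ku C u) (t := univ)
  · rw [this]; simp
  · intro A hA
    exact (((hbij _ (mem_univ _)).choose_spec).2 A ⟨hA, rfl⟩).symm
  · intro w hw
    exact ((hbij w hw).choose_spec).1.2

noncomputable def Sg (C : AddSubgroup (V n)) : Finset (V n) :=
  (Cs C).filter (fun A => A ≠ 0 ∧ ¬ IsUnit A)

noncomputable def Hs (C : AddSubgroup (V n)) : Finset (V n) :=
  (Cs C).filter (fun A => IsUnit A)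

lemma mem_Sg {C : AddSubgroup (V n)} {A : V n} :
    A ∈ Sg C ↔ A ∈ C ∧ A ≠ 0 ∧ ¬ IsUnit A := by simp [Sg, Cs]

lemma mem_Hs {C : AddSubgroup (V n)} {A : V n} :
    A ∈ Hs C ↔ A ∈ C ∧ IsUnit A := by simp [Hs, Cs]

lemma unit_mulVec_ne {A : V n} (hA : IsUnit A) {u : Fin n → ZMod 2} (hu : u ≠ 0) :
    A.mulVec u ≠ 0 := by
  intro h
  obtain ⟨B, hB⟩ := hA.exists_left_inv
  have := congrArg (B.mulVec) h
  rw [Matrix.mulVec_mulVec, hB, Matrix.one_mulVec, Matrix.mulVec_zero] at this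
  exact hu this

lemma ker_exists {A : V n} (hA0 : A ≠ 0) (hA : ¬ IsUnit A) :
    ∃ u, u ≠ 0 ∧ A.mulVec u = 0 := by
  have : ∃ u ≠ 0, A.mulVec u = 0 := by
    rw [Matrix.exists_mulVec_eq_zero_iff]
    by_contra hd
    exact hA ((Matrix.isUnit_iff_isUnit_det A).2 (isUnit_iff_ne_zero.2 hd))
  obtain ⟨u, h1, h2⟩ := this
  exact ⟨u, h1, h2⟩

lemma ker_unique {C : AddSubgroup (V n)} (hn : 2 ≤ n)
    (hrank : ∀ A ∈ C, A ≠ 0 → n - 1 ≤ A.rank) {A : V n} (hA : A ∈ C) (hA0 : A ≠ 0)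
    {u v : Fin n → ZMod 2} (hu : u ≠ 0) (hv : v ≠ 0)
    (h1 : A.mulVec u = 0) (h2 : A.mulVec v = 0) : u = v := by
  by_contra huv
  exact hA0 (inj2 hn hrank hA hu hv huv h1 h2)

lemma Sg_eq_biUnion {C : AddSubgroup (V n)} (hn : 2 ≤ n)
    (hrank : ∀ A ∈ C, A ≠ 0 → n - 1 ≤ A.rank) :
    Sg C = (P n).biUnion (fun u => (Ku C u).erase 0) := by
  ext A
  simp only [Finset.mem_biUnion, Finset.mem_erase, mem_Ku, mem_Sg, mem_P]
  constructor
  · rintro ⟨hAC, hA0, hAu⟩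
    obtain ⟨u, hu, hker⟩ := ker_exists hA0 hAu
    exact ⟨u, hu, hA0, hAC, hker⟩
  · rintro ⟨u, hu, hA0, hAC, hker⟩
    refine ⟨hAC, hA0, fun hunit => unit_mulVec_ne hunit hu hker⟩

lemma card_Sg {C : AddSubgroup (V n)} (hn : 2 ≤ n)
    (hrank : ∀ A ∈ C, A ≠ 0 → n - 1 ≤ A.rank) (hcard : Nat.card C = 2 ^ (2 * n)) :
    (Sg C).card = (P n).card * (P n).card := by
  rw [Sg_eq_biUnion hn hrank]
  rw [Finset.card_biUnion]
  · have : ∀ u ∈ P n, ((Ku C u).erase 0).card = (P n).card := by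
      intro u hu
      have h0 : (0 : V n) ∈ Ku C u := mem_Ku.2 ⟨zero_mem C, by simp⟩
      have := Finset.card_erase_of_mem h0
      rw [this, card_Ku hn hrank hcard (mem_P.1 hu)]
      have := card_P (n := n)
      omega
    rw [Finset.sum_congr rfl this, Finset.sum_const, smul_eq_mul]
  · intro u hu v hv huv
    simp only [Finset.disjoint_left]
    intro A hAu hAv
    rw [Finset.mem_erase, mem_Ku] at hAu hAv
    exact huv (ker_unique hn hrank hAu.2.1 hAu.1 (mem_P.1 hu) (mem_P.1 hv) hAu.2.2 hAv.2.2)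

lemma Cs_partition {C : AddSubgroup (V n)} {A : V n} (hA : A ∈ C) :
    A = 0 ∨ A ∈ Hs C ∨ A ∈ Sg C := by
  by_cases h0 : A = 0
  · exact Or.inl h0
  by_cases hu : IsUnit A
  · exact Or.inr (Or.inl (mem_Hs.2 ⟨hA, hu⟩))
  · exact Or.inr (Or.inr (mem_Sg.2 ⟨hA, h0, hu⟩))

lemma card_Hs {C : AddSubgroup (V n)} (hn : 2 ≤ n)
    (hrank : ∀ A ∈ C, A ≠ 0 → n - 1 ≤ A.rank) (hcard : Nat.card C = 2 ^ (2 * n)) :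
    (Hs C).card = 2 * (P n).card := by
  have hsplit : Cs C = insert 0 (Hs C ∪ Sg C) := by
    ext A
    simp only [Finset.mem_insert, Finset.mem_union]
    constructor
    · intro hA
      rcases Cs_partition (mem_Cs.1 hA) with h | h | h
      · exact Or.inl h
      · exact Or.inr (Or.inl h)
      · exact Or.inr (Or.inr h)
    · rintro (rfl | h | h)
      · exact mem_Cs.2 (zero_mem C)
      · exact mem_Cs.2 (mem_Hs.1 h).1
      · exact mem_Cs.2 (mem_Sg.1 h).1
  have hdisj : Disjoint (Hs C) (Sg C) := by
    simp only [Finset.disjoint_left]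
    intro A hA hA'
    exact (mem_Sg.1 hA').2.2 (mem_Hs.1 hA).2
  have h0notin : (0 : V n) ∉ Hs C ∪ Sg C := by
    simp only [Finset.mem_union]
    rintro (h | h)
    · obtain ⟨v, hv, -⟩ := exists_second hn 0
      exact unit_mulVec_ne (mem_Hs.1 h).2 hv (Matrix.zero_mulVec v)
    · exact (mem_Sg.1 h).2.1 rfl
  have hc := card_Cs hcard
  rw [hsplit, Finset.card_insert_of_notMem h0notin, Finset.card_union_of_disjoint hdisj,
    card_Sg hn hrank hcard] at hc
  have hp := card_P (n := n)
  have h2n : 2 ^ (2 * n) = ((P n).card + 1) * ((P n).card + 1) := by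
    rw [hp, two_mul, pow_add]
  rw [h2n] at hc
  nlinarith [hc]

variable {n : ℕ}

lemma vadd_eq_zero_iff {u v : Fin n → ZMod 2} : u + v = 0 ↔ u = v := by
  constructor
  · intro h
    have := congrArg (· + v) h
    simpa [add_assoc, vaddself] using this
  · rintro rfl; exact vaddself u

lemma madd_eq_zero_iff {A B : V n} : A + B = 0 ↔ A = B := by
  constructor
  · intro h
    have := congrArg (· + B) h
    simpa [add_assoc, addself] using this
  · rintro rfl; exact addself A

noncomputable def cset (C : AddSubgroup (V n)) (a b : Fin n → ZMod 2) (X : V n) :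
    Finset (V n) :=
  ((Ku C a).erase 0).filter (fun s => s + X ∈ (Ku C b).erase 0)

lemma mem_cset {C : AddSubgroup (V n)} {a b : Fin n → ZMod 2} {X s : V n} :
    s ∈ cset C a b X ↔ (s ∈ C ∧ s.mulVec a = 0 ∧ s ≠ 0) ∧
      ((s + X) ∈ C ∧ (s + X).mulVec b = 0 ∧ s + X ≠ 0) := by
  simp only [cset, Finset.mem_filter, Finset.mem_erase, mem_Ku]
  tauto

lemma cset_zero {C : AddSubgroup (V n)} (hn : 2 ≤ n)
    (hrank : ∀ A ∈ C, A ≠ 0 → n - 1 ≤ A.rank)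
    {a b : Fin n → ZMod 2} (ha : a ≠ 0) (hb : b ≠ 0) (hab : a ≠ b) {X : V n}
    (h : X.mulVec a = 0 ∨ X.mulVec b = 0) : (cset C a b X).card = 0 := by
  rw [Finset.card_eq_zero, Finset.eq_empty_iff_forall_notMem]
  intro s hs
  rw [mem_cset] at hs
  obtain ⟨⟨hsC, hsa, hs0⟩, hsXC, hsXb, hsX0⟩ := hs
  rcases h with hXa | hXb
  · have h1 : (s + X).mulVec a = 0 := by rw [Matrix.add_mulVec, hsa, hXa, add_zero]
    exact hsX0 (inj2 hn hrank hsXC ha hb hab h1 hsXb)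
  · have h1 : s.mulVec b = 0 := by
      have := hsXb
      rw [Matrix.add_mulVec, hXb, add_zero] at this
      exact this
    exact hs0 (inj2 hn hrank hsC ha hb hab hsa h1)

lemma cset_one {C : AddSubgroup (V n)} (hn : 2 ≤ n)
    (hrank : ∀ A ∈ C, A ≠ 0 → n - 1 ≤ A.rank) (hcard : Nat.card C = 2 ^ (2 * n))
    {a b : Fin n → ZMod 2} (ha : a ≠ 0) (hb : b ≠ 0) (hab : a ≠ b) {X : V n}
    (hX : X ∈ C) (hXa : X.mulVec a ≠ 0) (hXb : X.mulVec b ≠ 0) :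
    (cset C a b X).card = 1 := by
  obtain ⟨s₀, ⟨hs₀C, hs₀a, hs₀b⟩, huniq⟩ := ev2 hn hrank hcard ha hb hab 0 (X.mulVec b)
  rw [Finset.card_eq_one]
  refine ⟨s₀, ?_⟩
  ext s
  rw [mem_cset, Finset.mem_singleton]
  constructor
  · rintro ⟨⟨hsC, hsa, hs0⟩, hsXC, hsXb, hsX0⟩
    apply huniq
    refine ⟨hsC, hsa, ?_⟩
    rw [Matrix.add_mulVec] at hsXb
    have := congrArg (· + X.mulVec b) hsXb
    simpa [add_assoc, vaddself] using this
  · intro hs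
    rw [hs]
    have hs₀0 : s₀ ≠ 0 := by
      rintro rfl
      rw [Matrix.zero_mulVec] at hs₀b
      exact hXb hs₀b.symm
    have hsX0 : s₀ + X ≠ 0 := by
      intro h
      rw [madd_eq_zero_iff] at h
      subst h
      exact hXa hs₀a
    refine ⟨⟨hs₀C, hs₀a, hs₀0⟩, add_mem hs₀C hX, ?_, hsX0⟩
    rw [Matrix.add_mulVec, hs₀b, vaddself]

lemma cset_self {C : AddSubgroup (V n)} (hn : 2 ≤ n)
    (hrank : ∀ A ∈ C, A ≠ 0 → n - 1 ≤ A.rank) (hcard : Nat.card C = 2 ^ (2 * n))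
    {w : Fin n → ZMod 2} (hw : w ≠ 0) {X : V n} (hX : X ∈ C) (hX0 : X ≠ 0)
    (hXw : X.mulVec w = 0) : (cset C w w X).card = (P n).card - 1 := by
  have hset : cset C w w X = ((Ku C w).erase 0).erase X := by
    ext s
    rw [mem_cset, Finset.mem_erase, Finset.mem_erase, mem_Ku]
    constructor
    · rintro ⟨⟨hsC, hsw, hs0⟩, -, -, hsX0⟩
      refine ⟨fun h => hsX0 ?_, hs0, hsC, hsw⟩
      rw [h]; exact addself X
    · rintro ⟨hsX, hs0, hsC, hsw⟩
      refine ⟨⟨hsC, hsw, hs0⟩, add_mem hsC hX, ?_, ?_⟩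
      · rw [Matrix.add_mulVec, hsw, hXw, add_zero]
      · rw [Ne, madd_eq_zero_iff]; exact hsX
  rw [hset]
  have hXmem : X ∈ (Ku C w).erase 0 := by
    rw [Finset.mem_erase, mem_Ku]; exact ⟨hX0, hX, hXw⟩
  have h0mem : (0 : V n) ∈ Ku C w := mem_Ku.2 ⟨zero_mem C, by simp⟩
  rw [Finset.card_erase_of_mem hXmem, Finset.card_erase_of_mem h0mem,
    card_Ku hn hrank hcard hw]
  have := card_P (n := n)
  omega

noncomputable def SaSet (C : AddSubgroup (V n)) (a : Fin n → ZMod 2) (X : V n) :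
    Finset (V n) :=
  ((Ku C a).erase 0).filter (fun s => s + X ∈ Sg C)

lemma Sa_eq_biUnion {C : AddSubgroup (V n)} (hn : 2 ≤ n)
    (hrank : ∀ A ∈ C, A ≠ 0 → n - 1 ≤ A.rank) (a : Fin n → ZMod 2) (X : V n) :
    SaSet C a X = (P n).biUnion (fun b => cset C a b X) := by
  ext s
  simp only [SaSet, Finset.mem_filter, Finset.mem_biUnion, cset, Sg_eq_biUnion hn hrank,
    Finset.mem_biUnion]
  tauto

lemma biUnion_cset_disj {C : AddSubgroup (V n)} (hn : 2 ≤ n)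
    (hrank : ∀ A ∈ C, A ≠ 0 → n - 1 ≤ A.rank) (a : Fin n → ZMod 2) (X : V n) :
    ∀ b ∈ P n, ∀ b' ∈ P n, b ≠ b' → Disjoint (cset C a b X) (cset C a b' X) := by
  intro b hb b' hb' hbb'
  simp only [Finset.disjoint_left]
  intro s hs hs'
  rw [mem_cset] at hs hs'
  exact hbb' (ker_unique hn hrank hs.2.1 hs.2.2.2 (mem_P.1 hb) (mem_P.1 hb')
    hs.2.2.1 hs'.2.2.1)

lemma filter_two_erase {a w : Fin n → ZMod 2} (ha : a ∈ P n) (hw : w ∈ P n) (haw : a ≠ w) :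
    ((P n).filter (fun b => ¬(b = a ∨ b = w))).card = (P n).card - 2 := by
  have : (P n).filter (fun b => ¬(b = a ∨ b = w)) = ((P n).erase a).erase w := by
    ext b
    simp only [Finset.mem_filter, Finset.mem_erase]
    tauto
  rw [this, Finset.card_erase_of_mem, Finset.card_erase_of_mem ha]
  · omega
  · rw [Finset.mem_erase]; exact ⟨Ne.symm haw, hw⟩

lemma Sa_card_unit {C : AddSubgroup (V n)} (hn : 2 ≤ n)
    (hrank : ∀ A ∈ C, A ≠ 0 → n - 1 ≤ A.rank) (hcard : Nat.card C = 2 ^ (2 * n))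
    {a : Fin n → ZMod 2} (ha : a ∈ P n) {X : V n} (hX : X ∈ Hs C) :
    (SaSet C a X).card = (P n).card - 1 := by
  obtain ⟨hXC, hXu⟩ := mem_Hs.1 hX
  rw [Sa_eq_biUnion hn hrank, Finset.card_biUnion (biUnion_cset_disj hn hrank a X)]
  have hone : ∀ b ∈ (P n).erase a, (cset C a b X).card = 1 := by
    intro b hb
    rw [Finset.mem_erase] at hb
    exact cset_one hn hrank hcard (mem_P.1 ha) (mem_P.1 hb.2) (Ne.symm hb.1) hXC
      (unit_mulVec_ne hXu (mem_P.1 ha)) (unit_mulVec_ne hXu (mem_P.1 hb.2))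
  rw [← Finset.add_sum_erase _ _ ha]
  have hself : (cset C a a X).card = 0 := by
    rw [Finset.card_eq_zero, Finset.eq_empty_iff_forall_notMem]
    intro s hs
    rw [mem_cset] at hs
    obtain ⟨⟨hsC, hsa, hs0⟩, hsXC, hsXa, hsX0⟩ := hs
    have : X.mulVec a = 0 := by
      have := hsXa
      rw [Matrix.add_mulVec, hsa, zero_add] at this
      exact this
    exact unit_mulVec_ne hXu (mem_P.1 ha) this
  rw [hself, zero_add, Finset.sum_congr rfl hone, Finset.sum_const, smul_eq_mul, mul_one,
    Finset.card_erase_of_mem ha]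

lemma Sa_card_sing_eq {C : AddSubgroup (V n)} (hn : 2 ≤ n)
    (hrank : ∀ A ∈ C, A ≠ 0 → n - 1 ≤ A.rank) (hcard : Nat.card C = 2 ^ (2 * n))
    {w : Fin n → ZMod 2} (hw : w ∈ P n) {X : V n} (hX : X ∈ C) (hX0 : X ≠ 0)
    (hXw : X.mulVec w = 0) :
    (SaSet C w X).card = (P n).card - 1 := by
  rw [Sa_eq_biUnion hn hrank, Finset.card_biUnion (biUnion_cset_disj hn hrank w X)]
  have hzero : ∀ b ∈ (P n).erase w, (cset C w b X).card = 0 := by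
    intro b hb
    rw [Finset.mem_erase] at hb
    exact cset_zero hn hrank (mem_P.1 hw) (mem_P.1 hb.2) (Ne.symm hb.1) (Or.inl hXw)
  rw [← Finset.add_sum_erase _ _ hw, Finset.sum_congr rfl hzero, Finset.sum_const,
    smul_eq_mul, mul_zero, add_zero, cset_self hn hrank hcard (mem_P.1 hw) hX hX0 hXw]

lemma Sa_card_sing_ne {C : AddSubgroup (V n)} (hn : 2 ≤ n)
    (hrank : ∀ A ∈ C, A ≠ 0 → n - 1 ≤ A.rank) (hcard : Nat.card C = 2 ^ (2 * n))
    {a w : Fin n → ZMod 2} (ha : a ∈ P n) (hw : w ∈ P n) (haw : a ≠ w) {X : V n}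
    (hX : X ∈ C) (hX0 : X ≠ 0) (hXw : X.mulVec w = 0) :
    (SaSet C a X).card = (P n).card - 2 := by
  have hXa : X.mulVec a ≠ 0 := by
    intro h
    exact haw (ker_unique hn hrank hX hX0 (mem_P.1 ha) (mem_P.1 hw) h hXw)
  rw [Sa_eq_biUnion hn hrank, Finset.card_biUnion (biUnion_cset_disj hn hrank a X)]
  have hval : ∀ b ∈ P n, (cset C a b X).card = if b = a ∨ b = w then 0 else 1 := by
    intro b hb
    by_cases hcase : b = a ∨ b = w
    · rw [if_pos hcase]
      rcases hcase with rfl | rfl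
      · rw [Finset.card_eq_zero, Finset.eq_empty_iff_forall_notMem]
        intro s hs
        rw [mem_cset] at hs
        obtain ⟨⟨hsC, hsa, hs0⟩, hsXC, hsXa, hsX0⟩ := hs
        apply hXa
        have := hsXa
        rw [Matrix.add_mulVec, hsa, zero_add] at this
        exact this
      · exact cset_zero hn hrank (mem_P.1 ha) (mem_P.1 hb) haw (Or.inr hXw)
    · push_neg at hcase
      rw [if_neg (by tauto)]
      have hXb : X.mulVec b ≠ 0 := by
        intro h
        exact hcase.2 (ker_unique hn hrank hX hX0 (mem_P.1 hb) (mem_P.1 hw) h hXw)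
      exact cset_one hn hrank hcard (mem_P.1 ha) (mem_P.1 hb) (fun h => hcase.1 h.symm)
        hX hXa hXb
  rw [Finset.sum_congr rfl hval, Finset.sum_ite, Finset.sum_const, Finset.sum_const]
  simp only [smul_eq_mul, mul_zero, mul_one, zero_add]
  exact filter_two_erase ha hw haw

noncomputable def NSSSet (C : AddSubgroup (V n)) (X : V n) : Finset (V n) :=
  (Sg C).filter (fun s => s + X ∈ Sg C)

lemma NSS_eq_biUnion {C : AddSubgroup (V n)} (hn : 2 ≤ n)
    (hrank : ∀ A ∈ C, A ≠ 0 → n - 1 ≤ A.rank) (X : V n) :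
    NSSSet C X = (P n).biUnion (fun a => SaSet C a X) := by
  ext s
  simp only [NSSSet, Finset.mem_filter, Finset.mem_biUnion, SaSet,
    Sg_eq_biUnion hn hrank (C := C), Finset.mem_biUnion]
  tauto

lemma NSS_disj {C : AddSubgroup (V n)} (hn : 2 ≤ n)
    (hrank : ∀ A ∈ C, A ≠ 0 → n - 1 ≤ A.rank) (X : V n) :
    ∀ a ∈ P n, ∀ a' ∈ P n, a ≠ a' → Disjoint (SaSet C a X) (SaSet C a' X) := by
  intro a ha a' ha' haa'
  simp only [Finset.disjoint_left]
  intro s hs hs'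
  simp only [SaSet, Finset.mem_filter, Finset.mem_erase, mem_Ku] at hs hs'
  exact haa' (ker_unique hn hrank hs.1.2.1 hs.1.1 (mem_P.1 ha) (mem_P.1 ha')
    hs.1.2.2 hs'.1.2.2)

lemma NSS_card_unit {C : AddSubgroup (V n)} (hn : 2 ≤ n)
    (hrank : ∀ A ∈ C, A ≠ 0 → n - 1 ≤ A.rank) (hcard : Nat.card C = 2 ^ (2 * n))
    {X : V n} (hX : X ∈ Hs C) :
    (NSSSet C X).card = (P n).card * ((P n).card - 1) := by
  rw [NSS_eq_biUnion hn hrank, Finset.card_biUnion (NSS_disj hn hrank X)]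
  rw [Finset.sum_congr rfl (fun a ha => Sa_card_unit hn hrank hcard ha hX),
    Finset.sum_const, smul_eq_mul]

lemma NSS_card_sing {C : AddSubgroup (V n)} (hn : 2 ≤ n)
    (hrank : ∀ A ∈ C, A ≠ 0 → n - 1 ≤ A.rank) (hcard : Nat.card C = 2 ^ (2 * n))
    {X : V n} (hX : X ∈ Sg C) :
    (NSSSet C X).card = ((P n).card - 1) + ((P n).card - 1) * ((P n).card - 2) := by
  obtain ⟨hXC, hX0, hXu⟩ := mem_Sg.1 hX
  obtain ⟨w, hw0, hXw⟩ := ker_exists hX0 hXu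
  have hwP : w ∈ P n := mem_P.2 hw0
  rw [NSS_eq_biUnion hn hrank, Finset.card_biUnion (NSS_disj hn hrank X)]
  rw [← Finset.add_sum_erase _ _ hwP, Sa_card_sing_eq hn hrank hcard hwP hXC hX0 hXw]
  have : ∀ a ∈ (P n).erase w, (SaSet C a X).card = (P n).card - 2 := by
    intro a ha
    rw [Finset.mem_erase] at ha
    exact Sa_card_sing_ne hn hrank hcard ha.2 hwP ha.1 hXC hX0 hXw
  rw [Finset.sum_congr rfl this, Finset.sum_const, smul_eq_mul,
    Finset.card_erase_of_mem hwP]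

variable {n : ℕ}

lemma not_unit_zero (hn : 2 ≤ n) : ¬ IsUnit (0 : V n) := by
  intro h
  obtain ⟨v, hv, -⟩ := exists_second hn 0
  exact unit_mulVec_ne h hv (Matrix.zero_mulVec v)

lemma split3 {C : AddSubgroup (V n)} (hn : 2 ≤ n) (T : Finset (V n)) (hT : T ⊆ Cs C)
    {X : V n} (hX : X ∈ C) :
    T.card = (T.filter (fun p => p + X = 0)).card + (T.filter (fun p => p + X ∈ Hs C)).card
      + (T.filter (fun p => p + X ∈ Sg C)).card := by
  have h1 := Finset.card_filter_add_card_filter_not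
    (s := T) (p := fun p => p + X = 0)
  have h2 := Finset.card_filter_add_card_filter_not
    (s := T.filter (fun p => ¬(p + X = 0))) (p := fun p => p + X ∈ Hs C)
  rw [Finset.filter_filter, Finset.filter_filter] at h2
  have h3 : T.filter (fun p => ¬(p + X = 0) ∧ ¬(p + X ∈ Hs C))
      = T.filter (fun p => p + X ∈ Sg C) := by
    ext p
    simp only [Finset.mem_filter, mem_Sg, mem_Hs]
    constructor
    · rintro ⟨hp, h0, hH⟩
      have hpXC : p + X ∈ C := add_mem (mem_Cs.1 (hT hp)) hX
      exact ⟨hp, hpXC, h0, fun hu => hH ⟨hpXC, hu⟩⟩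
    · rintro ⟨hp, hpXC, h0, hu⟩
      exact ⟨hp, h0, fun h => hu h.2⟩
  have h4 : T.filter (fun p => ¬(p + X = 0) ∧ (p + X ∈ Hs C))
      = T.filter (fun p => p + X ∈ Hs C) := by
    ext p
    simp only [Finset.mem_filter, mem_Hs]
    constructor
    · rintro ⟨hp, -, h⟩; exact ⟨hp, h⟩
    · rintro ⟨hp, h⟩
      refine ⟨hp, fun h0 => ?_, h⟩
      rw [h0] at h
      exact not_unit_zero hn h.2
  rw [h3, h4] at h2
  omega

lemma swapHS {C : AddSubgroup (V n)} {X : V n} (hX : X ∈ C) :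
    ((Hs C).filter (fun p => p + X ∈ Sg C)).card
      = ((Sg C).filter (fun p => p + X ∈ Hs C)).card := by
  apply Finset.card_bij (fun p _ => p + X)
  · intro p hp
    rw [Finset.mem_filter] at hp ⊢
    refine ⟨hp.2, ?_⟩
    rw [add_assoc, addself, add_zero]
    exact hp.1
  · intro p hp q hq h
    exact add_right_cancel h
  · intro q hq
    rw [Finset.mem_filter] at hq
    refine ⟨q + X, ?_, ?_⟩
    · rw [Finset.mem_filter]
      rw [add_assoc, addself, add_zero]
      exact ⟨hq.2, hq.1⟩
    · rw [add_assoc, addself, add_zero]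

lemma t0_card (T : Finset (V n)) {X : V n} :
    (T.filter (fun p => p + X = 0)).card = if X ∈ T then 1 else 0 := by
  have : T.filter (fun p => p + X = 0) = if X ∈ T then {X} else ∅ := by
    split_ifs with h
    · ext p
      simp only [Finset.mem_filter, Finset.mem_singleton]
      constructor
      · rintro ⟨hp, hp0⟩; exact madd_eq_zero_iff.1 hp0
      · intro hpX; rw [hpX]; exact ⟨h, addself X⟩
    · rw [Finset.eq_empty_iff_forall_notMem]
      intro p hp
      rw [Finset.mem_filter] at hp
      rw [madd_eq_zero_iff.1 hp.2] at hp
      exact h hp.1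
  rw [this]
  split_ifs <;> simp

lemma hP3 (hn : 2 ≤ n) : 3 ≤ (P n).card := by
  have := card_P (n := n)
  have h4 : 2 ^ 2 ≤ 2 ^ n := Nat.pow_le_pow_right (by norm_num) hn
  omega

lemma tHH_sing {C : AddSubgroup (V n)} (hn : 2 ≤ n)
    (hrank : ∀ A ∈ C, A ≠ 0 → n - 1 ≤ A.rank) (hcard : Nat.card C = 2 ^ (2 * n))
    {X : V n} (hX : X ∈ Sg C) :
    ((Hs C).filter (fun p => p + X ∈ Hs C)).card = 2 := by
  obtain ⟨hXC, hX0, hXu⟩ := mem_Sg.1 hX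
  have hsplitH := split3 hn (Hs C) (Finset.filter_subset _ _) hXC
  have hsplitS := split3 hn (Sg C) (Finset.filter_subset _ _) hXC
  rw [t0_card] at hsplitH hsplitS
  rw [if_neg (show ¬ (X ∈ Hs C) from fun h => hXu (mem_Hs.1 h).2)] at hsplitH
  rw [if_pos hX] at hsplitS
  rw [swapHS hXC] at hsplitH
  have hnss : ((Sg C).filter (fun s => s + X ∈ Sg C)).card
      = ((P n).card - 1) + ((P n).card - 1) * ((P n).card - 2) :=
    NSS_card_sing hn hrank hcard hX
  rw [hnss] at hsplitS
  rw [card_Hs hn hrank hcard] at hsplitH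
  rw [card_Sg hn hrank hcard] at hsplitS
  have hm := hP3 hn
  set m := (P n).card with hmdef
  have h1 : 1 ≤ m := by omega
  have h2 : 2 ≤ m := by omega
  zify [h1, h2] at hsplitH hsplitS
  have hring : ((m : ℤ) - 1) + ((m : ℤ) - 1) * ((m : ℤ) - 2)
      = (m : ℤ) * m - 2 * m + 1 := by ring
  have hgoal : (((Hs C).filter (fun p => p + X ∈ Hs C)).card : ℤ) = 2 := by linarith
  exact_mod_cast hgoal

lemma tHH_unit {C : AddSubgroup (V n)} (hn : 2 ≤ n)
    (hrank : ∀ A ∈ C, A ≠ 0 → n - 1 ≤ A.rank) (hcard : Nat.card C = 2 ^ (2 * n))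
    {X : V n} (hX : X ∈ Hs C) :
    ((Hs C).filter (fun p => p + X ∈ Hs C)).card = (P n).card - 1 := by
  obtain ⟨hXC, hXu⟩ := mem_Hs.1 hX
  have hsplitH := split3 hn (Hs C) (Finset.filter_subset _ _) hXC
  have hsplitS := split3 hn (Sg C) (Finset.filter_subset _ _) hXC
  rw [t0_card] at hsplitH hsplitS
  rw [if_pos hX] at hsplitH
  rw [if_neg (show ¬ (X ∈ Sg C) from fun h => (mem_Sg.1 h).2.2 hXu)] at hsplitS
  rw [swapHS hXC] at hsplitH
  have hnss : ((Sg C).filter (fun s => s + X ∈ Sg C)).card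
      = (P n).card * ((P n).card - 1) :=
    NSS_card_unit hn hrank hcard hX
  rw [hnss] at hsplitS
  rw [card_Hs hn hrank hcard] at hsplitH
  rw [card_Sg hn hrank hcard] at hsplitS
  have hm := hP3 hn
  set m := (P n).card with hmdef
  have h1 : 1 ≤ m := by omega
  zify [h1] at hsplitH hsplitS ⊢
  have hring : (m : ℤ) * ((m : ℤ) - 1) = (m : ℤ) * m - m := by ring
  linarith

variable {n : ℕ}

lemma mneg (A : V n) : -A = A := neg_eq_of_add_eq_zero_right (addself A)

noncomputable def Ss (C : AddSubgroup (V n)) : Finset (V n) :=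
  (Cs C).filter (fun A => A = 0 ∨ IsUnit A)

lemma mem_Ss {C : AddSubgroup (V n)} {A : V n} :
    A ∈ Ss C ↔ A ∈ C ∧ (A = 0 ∨ IsUnit A) := by simp [Ss, Cs]

noncomputable def Tx (C : AddSubgroup (V n)) (x : V n) : Finset (V n) :=
  (Ss C).filter (fun y => y + x ∈ Ss C)

lemma mem_Tx {C : AddSubgroup (V n)} {x y : V n} :
    y ∈ Tx C x ↔ y ∈ Ss C ∧ y + x ∈ Ss C := by simp [Tx]

lemma mem_Hs_of_mem_Tx {C : AddSubgroup (V n)} {x y : V n} (hy : y ∈ Tx C x)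
    (hy0 : y ≠ 0) : y ∈ Hs C := by
  obtain ⟨h1, -⟩ := mem_Tx.1 hy
  obtain ⟨hC, h⟩ := mem_Ss.1 h1
  exact mem_Hs.2 ⟨hC, h.resolve_left hy0⟩

lemma Hs_subset_Ss {C : AddSubgroup (V n)} {y : V n} (h : y ∈ Hs C) : y ∈ Ss C :=
  mem_Ss.2 ⟨(mem_Hs.1 h).1, Or.inr (mem_Hs.1 h).2⟩

lemma zero_mem_Ss {C : AddSubgroup (V n)} : (0 : V n) ∈ Ss C :=
  mem_Ss.2 ⟨zero_mem C, Or.inl rfl⟩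

lemma zero_mem_Tx {C : AddSubgroup (V n)} {x : V n} (hx : x ∈ Hs C) :
    (0 : V n) ∈ Tx C x :=
  mem_Tx.2 ⟨zero_mem_Ss, by rw [zero_add]; exact Hs_subset_Ss hx⟩

lemma self_mem_Tx {C : AddSubgroup (V n)} {x : V n} (hx : x ∈ Hs C) :
    x ∈ Tx C x :=
  mem_Tx.2 ⟨Hs_subset_Ss hx, by rw [addself]; exact zero_mem_Ss⟩

lemma card_Tx {C : AddSubgroup (V n)} (hn : 2 ≤ n)
    (hrank : ∀ A ∈ C, A ≠ 0 → n - 1 ≤ A.rank) (hcard : Nat.card C = 2 ^ (2 * n))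
    {x : V n} (hx : x ∈ Hs C) : (Tx C x).card = 2 ^ n := by
  have hx0 : x ≠ 0 := by
    rintro rfl
    exact not_unit_zero hn (mem_Hs.1 hx).2
  have hset : Tx C x = insert 0 (insert x ((Hs C).filter (fun y => y + x ∈ Hs C))) := by
    ext y
    simp only [Finset.mem_insert, Finset.mem_filter, mem_Tx]
    constructor
    · rintro ⟨h1, h2⟩
      by_cases hy0 : y = 0
      · exact Or.inl hy0
      by_cases hyx : y = x
      · exact Or.inr (Or.inl hyx)
      have hyH : y ∈ Hs C := by
        obtain ⟨hC, h⟩ := mem_Ss.1 h1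
        exact mem_Hs.2 ⟨hC, h.resolve_left hy0⟩
      have hyxH : y + x ∈ Hs C := by
        obtain ⟨hC, h⟩ := mem_Ss.1 h2
        exact mem_Hs.2 ⟨hC, h.resolve_left (fun h0 => hyx (madd_eq_zero_iff.1 h0))⟩
      exact Or.inr (Or.inr ⟨hyH, hyxH⟩)
    · rintro (rfl | rfl | ⟨h1, h2⟩)
      · exact ⟨zero_mem_Ss, by rw [zero_add]; exact Hs_subset_Ss hx⟩
      · exact ⟨Hs_subset_Ss hx, by rw [addself]; exact zero_mem_Ss⟩
      · exact ⟨Hs_subset_Ss h1, Hs_subset_Ss h2⟩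
  rw [hset]
  have hxnot : x ∉ (Hs C).filter (fun y => y + x ∈ Hs C) := by
    simp only [Finset.mem_filter, addself]
    rintro ⟨-, h⟩
    exact not_unit_zero hn (mem_Hs.1 h).2
  have h0not : (0 : V n) ∉ insert x ((Hs C).filter (fun y => y + x ∈ Hs C)) := by
    simp only [Finset.mem_insert, Finset.mem_filter]
    rintro (h | ⟨h, -⟩)
    · exact hx0 h.symm
    · exact not_unit_zero hn (mem_Hs.1 h).2
  rw [Finset.card_insert_of_notMem h0not, Finset.card_insert_of_notMem hxnot,
    tHH_unit hn hrank hcard hx]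
  have := card_P (n := n)
  have := hP3 (n := n) hn
  omega

lemma Tx_add_mem {C : AddSubgroup (V n)} (hn : 2 ≤ n)
    (hrank : ∀ A ∈ C, A ≠ 0 → n - 1 ≤ A.rank) (hcard : Nat.card C = 2 ^ (2 * n))
    {x : V n} (hx : x ∈ Hs C) {a b : V n} (ha : a ∈ Tx C x) (hb : b ∈ Tx C x) :
    a + b ∈ Tx C x := by
  have hx0 : x ≠ 0 := by
    rintro rfl
    exact not_unit_zero hn (mem_Hs.1 hx).2
  have hxC : x ∈ C := (mem_Hs.1 hx).1
  by_cases hab : a = b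
  · rw [hab, addself]; exact zero_mem_Tx hx
  by_cases ha0 : a = 0
  · rw [ha0, zero_add]; exact hb
  by_cases hb0 : b = 0
  · rw [hb0, add_zero]; exact ha
  have i1 : ∀ p q : V n, p + (p + q) = q := fun p q => by
    rw [← add_assoc, addself, zero_add]
  by_cases hax : a = x
  · rw [hax]
    refine mem_Tx.2 ⟨?_, ?_⟩
    · rw [add_comm]; exact (mem_Tx.1 hb).2
    · rw [add_comm x b, add_assoc, addself, add_zero]; exact (mem_Tx.1 hb).1
  by_cases hbx : b = x
  · rw [hbx]
    refine mem_Tx.2 ⟨?_, ?_⟩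
    · exact (mem_Tx.1 ha).2
    · rw [add_assoc, addself, add_zero]; exact (mem_Tx.1 ha).1
  -- main case
  have haH : a ∈ Hs C := mem_Hs_of_mem_Tx ha ha0
  have hbH : b ∈ Hs C := mem_Hs_of_mem_Tx hb hb0
  have haC : a ∈ C := (mem_Hs.1 haH).1
  have hbC : b ∈ C := (mem_Hs.1 hbH).1
  have haxH : a + x ∈ Hs C := by
    have h := (mem_Tx.1 ha).2
    obtain ⟨hC, h'⟩ := mem_Ss.1 h
    exact mem_Hs.2 ⟨hC, h'.resolve_left (fun h0 => hax (madd_eq_zero_iff.1 h0))⟩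
  have hbxH : b + x ∈ Hs C := by
    have h := (mem_Tx.1 hb).2
    obtain ⟨hC, h'⟩ := mem_Ss.1 h
    exact mem_Hs.2 ⟨hC, h'.resolve_left (fun h0 => hbx (madd_eq_zero_iff.1 h0))⟩
  have hane : a ≠ a + x := fun h => hx0 (left_eq_add.1 h)
  have habC : a + b ∈ C := add_mem haC hbC
  have hab0 : a + b ≠ 0 := fun h => hab (madd_eq_zero_iff.1 h)
  have habH : a + b ∈ Hs C := by
    by_contra hnot
    have hsing : a + b ∈ Sg C :=
      mem_Sg.2 ⟨habC, hab0, fun hu => hnot (mem_Hs.2 ⟨habC, hu⟩)⟩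
    have h2 := tHH_sing hn hrank hcard hsing
    have hbax : b ≠ a + x := by
      intro h
      apply (mem_Sg.1 hsing).2.2
      rw [h, i1]
      exact (mem_Hs.1 hx).2
    have hsub : ({a, b, a + x} : Finset (V n))
        ⊆ (Hs C).filter (fun p => p + (a + b) ∈ Hs C) := by
      rw [Finset.insert_subset_iff, Finset.insert_subset_iff,
        Finset.singleton_subset_iff]
      refine ⟨?_, ?_, ?_⟩
      · refine Finset.mem_filter.2 ⟨haH, ?_⟩
        rw [i1]; exact hbH
      · refine Finset.mem_filter.2 ⟨hbH, ?_⟩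
        have he : b + (a + b) = a := by rw [add_comm a b, i1]
        rw [he]; exact haH
      · refine Finset.mem_filter.2 ⟨haxH, ?_⟩
        have he : (a + x) + (a + b) = b + x := by
          rw [add_add_add_comm, addself, zero_add, add_comm]
        rw [he]; exact hbxH
    have hcard3 : ({a, b, a + x} : Finset (V n)).card = 3 := by
      rw [Finset.card_insert_of_notMem, Finset.card_insert_of_notMem,
        Finset.card_singleton]
      · simp only [Finset.mem_singleton]
        exact hbax
      · simp only [Finset.mem_insert, Finset.mem_singleton]
        push_neg
        exact ⟨hab, hane⟩
    have hle := Finset.card_le_card hsub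
    rw [hcard3, h2] at hle
    omega
  have habxC : a + b + x ∈ C := add_mem habC hxC
  have habxS : a + b + x ∈ Ss C := by
    by_cases h0 : a + b + x = 0
    · rw [h0]; exact zero_mem_Ss
    by_contra hnot
    have hsing : a + b + x ∈ Sg C :=
      mem_Sg.2 ⟨habxC, h0, fun hu => hnot (mem_Ss.2 ⟨habxC, Or.inr hu⟩)⟩
    have h2 := tHH_sing hn hrank hcard hsing
    have hbax : b ≠ a + x := by
      intro h
      apply h0
      rw [h, add_right_comm]
      exact addself _
    have hsub : ({a, b, a + x} : Finset (V n))
        ⊆ (Hs C).filter (fun p => p + (a + b + x) ∈ Hs C) := by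
      rw [Finset.insert_subset_iff, Finset.insert_subset_iff,
        Finset.singleton_subset_iff]
      refine ⟨?_, ?_, ?_⟩
      · refine Finset.mem_filter.2 ⟨haH, ?_⟩
        have he : a + (a + b + x) = b + x := by rw [← add_assoc, i1]
        rw [he]; exact hbxH
      · refine Finset.mem_filter.2 ⟨hbH, ?_⟩
        have he : b + (a + b + x) = a + x := by
          rw [← add_assoc, show b + (a + b) = a from by rw [add_comm a b, i1]]
        rw [he]; exact haxH
      · refine Finset.mem_filter.2 ⟨haxH, ?_⟩
        have he : (a + x) + (a + b + x) = b := by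
          rw [add_right_comm a b x, i1]
        rw [he]; exact hbH
    have hcard3 : ({a, b, a + x} : Finset (V n)).card = 3 := by
      rw [Finset.card_insert_of_notMem, Finset.card_insert_of_notMem,
        Finset.card_singleton]
      · simp only [Finset.mem_singleton]
        exact hbax
      · simp only [Finset.mem_insert, Finset.mem_singleton]
        push_neg
        exact ⟨hab, hane⟩
    have hle := Finset.card_le_card hsub
    rw [hcard3, h2] at hle
    omega
  exact mem_Tx.2 ⟨mem_Ss.2 ⟨habC, Or.inr (mem_Hs.1 habH).2⟩, habxS⟩

variable {n : ℕ}

noncomputable def TG (C : AddSubgroup (V n)) (hn : 2 ≤ n)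
    (hrank : ∀ A ∈ C, A ≠ 0 → n - 1 ≤ A.rank) (hcard : Nat.card C = 2 ^ (2 * n))
    {x : V n} (hx : x ∈ Hs C) : AddSubgroup (V n) where
  carrier := ↑(Tx C x)
  add_mem' := fun {a b} ha hb => by
    simp only [Finset.mem_coe] at *
    exact Tx_add_mem hn hrank hcard hx ha hb
  zero_mem' := by
    simp only [Finset.mem_coe]
    exact zero_mem_Tx hx
  neg_mem' := fun {a} ha => by rw [mneg]; exact ha

lemma mem_TG {C : AddSubgroup (V n)} {hn : 2 ≤ n}
    {hrank : ∀ A ∈ C, A ≠ 0 → n - 1 ≤ A.rank} {hcard : Nat.card C = 2 ^ (2 * n)}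
    {x y : V n} {hx : x ∈ Hs C} :
    y ∈ TG C hn hrank hcard hx ↔ y ∈ Tx C x := Iff.rfl

lemma coe_TG {C : AddSubgroup (V n)} {hn : 2 ≤ n}
    {hrank : ∀ A ∈ C, A ≠ 0 → n - 1 ≤ A.rank} {hcard : Nat.card C = 2 ^ (2 * n)}
    {x : V n} {hx : x ∈ Hs C} :
    (TG C hn hrank hcard hx : Set (V n)) = ↑(Tx C x) := rfl

lemma TG_subset {C : AddSubgroup (V n)} {hn : 2 ≤ n}
    {hrank : ∀ A ∈ C, A ≠ 0 → n - 1 ≤ A.rank} {hcard : Nat.card C = 2 ^ (2 * n)}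
    {x : V n} {hx : x ∈ Hs C} :
    (TG C hn hrank hcard hx : Set (V n)) ⊆ (C : Set (V n)) := by
  intro a ha
  rw [coe_TG, Finset.mem_coe] at ha
  exact (mem_Ss.1 (mem_Tx.1 ha).1).1

lemma TG_card {C : AddSubgroup (V n)} (hn : 2 ≤ n)
    (hrank : ∀ A ∈ C, A ≠ 0 → n - 1 ≤ A.rank) (hcard : Nat.card C = 2 ^ (2 * n))
    {x : V n} (hx : x ∈ Hs C) :
    Nat.card (TG C hn hrank hcard hx) = 2 ^ n := by
  have h1 : Nat.card (TG C hn hrank hcard hx)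
      = Nat.card ((Tx C x : Finset (V n)) : Set (V n)) := rfl
  rw [h1, Nat.card_coe_set_eq, Set.ncard_coe_finset]
  exact card_Tx hn hrank hcard hx

lemma TG_units {C : AddSubgroup (V n)} {hn : 2 ≤ n}
    {hrank : ∀ A ∈ C, A ≠ 0 → n - 1 ≤ A.rank} {hcard : Nat.card C = 2 ^ (2 * n)}
    {x : V n} {hx : x ∈ Hs C} :
    ∀ A ∈ TG C hn hrank hcard hx, A ≠ 0 → IsUnit A := by
  intro A hA hA0
  exact (mem_Hs.1 (mem_Hs_of_mem_Tx (mem_TG.1 hA) hA0)).2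

lemma spread_eq {C : AddSubgroup (V n)} (hn : 2 ≤ n)
    (hrank : ∀ A ∈ C, A ≠ 0 → n - 1 ≤ A.rank) (hcard : Nat.card C = 2 ^ (2 * n))
    (S : AddSubgroup (V n)) (hsub : (S : Set (V n)) ⊆ (C : Set (V n)))
    (hScard : Nat.card S = 2 ^ n) (hunits : ∀ A ∈ S, A ≠ 0 → IsUnit A)
    {z : V n} (hz : z ∈ S) (hz0 : z ≠ 0) :
    (S : Set (V n)) = ↑(Tx C z) := by
  have hzH : z ∈ Hs C := mem_Hs.2 ⟨hsub hz, hunits z hz hz0⟩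
  apply Set.eq_of_subset_of_ncard_le
  · intro a haS
    have haC : a ∈ C := hsub haS
    have haSs : a ∈ Ss C := by
      refine mem_Ss.2 ⟨haC, ?_⟩
      by_cases ha0 : a = 0
      · exact Or.inl ha0
      · exact Or.inr (hunits a haS ha0)
    have hazS : a + z ∈ S := add_mem haS hz
    have hazSs : a + z ∈ Ss C := by
      refine mem_Ss.2 ⟨hsub hazS, ?_⟩
      by_cases haz0 : a + z = 0
      · exact Or.inl haz0
      · exact Or.inr (hunits _ hazS haz0)
    rw [Finset.mem_coe]
    exact mem_Tx.2 ⟨haSs, hazSs⟩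
  · rw [Set.ncard_coe_finset, card_Tx hn hrank hcard hzH]
    have : (S : Set (V n)).ncard = Nat.card S := (Nat.card_coe_set_eq _).symm
    rw [this, hScard]
  · exact (Tx C z : Finset (V n)).finite_toSet

lemma exists_nonzero (hn : 1 ≤ n) (S : AddSubgroup (V n))
    (hScard : Nat.card S = 2 ^ n) : ∃ z, z ∈ S ∧ z ≠ (0 : V n) := by
  by_contra h
  push_neg at h
  have hsub : (S : Set (V n)) ⊆ {0} := fun a ha => h a ha
  have hle := Set.ncard_le_ncard hsub (Set.finite_singleton 0)
  rw [Set.ncard_singleton] at hle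
  have he : (S : Set (V n)).ncard = Nat.card S := (Nat.card_coe_set_eq _).symm
  rw [he, hScard] at hle
  have : 2 ≤ 2 ^ n := by
    calc 2 = 2 ^ 1 := (pow_one 2).symm
    _ ≤ 2 ^ n := Nat.pow_le_pow_right (by norm_num) hn
  omega

variable {n : ℕ}

theorem main_n2 (hn2 : 2 ≤ n) (C : AddSubgroup (V n))
    (hcard : Nat.card C = 2 ^ (2 * n))
    (hrank : ∀ A ∈ C, A ≠ 0 → n - 1 ≤ A.rank) :
    ∃ S₁ S₂ : AddSubgroup (V n),
      S₁ ≠ S₂ ∧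
      ((S₁ : Set (V n)) ⊆ (C : Set (V n)) ∧
        Nat.card S₁ = 2 ^ n ∧ ∀ A ∈ S₁, A ≠ 0 → IsUnit A) ∧
      ((S₂ : Set (V n)) ⊆ (C : Set (V n)) ∧
        Nat.card S₂ = 2 ^ n ∧ ∀ A ∈ S₂, A ≠ 0 → IsUnit A) ∧
      ∀ S : AddSubgroup (V n),
        ((S : Set (V n)) ⊆ (C : Set (V n)) ∧
          Nat.card S = 2 ^ n ∧ ∀ A ∈ S, A ≠ 0 → IsUnit A) →
        S = S₁ ∨ S = S₂ := by
  have hm3 := hP3 (n := n) hn2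
  have hP := card_P (n := n)
  -- pick x₀ in Hs
  have hHcard : (Hs C).card = 2 * (P n).card := card_Hs hn2 hrank hcard
  have hHne : (Hs C).Nonempty := by
    rw [← Finset.card_pos, hHcard]; omega
  obtain ⟨x₀, hx₀⟩ := hHne
  -- pick y₀ in Hs \ Tx C x₀
  have hTxcard := card_Tx hn2 hrank hcard hx₀
  have hy₀ex : ∃ y₀, y₀ ∈ Hs C ∧ y₀ ∉ Tx C x₀ := by
    by_contra h
    push_neg at h
    have hsub : Hs C ⊆ Tx C x₀ := fun y hy => h y hy
    have := Finset.card_le_card hsub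
    rw [hHcard, hTxcard] at this
    omega
  obtain ⟨y₀, hy₀H, hy₀not⟩ := hy₀ex
  set S₁ := TG C hn2 hrank hcard hx₀ with hS₁
  set S₂ := TG C hn2 hrank hcard hy₀H with hS₂
  -- disjointness of distinct T's on nonzero elements
  have hdisj : ∀ w : V n, w ≠ 0 → w ∈ Tx C x₀ → w ∈ Tx C y₀ → False := by
    intro w hw0 hw1 hw2
    have he1 : (S₁ : Set (V n)) = ↑(Tx C w) :=
      spread_eq hn2 hrank hcard S₁ TG_subset (TG_card hn2 hrank hcard hx₀) TG_units
        (mem_TG.2 hw1) hw0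
    have he2 : (S₂ : Set (V n)) = ↑(Tx C w) :=
      spread_eq hn2 hrank hcard S₂ TG_subset (TG_card hn2 hrank hcard hy₀H) TG_units
        (mem_TG.2 hw2) hw0
    have heq : (Tx C x₀ : Set (V n)) = ↑(Tx C y₀) := by
      rw [← coe_TG (hn := hn2) (hrank := hrank) (hcard := hcard) (hx := hx₀),
        ← coe_TG (hn := hn2) (hrank := hrank) (hcard := hcard) (hx := hy₀H), ← hS₁, ← hS₂, he1, he2]
    apply hy₀not
    have hy : y₀ ∈ (Tx C y₀ : Set (V n)) := Finset.mem_coe.2 (self_mem_Tx hy₀H)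
    rw [← heq] at hy
    exact Finset.mem_coe.1 hy
  -- covering : Hs = (Tx x₀).erase 0 ∪ (Tx y₀).erase 0
  have hcover : ((Tx C x₀).erase 0) ∪ ((Tx C y₀).erase 0) = Hs C := by
    apply Finset.eq_of_subset_of_card_le
    · intro z hz
      rw [Finset.mem_union, Finset.mem_erase, Finset.mem_erase] at hz
      rcases hz with ⟨hz0, hz⟩ | ⟨hz0, hz⟩
      · exact mem_Hs_of_mem_Tx hz hz0
      · exact mem_Hs_of_mem_Tx hz hz0
    · have hdisj' : Disjoint ((Tx C x₀).erase 0) ((Tx C y₀).erase 0) := by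
        rw [Finset.disjoint_left]
        intro w hw1 hw2
        rw [Finset.mem_erase] at hw1 hw2
        exact hdisj w hw1.1 hw1.2 hw2.2
      rw [Finset.card_union_of_disjoint hdisj',
        Finset.card_erase_of_mem (zero_mem_Tx hx₀),
        Finset.card_erase_of_mem (zero_mem_Tx hy₀H), hTxcard,
        card_Tx hn2 hrank hcard hy₀H, hHcard]
      omega
  refine ⟨S₁, S₂, ?_, ⟨TG_subset, TG_card hn2 hrank hcard hx₀, TG_units⟩,
    ⟨TG_subset, TG_card hn2 hrank hcard hy₀H, TG_units⟩, ?_⟩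
  · intro h
    apply hy₀not
    have : y₀ ∈ S₂ := mem_TG.2 (self_mem_Tx hy₀H)
    rw [← h] at this
    exact mem_TG.1 this
  · rintro S ⟨hsub, hScard, hunits⟩
    obtain ⟨z, hzS, hz0⟩ := exists_nonzero (le_trans (by norm_num) hn2) S hScard
    have hzH : z ∈ Hs C := mem_Hs.2 ⟨hsub hzS, hunits z hzS hz0⟩
    have heS : (S : Set (V n)) = ↑(Tx C z) :=
      spread_eq hn2 hrank hcard S hsub hScard hunits hzS hz0
    by_cases hz1 : z ∈ Tx C x₀
    · left
      apply SetLike.ext'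
      rw [heS]
      have : (S₁ : Set (V n)) = ↑(Tx C z) :=
        spread_eq hn2 hrank hcard S₁ TG_subset (TG_card hn2 hrank hcard hx₀) TG_units
          (mem_TG.2 hz1) hz0
      rw [this]
    · right
      have hz2 : z ∈ Tx C y₀ := by
        have hzin : z ∈ ((Tx C x₀).erase 0) ∪ ((Tx C y₀).erase 0) := by
          rw [hcover]; exact hzH
        rw [Finset.mem_union, Finset.mem_erase, Finset.mem_erase] at hzin
        rcases hzin with ⟨-, h⟩ | ⟨-, h⟩
        · exact absurd h hz1
        · exact h
      apply SetLike.ext'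
      rw [heS]
      have : (S₂ : Set (V n)) = ↑(Tx C z) :=
        spread_eq hn2 hrank hcard S₂ TG_subset (TG_card hn2 hrank hcard hy₀H) TG_units
          (mem_TG.2 hz2) hz0
      rw [this]


end BMRD


/-- A binary additive MRD code in `M_n(F₂)` with minimum distance
`n - 1` contains precisely two semifield spread sets. -/
theorem binary_MRD_contains_exactly_two_semifield_spread_sets (n : ℕ) (hn : 1 ≤ n)
    (C : AddSubgroup (Matrix (Fin n) (Fin n) (ZMod 2)))
    (hcard : Nat.card C = 2 ^ (2 * n))
    (hrank : ∀ A ∈ C, A ≠ 0 → n - 1 ≤ A.rank) :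
    ∃ S₁ S₂ : AddSubgroup (Matrix (Fin n) (Fin n) (ZMod 2)),
      S₁ ≠ S₂ ∧
      ((S₁ : Set (Matrix (Fin n) (Fin n) (ZMod 2))) ⊆ (C : Set (Matrix (Fin n) (Fin n) (ZMod 2))) ∧
        Nat.card S₁ = 2 ^ n ∧ ∀ A ∈ S₁, A ≠ 0 → IsUnit A) ∧
      ((S₂ : Set (Matrix (Fin n) (Fin n) (ZMod 2))) ⊆ (C : Set (Matrix (Fin n) (Fin n) (ZMod 2))) ∧
        Nat.card S₂ = 2 ^ n ∧ ∀ A ∈ S₂, A ≠ 0 → IsUnit A) ∧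
      ∀ S : AddSubgroup (Matrix (Fin n) (Fin n) (ZMod 2)),
        ((S : Set (Matrix (Fin n) (Fin n) (ZMod 2))) ⊆ (C : Set (Matrix (Fin n) (Fin n) (ZMod 2))) ∧
          Nat.card S = 2 ^ n ∧ ∀ A ∈ S, A ≠ 0 → IsUnit A) →
        S = S₁ ∨ S = S₂ := by
  rcases eq_or_lt_of_le hn with h1 | h2
  · exfalso
    have hle : Nat.card C ≤ Nat.card (Matrix (Fin n) (Fin n) (ZMod 2)) :=
      Nat.card_le_card_of_injective _ Subtype.val_injective
    subst h1
    have h2' : Nat.card (Matrix (Fin 1) (Fin 1) (ZMod 2)) = 2 := by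
      have : Nat.card (Matrix (Fin 1) (Fin 1) (ZMod 2))
          = Nat.card ((Fin 1) → (Fin 1) → ZMod 2) := rfl
      rw [this]
      simp [Nat.card_eq_fintype_card]
    rw [hcard, h2'] at hle
    norm_num at hle
  · exact BMRD.main_n2 h2 C hcard hrank
end

section
/- Let n ≥ 1 and let D be a set of n-dimensional F₂-subspaces of the vector space F₂^(2n) such that any two distinct members of D intersect trivially, with |D| = 2^n − 1. Then D is contained in an n-spread of F₂^(2n): there exists a set D' ⊇ D of n-dimensional subspaces, pairwise intersecting trivially, with |D'| = 2^n + 1, so that every nonzero vector of F₂^(2n) lies in exactly one member of D'. -/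
/-!
A vector is uncovered if it is `0` or lies in no member of the partial spread `P`. Two members
`U ≠ W` satisfy `U ⊕ W = V`, so every coset `v + U` with `v ∉ U` meets every other member; over
`F₂` with `|P| = 2^n - 1` such a coset therefore holds at most two uncovered vectors, while
`2^(n+1) - 2` nonzero vectors are uncovered in total.

For `0 ≠ u ∈ U ∈ P` the sets `{a | a, a + u uncovered}` are disjoint for distinct `u`, and each
has at least two elements; counting them inside the uncovered vectors, each has exactly two.
Hence for an uncovered `x ≠ 0` the set `{a | a, a + x uncovered}` is closed under addition
(were `a + b` covered, `a`, `b`, `a + x` would be three points of the set for `u = a + b`), so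
it is a subspace meeting every member of `P` trivially, and it has at least `2^n` elements.
Two such subspaces, for uncovered `x`, `y` with `x + y` covered, are disjoint and complete `P`
to `2^n + 1` members, which by counting cover every nonzero vector.
-/

open Module Set

namespace Set

variable {ι α : Type*} {t : Set ι} {s : ι → Set α} {c : ℕ}

lemma ncard_biUnion_le_mul (ht : t.Finite) (h : ∀ i ∈ t, (s i).ncard ≤ c) :
    (⋃ i ∈ t, s i).ncard ≤ t.ncard * c := by
  have hu := ht.ncard_biUnion_le s
  rw [finsum_mem_eq_finite_toFinset_sum _ ht] at hu
  rw [ncard_eq_toFinset_card t ht, ← smul_eq_mul]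
  exact hu.trans (Finset.sum_le_card_nsmul _ _ _ fun i hi => h i (ht.mem_toFinset.mp hi))

lemma mul_le_ncard_biUnion (ht : t.Finite) (hs : ∀ i ∈ t, (s i).Finite)
    (hd : t.PairwiseDisjoint s) (h : ∀ i ∈ t, c ≤ (s i).ncard) :
    t.ncard * c ≤ (⋃ i ∈ t, s i).ncard := by
  rw [ht.ncard_biUnion hs hd, finsum_mem_eq_finite_toFinset_sum _ ht,
    ncard_eq_toFinset_card t ht, ← smul_eq_mul]
  exact Finset.card_nsmul_le_sum _ _ _ fun i hi => h i (ht.mem_toFinset.mp hi)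

end Set

variable {K V : Type*} [Field K] [AddCommGroup V] [Module K V]

structure IsPartialSpread (n : ℕ) (P : Set (Submodule K V)) : Prop where
  finrank_eq : ∀ U ∈ P, finrank K U = n
  pairwise_disjoint : P.Pairwise Disjoint

def uncovered (P : Set (Submodule K V)) : Set V := {v | ∀ U ∈ P, v ∈ U → v = 0}

lemma zero_mem_uncovered (P : Set (Submodule K V)) : (0 : V) ∈ uncovered P :=
  fun _ _ _ => rfl

lemma ncard_coe_submodule [Finite V] (U : Submodule K V) :
    (U : Set V).ncard = Nat.card K ^ finrank K U := by
  rw [← Nat.card_coe_set_eq, SetLike.coe_sort_coe, Module.natCard_eq_pow_finrank (K := K)]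

lemma notMem_uncovered_iff {P : Set (Submodule K V)} {v : V} :
    v ∉ uncovered P ↔ ∃ U ∈ P, v ∈ U ∧ v ≠ 0 := by
  simp [uncovered]

lemma disjoint_of_coe_subset_uncovered {P : Set (Submodule K V)} {T U : Submodule K V}
    (hT : (T : Set V) ⊆ uncovered P) (hU : U ∈ P) : Disjoint T U :=
  Submodule.disjoint_def.mpr fun _ hvT hvU => hT hvT U hU hvU

lemma existsUnique_mem_of_uncovered_eq_singleton_zero {P : Set (Submodule K V)}
    (hP : P.Pairwise Disjoint) (h : uncovered P = {0}) {v : V} (hv : v ≠ 0) :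
    ∃! U, U ∈ P ∧ v ∈ U := by
  obtain ⟨U, hU, hvU, -⟩ := notMem_uncovered_iff.mp (h ▸ hv : v ∉ uncovered P)
  refine ⟨U, ⟨hU, hvU⟩, fun W ⟨hW, hvW⟩ => ?_⟩
  by_contra hne
  exact hv (Submodule.disjoint_def.mp (hP hW hU hne) v hvW hvU)

namespace IsPartialSpread

variable {n : ℕ} {P : Set (Submodule K V)}

lemma ncard_uncovered_add [Finite V] (hP : IsPartialSpread n P) :
    (uncovered P).ncard + P.ncard * (Nat.card K ^ n - 1) = Nat.card V := by
  have hcover : (⋃ U ∈ P, (U : Set V) \ {0}) = (uncovered P)ᶜ := by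
    ext v
    simp [uncovered, and_left_comm]
  have hsize : ∀ U ∈ P, ((U : Set V) \ {0}).ncard = Nat.card K ^ n - 1 := fun U hU => by
    rw [ncard_sdiff_singleton_of_mem U.zero_mem, ncard_coe_submodule, hP.finrank_eq U hU]
  have hdisj : P.PairwiseDisjoint fun U : Submodule K V => (U : Set V) \ {0} :=
    fun U hU W hW h => disjoint_left.mpr fun v hvU hvW =>
      hvU.2 (Submodule.disjoint_def.mp (hP.pairwise_disjoint hU hW h) v hvU.1 hvW.1)
  have hunion : (⋃ U ∈ P, (U : Set V) \ {0}).ncard = P.ncard * (Nat.card K ^ n - 1) :=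
    le_antisymm (ncard_biUnion_le_mul P.toFinite fun U hU => (hsize U hU).le)
      (mul_le_ncard_biUnion P.toFinite (fun _ _ => toFinite _) hdisj fun U hU => (hsize U hU).ge)
  rw [← hunion, hcover, ncard_add_ncard_compl]

lemma sup_eq_top [FiniteDimensional K V] (hP : IsPartialSpread n P)
    (hV : finrank K V = 2 * n) {U W : Submodule K V} (hU : U ∈ P) (hW : W ∈ P) (h : U ≠ W) :
    U ⊔ W = ⊤ :=
  Submodule.eq_top_of_disjoint U W (by rw [hV, hP.finrank_eq U hU, hP.finrank_eq W hW, two_mul])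
    (hP.pairwise_disjoint hU hW h)

lemma ncard_uncovered_coset_add_ncard_le [Finite V] (hP : IsPartialSpread n P)
    (hV : finrank K V = 2 * n) {U : Submodule K V} (hU : U ∈ P) {v : V} (hv : v ∉ U) :
    {a | a ∈ uncovered P ∧ a - v ∈ U}.ncard + P.ncard ≤ Nat.card K ^ n + 1 := by
  have hmeet : ∀ W ∈ P \ {U}, ∃ w ∈ W, w ≠ 0 ∧ w - v ∈ U := by
    rintro W ⟨hW, hWU⟩
    have hvUW : v ∈ U ⊔ W := hP.sup_eq_top hV hU hW (Ne.symm hWU) ▸ Submodule.mem_top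
    obtain ⟨u, hu, w, hw, rfl⟩ := Submodule.mem_sup.mp hvUW
    refine ⟨w, hw, ?_, by simpa using U.neg_mem hu⟩
    rintro rfl
    exact hv (by simpa using hu)
  choose! w hwW hw0 hwU using hmeet
  have hcoset : {a | a - v ∈ U}.ncard = Nat.card K ^ n := by
    have : {a | a - v ∈ U} = (· + v) '' U := by
      ext a
      simp [sub_eq_add_neg]
    rw [this, ncard_image_of_injective _ (add_left_injective v), ncard_coe_submodule,
      hP.finrank_eq U hU]
  have hinj : InjOn w (P \ {U}) := by
    intro W₁ h₁ W₂ h₂ he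
    by_contra hne
    exact hw0 W₁ h₁ (Submodule.disjoint_def.mp (hP.pairwise_disjoint h₁.1 h₂.1 hne) _
      (hwW W₁ h₁) (he ▸ hwW W₂ h₂))
  have hdisj : Disjoint {a | a ∈ uncovered P ∧ a - v ∈ U} (w '' (P \ {U})) := by
    rw [disjoint_right]
    rintro _ ⟨W, hW, rfl⟩ ⟨ha, -⟩
    exact hw0 W hW (ha W hW.1 (hwW W hW))
  have hsub : {a | a ∈ uncovered P ∧ a - v ∈ U} ∪ w '' (P \ {U}) ⊆ {a | a - v ∈ U} := by
    rintro a (⟨-, ha⟩ | ⟨W, hW, rfl⟩)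
    exacts [ha, hwU W hW]
  have hle := ncard_le_ncard hsub
  rw [ncard_union_eq hdisj, hinj.ncard_image, ncard_sdiff_singleton_of_mem hU,
    hcoset] at hle
  have : 0 < P.ncard := (ncard_pos P.toFinite).mpr ⟨U, hU⟩
  omega

lemma insert_of_forall_disjoint (hP : IsPartialSpread n P) {T : Submodule K V}
    (hT : finrank K T = n) (hTP : ∀ U ∈ P, Disjoint T U) : IsPartialSpread n (insert T P) where
  finrank_eq := forall_mem_insert.mpr ⟨hT, hP.finrank_eq⟩
  pairwise_disjoint := hP.pairwise_disjoint.insert fun U hU _ => ⟨hTP U hU, (hTP U hU).symm⟩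

lemma uncovered_eq_singleton_zero [Finite V] (hP : IsPartialSpread n P)
    (hV : finrank K V = 2 * n) (hcard : P.ncard = Nat.card K ^ n + 1) : uncovered P = {0} := by
  have h := hP.ncard_uncovered_add
  rw [hcard, Module.natCard_eq_pow_finrank (K := K) (V := V), hV, pow_mul', ← one_pow 2,
    ← Nat.sq_sub_sq, one_pow] at h
  have : 1 ≤ (uncovered P).ncard := (ncard_pos (toFinite _)).mpr ⟨0, zero_mem_uncovered P⟩
  refine (eq_of_subset_of_ncard_le (singleton_subset_iff.mpr (zero_mem_uncovered P)) ?_).symm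
  rw [ncard_singleton]
  omega

end IsPartialSpread

section Binary

variable {V : Type*} [AddCommGroup V] [Module (ZMod 2) V] {n : ℕ}
  {P : Set (Submodule (ZMod 2) V)}

open ZModModule

def bothUncovered (P : Set (Submodule (ZMod 2) V)) (v : V) : Set V :=
  {a | a ∈ uncovered P ∧ a + v ∈ uncovered P}

lemma bothUncovered_subset_uncovered (v : V) : bothUncovered P v ⊆ uncovered P :=
  fun _ h => h.1

lemma self_mem_bothUncovered {x : V} (hx : x ∈ uncovered P) : x ∈ bothUncovered P x :=
  ⟨hx, by rw [add_self]; exact zero_mem_uncovered P⟩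

variable [Finite V]

namespace IsPartialSpread

lemma ncard_uncovered_of_ncard_eq (hP : IsPartialSpread n P) (hV : finrank (ZMod 2) V = 2 * n)
    (hcard : P.ncard = 2 ^ n - 1) : (uncovered P).ncard = 2 * 2 ^ n - 1 := by
  have h := hP.ncard_uncovered_add
  rw [hcard, Module.natCard_eq_pow_finrank (K := ZMod 2) (V := V), hV, Nat.card_zmod,
    pow_mul'] at h
  have : 1 ≤ 2 ^ n := Nat.one_le_two_pow
  zify [this, (by omega : 1 ≤ 2 * 2 ^ n)] at h ⊢
  linear_combination h

lemma ncard_uncovered_coset_le_two (hP : IsPartialSpread n P) (hV : finrank (ZMod 2) V = 2 * n)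
    (hcard : P.ncard = 2 ^ n - 1) {U : Submodule (ZMod 2) V} (hU : U ∈ P) {v : V}
    (hv : v ∉ U) : {a | a ∈ uncovered P ∧ a + v ∈ U}.ncard ≤ 2 := by
  have h := hP.ncard_uncovered_coset_add_ncard_le hV hU hv
  simp only [sub_eq_add, Nat.card_zmod, hcard] at h
  have : 1 ≤ 2 ^ n := Nat.one_le_two_pow
  omega

lemma two_le_ncard_bothUncovered (hP : IsPartialSpread n P) (hV : finrank (ZMod 2) V = 2 * n)
    (hcard : P.ncard = 2 ^ n - 1) {U : Submodule (ZMod 2) V} (hU : U ∈ P) {u : V}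
    (hu : u ∈ U) (hu0 : u ≠ 0) : 2 ≤ (bothUncovered P u).ncard := by
  have hsub : uncovered P ⊆
      {0} ∪ bothUncovered P u ∪ ⋃ W ∈ P \ {U}, {a | a ∈ uncovered P ∧ a + u ∈ W} := by
    intro a ha
    by_cases ha0 : a = 0
    · exact Or.inl (Or.inl ha0)
    by_cases hau : a + u ∈ uncovered P
    · exact Or.inl (Or.inr ⟨ha, hau⟩)
    obtain ⟨W, hW, hauW, -⟩ := notMem_uncovered_iff.mp hau
    refine Or.inr (mem_biUnion ⟨hW, ?_⟩ ⟨ha, hauW⟩)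
    rintro rfl
    exact ha0 (ha W hW (by simpa using W.sub_mem hauW hu))
  have hrest := ncard_biUnion_le_mul (P \ {U}).toFinite fun W hW =>
    hP.ncard_uncovered_coset_le_two hV hcard hW.1 fun huW => hu0 <| Submodule.disjoint_def.mp
      (hP.pairwise_disjoint hU hW.1 fun h => hW.2 h.symm) u hu huW
  have := (ncard_le_ncard hsub).trans ((ncard_union_le _ _).trans
    (Nat.add_le_add_right (ncard_union_le _ _) _))
  rw [hP.ncard_uncovered_of_ncard_eq hV hcard, ncard_singleton] at this
  rw [ncard_sdiff_singleton_of_mem hU, hcard] at hrest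
  have : 0 < P.ncard := (ncard_pos P.toFinite).mpr ⟨U, hU⟩
  omega

lemma pairwiseDisjoint_bothUncovered (hP : IsPartialSpread n P)
    (hV : finrank (ZMod 2) V = 2 * n) (hcard : P.ncard = 2 ^ n - 1) {U : Submodule (ZMod 2) V}
    (hU : U ∈ P) : ((U : Set V) \ {0}).PairwiseDisjoint (bothUncovered P) := by
  rintro u₁ ⟨hu₁, hu₁0 : u₁ ≠ 0⟩ u₂ ⟨hu₂, hu₂0 : u₂ ≠ 0⟩ hne
  refine disjoint_left.mpr fun a ⟨ha, ha₁⟩ ⟨_, ha₂⟩ => ?_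
  have haU : a ∉ U := by
    intro haU
    obtain rfl := ha U hU haU
    exact hu₁0 (by simpa using ha₁ U hU (by simpa using hu₁))
  refine (hP.ncard_uncovered_coset_le_two hV hcard hU haU).not_gt
    ((two_lt_ncard_iff (toFinite _)).mpr ⟨a, a + u₁, a + u₂, ?_, ?_, ?_, ?_, ?_, ?_⟩)
  · exact ⟨ha, by rw [add_self]; exact U.zero_mem⟩
  · exact ⟨ha₁, by rwa [add_right_comm, add_self, zero_add]⟩
  · exact ⟨ha₂, by rwa [add_right_comm, add_self, zero_add]⟩
  · simpa using hu₁0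
  · simpa using hu₂0
  · simpa using hne

lemma ncard_bothUncovered_le_two (hP : IsPartialSpread n P) (hV : finrank (ZMod 2) V = 2 * n)
    (hcard : P.ncard = 2 ^ n - 1) {U : Submodule (ZMod 2) V} (hU : U ∈ P) {u : V}
    (hu : u ∈ U) (hu0 : u ≠ 0) : (bothUncovered P u).ncard ≤ 2 := by
  set A := (U : Set V) \ {0}
  have huA : u ∈ A := ⟨hu, hu0⟩
  have hA := hP.pairwiseDisjoint_bothUncovered hV hcard hU
  have hsub : (⋃ u' ∈ A, bothUncovered P u') ⊆ uncovered P \ {0} := by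
    refine iUnion₂_subset fun u' ⟨hu', hu'0⟩ a ⟨ha, ha'⟩ => ⟨ha, ?_⟩
    rintro rfl
    exact hu'0 (by simpa using ha' U hU (by simpa using hu'))
  have hsplit : (⋃ u' ∈ A, bothUncovered P u') =
      bothUncovered P u ∪ ⋃ u' ∈ A \ {u}, bothUncovered P u' := by
    rw [← biUnion_insert, insert_sdiff_singleton, insert_eq_of_mem huA]
  have hdisj : Disjoint (bothUncovered P u) (⋃ u' ∈ A \ {u}, bothUncovered P u') :=
    disjoint_iUnion₂_right.mpr fun u' hu' => hA huA hu'.1 (Ne.symm hu'.2)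
  have hrest := mul_le_ncard_biUnion (A \ {u}).toFinite (fun _ _ => toFinite _)
    (hA.subset sdiff_subset) fun u' hu' =>
      hP.two_le_ncard_bothUncovered hV hcard hU hu'.1.1 hu'.1.2
  have := ncard_le_ncard hsub
  rw [hsplit, ncard_union_eq hdisj, ncard_sdiff_singleton_of_mem (zero_mem_uncovered P),
    hP.ncard_uncovered_of_ncard_eq hV hcard] at this
  rw [ncard_sdiff_singleton_of_mem huA, ncard_sdiff_singleton_of_mem U.zero_mem,
    ncard_coe_submodule, hP.finrank_eq U hU, Nat.card_zmod] at hrest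
  omega

lemma add_mem_uncovered (hP : IsPartialSpread n P) (hV : finrank (ZMod 2) V = 2 * n)
    (hcard : P.ncard = 2 ^ n - 1) {x a b : V} (hx : x ∈ uncovered P) (hx0 : x ≠ 0)
    (ha : a ∈ bothUncovered P x) (hb : b ∈ bothUncovered P x) : a + b ∈ uncovered P := by
  by_contra hab
  obtain ⟨U, hU, habU, hab0⟩ := notMem_uncovered_iff.mp hab
  refine (hP.ncard_bothUncovered_le_two hV hcard hU habU hab0).not_gt
    ((two_lt_ncard_iff (toFinite _)).mpr ⟨a, b, a + x, ?_, ?_, ?_, ?_, ?_, ?_⟩)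
  · exact ⟨ha.1, by rw [← add_assoc, add_self, zero_add]; exact hb.1⟩
  · exact ⟨hb.1, by rw [add_left_comm, add_self, add_zero]; exact ha.1⟩
  · exact ⟨ha.2, by rw [add_add_add_comm, add_self, zero_add, add_comm]; exact hb.2⟩
  · rintro rfl
    exact hab0 (add_self a)
  · simpa using hx0
  · rintro rfl
    rw [← add_assoc, add_self, zero_add] at habU
    exact hx0 (hx U hU habU)

lemma exists_submodule_coe_eq_bothUncovered (hP : IsPartialSpread n P)
    (hV : finrank (ZMod 2) V = 2 * n) (hcard : P.ncard = 2 ^ n - 1) {x : V}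
    (hx : x ∈ uncovered P) (hx0 : x ≠ 0) :
    ∃ T : Submodule (ZMod 2) V, (T : Set V) = bothUncovered P x :=
  ⟨AddSubgroup.toZModSubmodule 2
    { carrier := bothUncovered P x
      add_mem' := fun {a b} ha hb => ⟨hP.add_mem_uncovered hV hcard hx hx0 ha hb, by
        rw [add_assoc]
        refine hP.add_mem_uncovered hV hcard hx hx0 ha ⟨hb.2, ?_⟩
        rw [add_assoc, add_self, add_zero]
        exact hb.1⟩
      zero_mem' := ⟨zero_mem_uncovered P, by rwa [zero_add]⟩
      neg_mem' := fun {a} ha => by rwa [ZModModule.neg_eq_self] }, rfl⟩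

lemma le_ncard_bothUncovered (hP : IsPartialSpread n P) (hV : finrank (ZMod 2) V = 2 * n)
    (hcard : P.ncard = 2 ^ n - 1) {x : V} (hx : x ∈ uncovered P) (hx0 : x ≠ 0) :
    2 ^ n ≤ (bothUncovered P x).ncard := by
  have hsub : uncovered P ⊆
      bothUncovered P x ∪ ⋃ U ∈ P, {a | a ∈ uncovered P ∧ a + x ∈ U} \ {x} := by
    intro a ha
    by_cases hax : a + x ∈ uncovered P
    · exact Or.inl ⟨ha, hax⟩
    obtain ⟨U, hU, haxU, hax0⟩ := notMem_uncovered_iff.mp hax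
    refine Or.inr (mem_biUnion hU ⟨⟨ha, haxU⟩, ?_⟩)
    rintro rfl
    exact hax0 (add_self a)
  have hrest := ncard_biUnion_le_mul (c := 1) P.toFinite
      (s := fun U => {a | a ∈ uncovered P ∧ a + x ∈ U} \ {x}) fun U hU => by
    have := hP.ncard_uncovered_coset_le_two hV hcard hU fun h => hx0 (hx U hU h)
    have hxU : x ∈ {a | a ∈ uncovered P ∧ a + x ∈ U} :=
      ⟨hx, by rw [add_self]; exact U.zero_mem⟩
    rw [ncard_sdiff_singleton_of_mem hxU]
    omega
  have := (ncard_le_ncard hsub).trans (ncard_union_le _ _)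
  rw [hP.ncard_uncovered_of_ncard_eq hV hcard] at this
  rw [hcard] at hrest
  omega

lemma finrank_eq_of_coe_eq_bothUncovered (hn : 1 ≤ n) (hP : IsPartialSpread n P)
    (hV : finrank (ZMod 2) V = 2 * n) (hcard : P.ncard = 2 ^ n - 1) {x : V}
    (hx : x ∈ uncovered P) (hx0 : x ≠ 0) {T : Submodule (ZMod 2) V}
    (hT : (T : Set V) = bothUncovered P x) : finrank (ZMod 2) T = n := by
  obtain ⟨U, hU⟩ := nonempty_of_ncard_ne_zero (s := P) (by
    have := Nat.one_lt_two_pow (Nat.one_le_iff_ne_zero.mp hn)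
    omega)
  have hle := Submodule.finrank_add_finrank_le_of_disjoint
    (disjoint_of_coe_subset_uncovered (hT.trans_subset (bothUncovered_subset_uncovered x)) hU)
  rw [hP.finrank_eq U hU, hV] at hle
  have hge := hP.le_ncard_bothUncovered hV hcard hx hx0
  rw [← hT, ncard_coe_submodule, Nat.card_zmod] at hge
  have := (Nat.pow_le_pow_iff_right (le_refl 2)).mp hge
  omega

lemma add_mem_uncovered_of_mem_inter (hP : IsPartialSpread n P)
    (hV : finrank (ZMod 2) V = 2 * n) (hcard : P.ncard = 2 ^ n - 1) {x y a : V}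
    (hx : x ∈ uncovered P) (hy : y ∈ uncovered P) (ha0 : a ≠ 0)
    (hax : a ∈ bothUncovered P x) (hay : a ∈ bothUncovered P y) : x + y ∈ uncovered P := by
  have := hP.add_mem_uncovered hV hcard hax.1 ha0 (a := a + x) (b := a + y)
    ⟨hax.2, by rwa [add_right_comm, add_self, zero_add]⟩
    ⟨hay.2, by rwa [add_right_comm, add_self, zero_add]⟩
  rwa [add_add_add_comm, add_self, zero_add] at this

theorem exists_superset_ncard_eq (hn : 1 ≤ n) (hP : IsPartialSpread n P)
    (hV : finrank (ZMod 2) V = 2 * n) (hcard : P.ncard = 2 ^ n - 1) :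
    ∃ P' ⊇ P, IsPartialSpread n P' ∧ P'.ncard = 2 ^ n + 1 := by
  have hunc := hP.ncard_uncovered_of_ncard_eq hV hcard
  have hq := Nat.one_lt_two_pow (Nat.one_le_iff_ne_zero.mp hn)
  obtain ⟨x, hx, hx0⟩ := exists_ne_of_one_lt_ncard (by omega : 1 < (uncovered P).ncard) 0
  obtain ⟨T₁, hT₁⟩ := hP.exists_submodule_coe_eq_bothUncovered hV hcard hx hx0
  have hfin₁ := hP.finrank_eq_of_coe_eq_bothUncovered hn hV hcard hx hx0 hT₁
  obtain ⟨y, hy, hyx⟩ : ∃ y ∈ uncovered P, y ∉ bothUncovered P x := by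
    refine exists_mem_notMem_of_ncard_lt_ncard ?_
    rw [← hT₁, ncard_coe_submodule, hfin₁, Nat.card_zmod, hunc]
    omega
  have hy0 : y ≠ 0 := by
    rintro rfl
    exact hyx ⟨zero_mem_uncovered P, by rwa [zero_add]⟩
  obtain ⟨T₂, hT₂⟩ := hP.exists_submodule_coe_eq_bothUncovered hV hcard hy hy0
  have hfin₂ := hP.finrank_eq_of_coe_eq_bothUncovered hn hV hcard hy hy0 hT₂
  have hT₁₂ : Disjoint T₁ T₂ := Submodule.disjoint_def.mpr fun a ha₁ ha₂ => by
    rw [← SetLike.mem_coe, hT₁] at ha₁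
    rw [← SetLike.mem_coe, hT₂] at ha₂
    by_contra ha0
    exact hyx ⟨hy, add_comm x y ▸
      hP.add_mem_uncovered_of_mem_inter hV hcard hx hy ha0 ha₁ ha₂⟩
  have hxT₁ : x ∈ (T₁ : Set V) := hT₁ ▸ self_mem_bothUncovered hx
  have hyT₂ : y ∈ (T₂ : Set V) := hT₂ ▸ self_mem_bothUncovered hy
  have hT₂P : T₂ ∉ P := fun h => hy0 (hy T₂ h hyT₂)
  have hT₁P : T₁ ∉ insert T₂ P := by
    rintro (rfl | h)
    exacts [hyx (hT₁ ▸ hyT₂), hx0 (hx T₁ h hxT₁)]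
  have hT₁unc := hT₁.trans_subset (bothUncovered_subset_uncovered x)
  have hT₂unc := hT₂.trans_subset (bothUncovered_subset_uncovered y)
  have hP₂ := hP.insert_of_forall_disjoint hfin₂ fun _ => disjoint_of_coe_subset_uncovered hT₂unc
  have hP₁ := hP₂.insert_of_forall_disjoint hfin₁ <| forall_mem_insert.mpr
    ⟨hT₁₂, fun _ => disjoint_of_coe_subset_uncovered hT₁unc⟩
  refine ⟨_, (subset_insert _ _).trans (subset_insert _ _), hP₁, ?_⟩
  rw [ncard_insert_of_notMem hT₁P, ncard_insert_of_notMem hT₂P, hcard]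
  omega

end IsPartialSpread

end Binary

/-- A partial `n`-spread of `F₂^(2n)` of size `2^n - 1` extends to an
`n`-spread (of size `2^n + 1`, covering every nonzero vector exactly once). -/
theorem binary_partial_spread_extends_to_spread (n : ℕ) (hn : 1 ≤ n)
    (D : Set (Submodule (ZMod 2) (Fin (2 * n) → ZMod 2)))
    (hdim : ∀ U ∈ D, Module.finrank (ZMod 2) U = n)
    (hmeet : ∀ U ∈ D, ∀ W ∈ D, U ≠ W → U ⊓ W = ⊥)
    (hsize : D.ncard = 2 ^ n - 1) :
    ∃ D' : Set (Submodule (ZMod 2) (Fin (2 * n) → ZMod 2)),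
      D ⊆ D' ∧
      (∀ U ∈ D', Module.finrank (ZMod 2) U = n) ∧
      (∀ U ∈ D', ∀ W ∈ D', U ≠ W → U ⊓ W = ⊥) ∧
      D'.ncard = 2 ^ n + 1 ∧
      ∀ v : Fin (2 * n) → ZMod 2, v ≠ 0 → ∃! U, U ∈ D' ∧ v ∈ U := by
  have hD : IsPartialSpread n D :=
    ⟨hdim, fun U hU W hW h => disjoint_iff.mpr (hmeet U hU W hW h)⟩
  have hV : finrank (ZMod 2) (Fin (2 * n) → ZMod 2) = 2 * n := finrank_fin_fun _
  obtain ⟨D', hDD', hD', hcard⟩ := hD.exists_superset_ncard_eq hn hV hsize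
  have hspread := hD'.uncovered_eq_singleton_zero hV (by rw [hcard, Nat.card_zmod])
  refine ⟨D', hDD', hD'.finrank_eq, fun U hU W hW h => ?_, hcard, fun v hv => ?_⟩
  · exact disjoint_iff.mp (hD'.pairwise_disjoint hU hW h)
  · exact existsUnique_mem_of_uncovered_eq_singleton_zero hD'.pairwise_disjoint hspread hv
end

section
/- Let q be a prime power and let t, N be positive integers with t ≤ N. There exists a t-spread of the vector space F_q^N — that is, a set of t-dimensional subspaces, pairwise intersecting trivially, whose union contains every nonzero vector of F_q^N — if and only if t divides N. -/
open Polynomial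

private lemma segre_poly_aux {R : Type*} [CommRing R] (m : ℕ) (hm : 1 ≤ m) :
    (X ^ m - X : R[X]) = X * (X ^ (m - 1) - 1) := by
  obtain ⟨a, rfl⟩ : ∃ a, m = a + 1 := ⟨m - 1, by omega⟩
  rw [Nat.add_sub_cancel, pow_succ]
  ring

private lemma segre_nat_dvd_aux (q t : ℕ) (hq : 2 ≤ q) (ht : 1 ≤ t) :
    ∀ n, q ^ t - 1 ∣ q ^ n - 1 → t ∣ n := by
  intro n
  induction n using Nat.strong_induction_on with
  | _ n ih =>
    intro h
    rcases lt_or_ge n t with hlt | hle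
    · have h1 : q ^ n < q ^ t := Nat.pow_lt_pow_right hq hlt
      have h2 : 1 ≤ q ^ n := Nat.one_le_pow _ _ (by omega)
      have h0 : q ^ n - 1 = 0 := Nat.eq_zero_of_dvd_of_lt h (by omega)
      have hn0 : n = 0 := by
        by_contra hn
        have := Nat.le_self_pow hn q
        omega
      simp [hn0]
    · have hq1 : 1 ≤ q ^ t := Nat.one_le_pow _ _ (by omega)
      have hq2 : 1 ≤ q ^ (n - t) := Nat.one_le_pow _ _ (by omega)
      have hq3 : 1 ≤ q ^ n := Nat.one_le_pow _ _ (by omega)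
      have hmul : q ^ (n - t) * q ^ t = q ^ n := by
        rw [← pow_add]; congr 1; omega
      have hmulz : (q : ℤ) ^ (n - t) * (q : ℤ) ^ t = (q : ℤ) ^ n := by
        exact_mod_cast hmul
      have key : q ^ n - 1 = (q ^ t - 1) * q ^ (n - t) + (q ^ (n - t) - 1) := by
        zify [hq1, hq2, hq3]
        linear_combination -hmulz
      rw [key] at h
      have h4 : q ^ t - 1 ∣ q ^ (n - t) - 1 :=
        (Nat.dvd_add_right (Dvd.intro _ rfl)).mp h
      obtain ⟨c, hc⟩ := ih (n - t) (by omega) h4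
      exact ⟨c + 1, by rw [Nat.mul_add, ← hc]; omega⟩

private lemma segre_forward_count (F : Type*) [Field F] [Fintype F] (t N : ℕ)
    (D : Set (Submodule F (Fin N → F)))
    (hdim : ∀ U ∈ D, Module.finrank F U = t)
    (hint : ∀ U ∈ D, ∀ W ∈ D, U ≠ W → U ⊓ W = ⊥)
    (hcov : ∀ v : Fin N → F, v ≠ 0 → ∃ U ∈ D, v ∈ U) :
    Fintype.card F ^ t - 1 ∣ Fintype.card F ^ N - 1 := by
  classical
  haveI : Finite (Submodule F (Fin N → F)) :=
    Finite.of_injective (fun U => (U : Set (Fin N → F))) SetLike.coe_injective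
  haveI : Fintype D := Fintype.ofFinite D
  have huniq : ∀ v : Fin N → F, v ≠ 0 → ∀ U ∈ D, ∀ W ∈ D, v ∈ U → v ∈ W → U = W := by
    intro v hv U hU W hW hvU hvW
    by_contra hne
    have hb := hint U hU W hW hne
    have : v ∈ (⊥ : Submodule F (Fin N → F)) := hb ▸ Submodule.mem_inf.mpr ⟨hvU, hvW⟩
    exact hv ((Submodule.mem_bot F).mp this)
  have hf' : ∀ v : {v : Fin N → F // v ≠ 0}, ∃ U ∈ D, (v : Fin N → F) ∈ U :=
    fun v => hcov v v.2
  choose fU hfD hfm using hf'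
  let f : {v : Fin N → F // v ≠ 0} → D := fun v => ⟨fU v, hfD v⟩
  have hcard1 : Fintype.card {v : Fin N → F // v ≠ 0} = Fintype.card F ^ N - 1 := by
    have h1 : Fintype.card {v : Fin N → F // v = 0} = 1 := Fintype.card_subtype_eq 0
    have h2 := Fintype.card_subtype_compl (fun v : Fin N → F => v = 0)
    have h3 : Fintype.card (Fin N → F) = Fintype.card F ^ N := by
      simp [Fintype.card_fun]
    rw [h1, h3] at h2
    exact h2
  have key := Finset.card_eq_sum_card_fiberwise
    (f := f) (s := (Finset.univ : Finset {v : Fin N → F // v ≠ 0}))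
    (t := (Finset.univ : Finset D)) (fun x _ => Finset.mem_univ _)
  have hfiber : ∀ U : D, (Finset.univ.filter fun v => f v = U).card
      = Fintype.card F ^ t - 1 := by
    intro U
    rw [← Fintype.card_subtype]
    have e : {v : {v : Fin N → F // v ≠ 0} // f v = U} ≃
        {x : (U : Submodule F (Fin N → F)) // x ≠ 0} :=
      { toFun := fun v => ⟨⟨v.1.1, by
          have := hfm v.1
          have hv2 : fU v.1 = (U : Submodule F (Fin N → F)) :=
            congrArg Subtype.val v.2
          rwa [hv2] at this⟩, by
          intro hx
          exact v.1.2 (congrArg Subtype.val hx)⟩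
        invFun := fun x => ⟨⟨x.1.1, by
          intro hx
          exact x.2 (Subtype.ext hx)⟩, by
          apply Subtype.ext
          exact huniq x.1.1 (fun hx => x.2 (Subtype.ext hx)) _ (hfD _) _ U.2
            (hfm _) x.1.2⟩
        left_inv := fun v => by ext; rfl
        right_inv := fun x => by ext; rfl }
    rw [Fintype.card_congr e]
    have h1 : Fintype.card {x : (U : Submodule F (Fin N → F)) // x = 0} = 1 :=
      Fintype.card_subtype_eq 0
    have h2 := Fintype.card_subtype_compl
      (fun x : (U : Submodule F (Fin N → F)) => x = 0)
    rw [h1] at h2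
    have h3 : Fintype.card (U : Submodule F (Fin N → F)) = Fintype.card F ^ t := by
      rw [Module.card_eq_pow_finrank (K := F), hdim U.1 U.2]
    rw [h3] at h2
    exact h2
  rw [Finset.card_univ, hcard1] at key
  rw [key]
  refine Dvd.intro (Fintype.card D) ?_
  rw [Finset.sum_congr rfl (fun U _ => hfiber U), Finset.sum_const, Finset.card_univ,
    smul_eq_mul, mul_comm]

set_option maxHeartbeats 1000000 in
/-- **Segre.** A `t`-spread of `F_q^N` exists if and only if `t` divides `N`. -/
theorem segre_spread_exists_iff_dvd (F : Type*) [Field F] [Fintype F]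
    (t N : ℕ) (ht : 1 ≤ t) (hN : 1 ≤ N) (htN : t ≤ N) :
    (∃ D : Set (Submodule F (Fin N → F)),
      (∀ U ∈ D, Module.finrank F U = t) ∧
      (∀ U ∈ D, ∀ W ∈ D, U ≠ W → U ⊓ W = ⊥) ∧
      (∀ v : Fin N → F, v ≠ 0 → ∃ U ∈ D, v ∈ U)) ↔ t ∣ N := by
  classical
  constructor
  · rintro ⟨D, hdim, hint, hcov⟩
    have hq : 2 ≤ Fintype.card F := Fintype.one_lt_card
    exact segre_nat_dvd_aux (Fintype.card F) t hq ht N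
      (segre_forward_count F t N D hdim hint hcov)
  · rintro ⟨k, hk⟩
    have hk1 : 1 ≤ k := by
      rcases Nat.eq_zero_or_pos k with h | h
      · subst h; simp at hk; omega
      · exact h
    obtain ⟨p, hp⟩ := CharP.exists F
    haveI : CharP F p := hp
    obtain ⟨n, hpp, hFcard⟩ := FiniteField.card F p
    haveI : Fact p.Prime := ⟨hpp⟩
    letI : Algebra (ZMod p) F := ZMod.algebra F p
    set K := GaloisField p ((n : ℕ) * t) with hKdef
    haveI : Fintype K := Fintype.ofFinite K
    have hnt : (n : ℕ) * t ≠ 0 := by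
      have := n.2
      positivity
    have hKcard : Fintype.card K = p ^ ((n : ℕ) * t) := by
      have := GaloisField.card p ((n : ℕ) * t) hnt
      rwa [Nat.card_eq_fintype_card] at this
    haveI : IsSplittingField (ZMod p) F (X ^ p ^ (n : ℕ) - X) :=
      FiniteField.isSplittingField_of_card_eq _ _ hFcard
    -- the polynomial `X ^ p ^ n - X` splits in `K`
    have hp1 : 1 ≤ p ^ (n : ℕ) := Nat.one_le_pow _ _ hpp.pos
    have hp2 : 1 ≤ p ^ ((n : ℕ) * t) := Nat.one_le_pow _ _ hpp.pos
    obtain ⟨c, hc⟩ : p ^ (n : ℕ) - 1 ∣ p ^ ((n : ℕ) * t) - 1 :=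
      by simpa only [one_pow, pow_mul] using Nat.sub_dvd_pow_sub_pow (p ^ (n : ℕ)) 1 t
    have hdvd : (X ^ p ^ (n : ℕ) - X : (ZMod p)[X]) ∣ (X ^ p ^ ((n : ℕ) * t) - X) := by
      have e1 := segre_poly_aux (R := ZMod p) (p ^ (n : ℕ)) hp1
      have e2 : (X ^ p ^ ((n : ℕ) * t) - X : (ZMod p)[X])
          = X * ((X ^ (p ^ (n : ℕ) - 1)) ^ c - 1) := by
        rw [segre_poly_aux (R := ZMod p) (p ^ ((n : ℕ) * t)) hp2, hc, pow_mul]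
      rw [e1, e2]
      exact mul_dvd_mul_left _ (sub_one_dvd_pow_sub_one _ _)
    have hsplits : Splits ((X ^ p ^ (n : ℕ) - X : (ZMod p)[X]).map (algebraMap (ZMod p) K)) := by
      have hbig : Splits ((X ^ p ^ ((n : ℕ) * t) - X : (ZMod p)[X]).map (algebraMap (ZMod p) K)) := by
        have := FiniteField.splits_X_pow_card_sub_X (K := K) (p := p)
        rwa [hKcard] at this
      refine Splits.of_dvd hbig ?_ (Polynomial.map_dvd _ hdvd)
      exact Polynomial.map_ne_zero <| FiniteField.X_pow_card_sub_X_ne_zero _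
        (Nat.one_lt_pow hnt hpp.one_lt)
    let emb : F →ₐ[ZMod p] K := IsSplittingField.lift F (X ^ p ^ (n : ℕ) - X) hsplits
    letI : Algebra F K := (emb.toRingHom).toAlgebra
    have hrank : Module.finrank F K = t := by
      have h1 : Fintype.card K = Fintype.card F ^ Module.finrank F K :=
        Module.card_eq_pow_finrank (K := F)
      rw [hKcard, hFcard, ← pow_mul] at h1
      have h2 : (n : ℕ) * t = (n : ℕ) * Module.finrank F K :=
        Nat.pow_right_injective hpp.two_le h1
      exact (Nat.eq_of_mul_eq_mul_left n.2 h2).symm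
    -- the model space
    set V := (Fin k → K) with hVdef
    have hrankV : Module.finrank F V = N := by
      rw [← Module.finrank_mul_finrank F K V, hrank, Module.finrank_fin_fun, ← hk]
    let e : (Fin N → F) ≃ₗ[F] V :=
      LinearEquiv.ofFinrankEq _ _ (by rw [Module.finrank_fin_fun, hrankV])
    -- the spread
    refine ⟨{ U | ∃ x : V, x ≠ 0 ∧
      U = Submodule.map (e.symm : V →ₗ[F] (Fin N → F))
        ((Submodule.span K {x}).restrictScalars F) }, ?_, ?_, ?_⟩
    · rintro U ⟨x, hx, rfl⟩
      rw [LinearEquiv.finrank_map_eq]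
      rw [LinearEquiv.finrank_eq ((Submodule.restrictScalarsEquiv F K V
        (Submodule.span K {x})).restrictScalars F)]
      rw [← Module.finrank_mul_finrank F K (Submodule.span K {x}),
        finrank_span_singleton hx, hrank, mul_one]
    · rintro U ⟨x, hx, rfl⟩ W ⟨y, hy, rfl⟩ hne
      have hxy : Submodule.span K {x} ≠ Submodule.span K {y} := by
        intro hEq
        exact hne (by rw [hEq])
      have hbot : Submodule.span K {x} ⊓ Submodule.span K {y} = ⊥ := by
        rw [eq_bot_iff]
        intro z hz
        rw [Submodule.mem_inf] at hz
        rw [Submodule.mem_bot]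
        by_contra hz0
        have h1 : Submodule.span K {z} = Submodule.span K {x} :=
          Submodule.eq_of_le_of_finrank_eq
            ((Submodule.span_le).mpr (Set.singleton_subset_iff.mpr hz.1))
            (by rw [finrank_span_singleton hz0, finrank_span_singleton hx])
        have h2 : Submodule.span K {z} = Submodule.span K {y} :=
          Submodule.eq_of_le_of_finrank_eq
            ((Submodule.span_le).mpr (Set.singleton_subset_iff.mpr hz.2))
            (by rw [finrank_span_singleton hz0, finrank_span_singleton hy])
        exact hxy (h1 ▸ h2)
      have hrs : (Submodule.span K {x}).restrictScalars F ⊓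
          (Submodule.span K {y}).restrictScalars F
          = ((Submodule.span K {x} ⊓ Submodule.span K {y}).restrictScalars F) := by
        ext v
        simp [Submodule.restrictScalars_mem, Submodule.mem_inf]
      rw [← Submodule.map_inf (e.symm : V →ₗ[F] (Fin N → F)) e.symm.injective,
        hrs, hbot, Submodule.restrictScalars_bot, Submodule.map_bot]
    · intro v hv
      have hx : e v ≠ 0 := by
        intro h
        exact hv (by simpa using (LinearEquiv.map_eq_zero_iff e).mp h)
      refine ⟨_, ⟨e v, hx, rfl⟩, ?_⟩
      refine Submodule.mem_map.mpr ⟨e v, ?_, ?_⟩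
      · rw [Submodule.restrictScalars_mem]
        exact Submodule.mem_span_singleton_self _
      · exact e.symm_apply_apply v
end

section
/- Let q be a prime power, let m ≤ n and 1 ≤ d ≤ m, and let C be an additive subgroup of the F_q-linear maps from F_q^m to F_q^n with |C| = q^(n(m−d+1)) such that every nonzero element of C has rank at least d. For any (m−d)-dimensional F_q-subspace U of F_q^m, the set C_U = {X ∈ C : U ⊆ ker(X)} satisfies |C_U| = q^n. -/
/-!
Evaluation at a vector `v ∉ U` is injective on `C_U`: a nonzero element of `C_U` vanishing at `v`
would vanish on the `(m - d + 1)`-dimensional space `U ⊔ ⟨v⟩` and so have rank below `d`.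
Hence `|C_U| ≤ q^n`. Conversely `C_U` is the kernel of restricting the elements of `C` to `U`,
whose image has at most `|Hom(U, F^n)| = q^(n(m-d))` elements, so `|C_U| ≥ |C| / q^(n(m-d)) = q^n`.
-/

open Module LinearMap

section

variable {K V W : Type*} [Field K] [AddCommGroup V] [Module K V] [AddCommGroup W] [Module K W]

theorem LinearMap.finrank_range_add_finrank_lt_of_le_ker [FiniteDimensional K V]
    {X : V →ₗ[K] W} {U : Submodule K V} (hU : U ≤ ker X) {v : V} (hv : v ∉ U) (hXv : X v = 0) :
    finrank K (range X) + finrank K U < finrank K V := by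
  have hlt : U < U ⊔ K ∙ v :=
    left_lt_sup.mpr fun h => hv (h (Submodule.mem_span_singleton_self v))
  have hle : U ⊔ K ∙ v ≤ ker X := sup_le hU ((Submodule.span_singleton_le_iff_mem v _).mpr hXv)
  have := (Submodule.finrank_lt_finrank_of_lt hlt).trans_le (Submodule.finrank_mono hle)
  have := finrank_range_add_finrank_ker X
  omega

theorem LinearMap.mem_ker_domRestrict' {U : Submodule K V} {X : V →ₗ[K] W} :
    X ∈ ker (domRestrict' U) ↔ U ≤ ker X := by
  simp [LinearMap.ext_iff, SetLike.le_def]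

theorem AddSubgroup.card_le_card_ker_inf_mul {G H : Type*} [AddGroup G] [AddGroup H] [Finite H]
    (f : G →+ H) (C : AddSubgroup G) :
    Nat.card C ≤ Nat.card ↥(f.ker ⊓ C) * Nat.card H := by
  have hcard : Nat.card ↥(f.ker ⊓ C) * f.ker.relIndex C = Nat.card C := by
    rw [← inf_relIndex_right, ← relIndex_bot_left, ← relIndex_bot_left,
      relIndex_mul_relIndex _ _ _ bot_le inf_le_right]
  rw [← hcard, relIndex_ker]
  exact Nat.mul_le_mul_left _ (Nat.card_le_card_of_injective _ Subtype.val_injective)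

def AddSubgroup.subcode (C : AddSubgroup (V →ₗ[K] W)) (U : Submodule K V) :
    AddSubgroup (V →ₗ[K] W) :=
  (domRestrict' U).toAddMonoidHom.ker ⊓ C

namespace AddSubgroup

variable {C : AddSubgroup (V →ₗ[K] W)} {U : Submodule K V}

theorem mem_subcode {X : V →ₗ[K] W} : X ∈ C.subcode U ↔ X ∈ C ∧ U ≤ ker X := by
  rw [subcode, mem_inf, AddMonoidHom.mem_ker, LinearMap.toAddMonoidHom_coe,
    ← LinearMap.mem_ker, mem_ker_domRestrict', and_comm]

theorem card_le_card_subcode_mul [Finite (U →ₗ[K] W)] :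
    Nat.card C ≤ Nat.card (C.subcode U) * Nat.card (U →ₗ[K] W) :=
  card_le_card_ker_inf_mul _ C

variable [FiniteDimensional K V] {d : ℕ}

theorem eq_zero_of_mem_subcode_of_apply_eq_zero
    (hrank : ∀ X ∈ C, X ≠ 0 → d ≤ finrank K (range X)) (hU : finrank K V ≤ finrank K U + d)
    {X : V →ₗ[K] W} (hX : X ∈ C.subcode U) {v : V} (hv : v ∉ U) (hXv : X v = 0) : X = 0 := by
  obtain ⟨hXC, hXU⟩ := mem_subcode.mp hX
  by_contra hX0
  have := finrank_range_add_finrank_lt_of_le_ker hXU hv hXv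
  have := hrank X hXC hX0
  omega

theorem card_subcode_le [Finite W]
    (hrank : ∀ X ∈ C, X ≠ 0 → d ≤ finrank K (range X)) (hU : finrank K V ≤ finrank K U + d)
    (hU_ne_top : U ≠ ⊤) : Nat.card (C.subcode U) ≤ Nat.card W := by
  obtain ⟨v, -, hv⟩ := SetLike.exists_of_lt hU_ne_top.lt_top
  refine Nat.card_le_card_of_injective (fun X : C.subcode U => (X : V →ₗ[K] W) v) ?_
  rintro ⟨X, hX⟩ ⟨Y, hY⟩ hXY
  have hXY' : X - Y = 0 := eq_zero_of_mem_subcode_of_apply_eq_zero hrank hU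
    (sub_mem hX hY) hv (by simpa [sub_eq_zero] using hXY)
  exact Subtype.ext (sub_eq_zero.mp hXY')

end AddSubgroup

end

theorem MRD_subcode_card_general (F : Type*) [Field F] [Fintype F]
    (m n d : ℕ) (hd1 : 1 ≤ d) (hdm : d ≤ m)
    (C : AddSubgroup ((Fin m → F) →ₗ[F] (Fin n → F)))
    (hcard : Nat.card C = Fintype.card F ^ (n * (m - d + 1)))
    (hrank : ∀ X ∈ C, X ≠ 0 → d ≤ Module.finrank F (LinearMap.range X))
    (U : Submodule F (Fin m → F)) (hU : Module.finrank F U = m - d) :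
    Nat.card {X : (Fin m → F) →ₗ[F] (Fin n → F) // X ∈ C ∧ U ≤ LinearMap.ker X}
      = Fintype.card F ^ n := by
  set q := Fintype.card F
  have hV : finrank F (Fin m → F) = m := finrank_fin_fun F
  have hW : Nat.card (Fin n → F) = q ^ n := by simp [q]
  have hHom : Nat.card (U →ₗ[F] (Fin n → F)) = q ^ (n * (m - d)) := by
    rw [natCard_eq_pow_finrank (K := F), finrank_linearMap, hU, finrank_fin_fun,
      Nat.card_eq_fintype_card, mul_comm]
  have : Finite (U →ₗ[F] (Fin n → F)) := Module.finite_of_finite F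
  have hU_ne_top : U ≠ ⊤ := fun h => by
    rw [h, finrank_top, hV] at hU; omega
  rw [← Nat.card_congr (Equiv.subtypeEquivRight fun _ => AddSubgroup.mem_subcode)]
  refine le_antisymm (hW ▸ C.card_subcode_le hrank (by omega) hU_ne_top) ?_
  have hlower := C.card_le_card_subcode_mul (U := U)
  rw [hcard, hHom, Nat.mul_add, mul_one, pow_add, mul_comm (Nat.card _)] at hlower
  exact Nat.le_of_mul_le_mul_left hlower (by positivity)

/-- In an additive MRD code `C` of minimum distance `d` in the space of
`F_q`-linear maps `F_q^m → F_q^n` (`m ≤ n`), for every `(m-d)`-dimensional subspace `U`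
of `F_q^m` the subcode `C_U = {X ∈ C : U ⊆ ker X}` has exactly `q^n` elements. -/
theorem MRD_subcode_card (F : Type*) [Field F] [Fintype F]
    (m n d : ℕ) (hmn : m ≤ n) (hd1 : 1 ≤ d) (hdm : d ≤ m)
    (C : AddSubgroup ((Fin m → F) →ₗ[F] (Fin n → F)))
    (hcard : Nat.card C = Fintype.card F ^ (n * (m - d + 1)))
    (hrank : ∀ X ∈ C, X ≠ 0 → d ≤ Module.finrank F (LinearMap.range X))
    (U : Submodule F (Fin m → F)) (hU : Module.finrank F U = m - d) :
    Nat.card {X : (Fin m → F) →ₗ[F] (Fin n → F) // X ∈ C ∧ U ≤ LinearMap.ker X}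
      = Fintype.card F ^ n :=
  MRD_subcode_card_general F m n d hd1 hdm C hcard hrank U hU
end

section
/- Let q be a prime, let m ≤ n and 1 ≤ d ≤ m, and suppose there exists an F_q-subspace C of the m×n matrices over F_q with dim C = n(m−d+1) in which every nonzero matrix has rank at least d. Then in the F_q-vector space F_q^(n(m−d+1)) there exists a partial n-spread of size equal to the Gaussian binomial coefficient [m choose d]_q, i.e., a collection of [m choose d]_q subspaces, each of F_q-dimension n, which pairwise intersect trivially. -/
open Module LinearMap

section Aux

variable {K : Type*} [Field K]

/-- The linear map sending `X ∈ C` to the restriction of `vecMul · X` to `U`. -/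
private def psiMap {m n : ℕ} (C : Submodule K (Matrix (Fin m) (Fin n) K))
    (U : Submodule K (Fin m → K)) :
    ↥C →ₗ[K] (↥U →ₗ[K] (Fin n → K)) where
  toFun X := ((X : Matrix (Fin m) (Fin n) K).vecMulLinear).domRestrict U
  map_add' X Y := by
    ext u j
    simp [Matrix.vecMul_add]
  map_smul' c X := by
    ext u j
    simp [Matrix.vecMul, dotProduct, Finset.mul_sum, mul_left_comm]

private lemma psiMap_apply {m n : ℕ} (C : Submodule K (Matrix (Fin m) (Fin n) K))
    (U : Submodule K (Fin m → K)) (X : ↥C) (u : ↥U) :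
    psiMap C U X u = Matrix.vecMul (u : Fin m → K) (X : Matrix (Fin m) (Fin n) K) := rfl

private lemma mem_ker_psiMap {m n : ℕ} (C : Submodule K (Matrix (Fin m) (Fin n) K))
    (U : Submodule K (Fin m → K)) (X : ↥C) :
    X ∈ LinearMap.ker (psiMap C U) ↔
      U ≤ LinearMap.ker ((X : Matrix (Fin m) (Fin n) K).vecMulLinear) := by
  constructor
  · intro h u hu
    have := LinearMap.congr_fun (LinearMap.mem_ker.mp h) ⟨u, hu⟩
    simpa [psiMap_apply] using this
  · intro h
    rw [LinearMap.mem_ker]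
    refine LinearMap.ext fun u => ?_
    simpa [psiMap_apply] using h u.2

variable {V : Type*} [AddCommGroup V] [Module K V] [FiniteDimensional K V]

private lemma finrank_dualAnnihilator' (U : Submodule K V) :
    finrank K U.dualAnnihilator = finrank K V - finrank K U := by
  have h : finrank K (V ⧸ U) = finrank K U.dualAnnihilator :=
    LinearEquiv.finrank_eq (Subspace.quotEquivAnnihilator U)
  have h2 := Submodule.finrank_quotient_add_finrank U
  omega

private lemma ncard_subspaces_symm [Finite V] (a b : ℕ) (hab : a + b = finrank K V) :
    {U : Submodule K V | finrank K U = a}.ncard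
      = {U : Submodule K V | finrank K U = b}.ncard := by
  have hfin : Finite (Submodule K V) :=
    Finite.of_injective _ (SetLike.coe_injective (A := Submodule K V))
  have key : ∀ a b : ℕ, a + b = finrank K V →
      {U : Submodule K V | finrank K U = a}.ncard ≤
      {U : Submodule K V | finrank K U = b}.ncard := by
    intro a b hab
    let ε : Module.Dual K V ≃ₗ[K] V :=
      LinearEquiv.ofFinrankEq _ _ Subspace.dual_finrank_eq
    let F : Submodule K V → Submodule K V :=
      fun U => (U.dualAnnihilator).map (ε : Module.Dual K V →ₗ[K] V)
    have hinj : Function.Injective F := fun U W h =>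
      Subspace.dualAnnihilator_inj.mp (Submodule.map_injective_of_injective ε.injective h)
    have himg : F '' {U | finrank K U = a} ⊆ {U | finrank K U = b} := by
      rintro _ ⟨U, hU, rfl⟩
      simp only [Set.mem_setOf_eq] at hU ⊢
      show finrank K ((U.dualAnnihilator).map (ε : Module.Dual K V →ₗ[K] V)) = b
      rw [LinearEquiv.finrank_map_eq, finrank_dualAnnihilator', hU]
      omega
    calc {U : Submodule K V | finrank K U = a}.ncard
        = (F '' {U | finrank K U = a}).ncard :=
          (Set.ncard_image_of_injective _ hinj).symm
      _ ≤ _ := Set.ncard_le_ncard himg (Set.toFinite _)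
  exact le_antisymm (key a b hab) (key b a (by omega))

end Aux

set_option maxHeartbeats 2000000 in
/-- From an `F_q`-linear MRD code of minimum distance `d` in
`M_{m×n}(F_q)` (`q` prime) one obtains a partial `n`-spread of `F_q^(n(m-d+1))` of size
the Gaussian binomial coefficient `[m choose d]_q`, i.e. the number of `d`-dimensional
subspaces of `F_q^m`. -/
theorem MRD_gives_partial_spread (p : ℕ) [Fact p.Prime]
    (m n d : ℕ) (hmn : m ≤ n) (hd1 : 1 ≤ d) (hdm : d ≤ m)
    (C : Submodule (ZMod p) (Matrix (Fin m) (Fin n) (ZMod p)))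
    (hdim : Module.finrank (ZMod p) C = n * (m - d + 1))
    (hrank : ∀ X ∈ C, X ≠ 0 → d ≤ X.rank) :
    ∃ D : Set (Submodule (ZMod p) (Fin (n * (m - d + 1)) → ZMod p)),
      D.ncard = {U : Submodule (ZMod p) (Fin m → ZMod p) |
        Module.finrank (ZMod p) U = d}.ncard ∧
      (∀ U ∈ D, Module.finrank (ZMod p) U = n) ∧
      (∀ U ∈ D, ∀ W ∈ D, U ≠ W → U ⊓ W = ⊥) := by
  classical
  have hn1 : 1 ≤ n := le_trans (le_trans hd1 hdm) hmn
  have hV : finrank (ZMod p) (Fin m → ZMod p) = m := Module.finrank_fin_fun (ZMod p)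
  -- nonzero codewords have left kernel of dimension at most `m - d`
  have hker : ∀ X : ↥C, ((X : Matrix (Fin m) (Fin n) (ZMod p))) ≠ 0 →
      finrank (ZMod p)
        (LinearMap.ker (X : Matrix (Fin m) (Fin n) (ZMod p)).vecMulLinear) ≤ m - d := by
    intro X hX0
    have h1 : LinearMap.ker (X : Matrix (Fin m) (Fin n) (ZMod p)).vecMulLinear
        = LinearMap.ker ((X : Matrix (Fin m) (Fin n) (ZMod p)).transpose).mulVecLin := by
      ext v
      simp [Matrix.mulVec_transpose]
    have h2 := LinearMap.finrank_range_add_finrank_ker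
      ((X : Matrix (Fin m) (Fin n) (ZMod p)).transpose).mulVecLin
    have h3 : ((X : Matrix (Fin m) (Fin n) (ZMod p)).transpose).rank
        = finrank (ZMod p)
          (LinearMap.range ((X : Matrix (Fin m) (Fin n) (ZMod p)).transpose).mulVecLin) := rfl
    have h4 := Matrix.rank_transpose (X : Matrix (Fin m) (Fin n) (ZMod p))
    have h5 := hrank X X.2 hX0
    rw [h1]
    rw [hV] at h2
    omega
  -- the subcodes have dimension exactly `n`
  have hsub : ∀ U : Submodule (ZMod p) (Fin m → ZMod p), finrank (ZMod p) U = m - d →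
      finrank (ZMod p) (LinearMap.ker (psiMap C U)) = n := by
    intro U hU
    have h2 := LinearMap.finrank_range_add_finrank_ker (psiMap C U)
    rw [hdim] at h2
    have hr : finrank (ZMod p) (LinearMap.range (psiMap C U))
        ≤ finrank (ZMod p) (↥U →ₗ[ZMod p] (Fin n → ZMod p)) := Submodule.finrank_le _
    have hlin : finrank (ZMod p) (↥U →ₗ[ZMod p] (Fin n → ZMod p)) = (m - d) * n := by
      rw [Module.finrank_linearMap, hU, Module.finrank_fin_fun]
    have hexp : n * (m - d + 1) = (m - d) * n + n := by ring
    -- pick a vector outside `U`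
    have hUne : U ≠ ⊤ := by
      intro h
      rw [h, finrank_top, hV] at hU
      omega
    obtain ⟨v₀, hv₀⟩ : ∃ v, v ∉ U := by
      by_contra h
      push_neg at h
      exact hUne (Submodule.eq_top_iff'.mpr h)
    -- evaluation at `v₀` is injective on the subcode
    let ε : ↥(LinearMap.ker (psiMap C U)) →ₗ[ZMod p] (Fin n → ZMod p) :=
      { toFun := fun X => Matrix.vecMul v₀ (((X : ↥C) : Matrix (Fin m) (Fin n) (ZMod p)))
        map_add' := fun X Y => by simp [Matrix.vecMul_add]
        map_smul' := fun c X => by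
          funext j
          simp [Matrix.vecMul, dotProduct, Finset.mul_sum, mul_left_comm] }
    have hεinj : Function.Injective ε := by
      rw [← LinearMap.ker_eq_bot, LinearMap.ker_eq_bot']
      intro X hX
      have hX' : Matrix.vecMul v₀ (((X : ↥C) : Matrix (Fin m) (Fin n) (ZMod p))) = 0 := hX
      by_contra hX0
      have hXC : (((X : ↥C) : Matrix (Fin m) (Fin n) (ZMod p))) ≠ 0 := by
        intro h
        rw [ZeroMemClass.coe_eq_zero, ZeroMemClass.coe_eq_zero] at h
        exact hX0 h
      have hle : U ≤ LinearMap.ker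
          (((X : ↥C) : Matrix (Fin m) (Fin n) (ZMod p))).vecMulLinear :=
        (mem_ker_psiMap C U (X : ↥C)).mp X.2
      have hv0mem : v₀ ∈ LinearMap.ker
          (((X : ↥C) : Matrix (Fin m) (Fin n) (ZMod p))).vecMulLinear := by
        rw [LinearMap.mem_ker, Matrix.vecMulLinear_apply]
        exact hX'
      have hlt : U < LinearMap.ker
          (((X : ↥C) : Matrix (Fin m) (Fin n) (ZMod p))).vecMulLinear :=
        lt_of_le_of_ne hle (fun h => hv₀ (h ▸ hv0mem))
      have hlt2 := Submodule.finrank_lt_finrank_of_lt hlt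
      have hle2 := hker (X : ↥C) hXC
      omega
    have hup : finrank (ZMod p) (LinearMap.ker (psiMap C U)) ≤ n := by
      have h := LinearMap.finrank_le_finrank_of_injective hεinj
      rwa [Module.finrank_fin_fun] at h
    rw [hlin] at hr
    rw [hexp] at h2
    generalize (m - d) * n = A at h2 hr
    omega
  -- subcodes of distinct subspaces intersect trivially
  have hdisj : ∀ U W : Submodule (ZMod p) (Fin m → ZMod p),
      finrank (ZMod p) U = m - d → finrank (ZMod p) W = m - d → U ≠ W →
      LinearMap.ker (psiMap C U) ⊓ LinearMap.ker (psiMap C W) = ⊥ := by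
    intro U W hU hW hUW
    rw [eq_bot_iff]
    intro X hX
    rw [Submodule.mem_bot]
    by_contra hX0
    obtain ⟨hXU, hXW⟩ := Submodule.mem_inf.mp hX
    have hXC : ((X : Matrix (Fin m) (Fin n) (ZMod p))) ≠ 0 := by
      intro h
      rw [ZeroMemClass.coe_eq_zero] at h
      exact hX0 h
    have h1 : U ≤ LinearMap.ker (X : Matrix (Fin m) (Fin n) (ZMod p)).vecMulLinear :=
      (mem_ker_psiMap C U X).mp hXU
    have h2 : W ≤ LinearMap.ker (X : Matrix (Fin m) (Fin n) (ZMod p)).vecMulLinear :=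
      (mem_ker_psiMap C W X).mp hXW
    have hWU : ¬ W ≤ U := by
      intro h
      exact hUW (Submodule.eq_of_le_of_finrank_le h (by rw [hU, hW])).symm
    have hlt : U < U ⊔ W :=
      lt_of_le_of_ne le_sup_left (fun h => hWU (h ▸ le_sup_right))
    have hlt2 : U < LinearMap.ker (X : Matrix (Fin m) (Fin n) (ZMod p)).vecMulLinear :=
      lt_of_lt_of_le hlt (sup_le h1 h2)
    have hlt3 := Submodule.finrank_lt_finrank_of_lt hlt2
    have hle3 := hker X hXC
    omega
  -- nonemptiness of subcodes
  have hne : ∀ U : Submodule (ZMod p) (Fin m → ZMod p), finrank (ZMod p) U = m - d →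
      LinearMap.ker (psiMap C U) ≠ ⊥ := by
    intro U hU h
    have := hsub U hU
    rw [h, finrank_bot] at this
    omega
  -- transport to the standard space
  obtain ⟨e⟩ : Nonempty (↥C ≃ₗ[ZMod p] (Fin (n * (m - d + 1)) → ZMod p)) :=
    ⟨LinearEquiv.ofFinrankEq _ _ (by rw [hdim, Module.finrank_fin_fun])⟩
  let G : Submodule (ZMod p) (Fin m → ZMod p) →
      Submodule (ZMod p) (Fin (n * (m - d + 1)) → ZMod p) :=
    fun U => (LinearMap.ker (psiMap C U)).map
      (e : ↥C →ₗ[ZMod p] (Fin (n * (m - d + 1)) → ZMod p))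
  refine ⟨G '' {U : Submodule (ZMod p) (Fin m → ZMod p) | finrank (ZMod p) U = m - d},
    ?_, ?_, ?_⟩
  · have hGinj : Set.InjOn G
        {U : Submodule (ZMod p) (Fin m → ZMod p) | finrank (ZMod p) U = m - d} := by
      intro U hU W hW h
      by_contra hUW
      have h0 := hdisj U W hU hW hUW
      have hkk : LinearMap.ker (psiMap C U) = LinearMap.ker (psiMap C W) :=
        Submodule.map_injective_of_injective e.injective h
      rw [hkk, inf_idem] at h0
      exact hne W hW h0
    rw [Set.ncard_image_of_injOn hGinj]
    exact ncard_subspaces_symm (m - d) d (by rw [hV]; omega)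
  · rintro _ ⟨U, hU, rfl⟩
    rw [LinearEquiv.finrank_map_eq]
    exact hsub U hU
  · rintro _ ⟨U, hU, rfl⟩ _ ⟨W, hW, rfl⟩ hne'
    have hUW : U ≠ W := fun h => hne' (by rw [h])
    show G U ⊓ G W = ⊥
    rw [show G U ⊓ G W
        = ((LinearMap.ker (psiMap C U)) ⊓ (LinearMap.ker (psiMap C W))).map
          (e : ↥C →ₗ[ZMod p] (Fin (n * (m - d + 1)) → ZMod p)) from
      (Submodule.map_inf _ e.injective).symm]
    rw [hdisj U W hU hW hUW, Submodule.map_bot]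
end

section
/- Let q be a prime power, n ≥ 2, let s be an integer coprime to n, and let σ : F_{q^n} → F_{q^n} be the automorphism x ↦ x^(q^s). Let φ₁, φ₂ : F_{q^n} → F_{q^n} be additive maps and let 1 ≤ k ≤ n−1. Suppose that N(φ₁(a)) ≠ (−1)^(nk) · N(φ₂(a)) for every nonzero a ∈ F_{q^n}, where N : F_{q^n} → F_q is the field norm, N(x) = x^((q^n−1)/(q−1)). Then the set H_k(φ₁,φ₂) of F_q-linear maps { x ↦ φ₁(a)·x + Σ_{i=1}^{k−1} f_i·x^(q^(s·i)) + φ₂(a)·x^(q^(s·k)) : a, f₁, …, f_{k−1} ∈ F_{q^n} } is an additive subgroup of the F_q-linear endomorphisms of F_{q^n} of cardinality q^(n·k), and every nonzero element of H_k(φ₁,φ₂) has rank at least n − k + 1 as an F_q-linear map. -/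
/-!
Let `σ` be an automorphism of `K` whose fixed field is `F`. If `u ≠ 0` is a root of the
σ-polynomial `P = ∑_{i ≤ m+1} d_i σ^i`, then `P` factors as `Q ∘ (σ - α)` with `α = σ u / u`,
`Q` of σ-degree `m` with the same leading coefficient, and `d_0 = -Q_0 α`. The kernel of
`σ - α` is `F u`, so by induction `dim ker P ≤ m + 1`; and if equality holds, then
`N(d_0) = (-1)^(n(m+1)) N(d_{m+1})` since `N(α) = 1` and `N(-1) = (-1)^n`. In `H_k(φ₁, φ₂)`
an element with `a = 0` has σ-degree `< k`, while for `a ≠ 0` a kernel of dimension `k` would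
contradict the norm condition; so every nonzero element has kernel of dimension `< k`. For
finite fields, `σ = Frob^s` has fixed field `F` because `s` is prime to `n`, and `N(x)` is
`x^((q^n - 1)/(q - 1))`.
-/

open Finset Module LinearMap

theorem LinearMap.finrank_ker_comp_le {R V W U : Type*} [DivisionRing R]
    [AddCommGroup V] [Module R V] [AddCommGroup W] [Module R W] [AddCommGroup U] [Module R U]
    [FiniteDimensional R V] [FiniteDimensional R W] (g : W →ₗ[R] U) (f : V →ₗ[R] W) :
    finrank R (ker (g ∘ₗ f)) ≤ finrank R (ker g) + finrank R (ker f) := by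
  have h := f.lift_rank_comap_le (ker g)
  rw [← ker_comp, ← finrank_eq_rank, ← finrank_eq_rank, ← finrank_eq_rank] at h
  simp only [Cardinal.lift_natCast] at h
  exact_mod_cast h

section

variable {F K : Type*} [Field F] [Field K] [Algebra F K]

def sigmaPoly (σ : K ≃ₐ[F] K) (d : ℕ → K) (m : ℕ) : K →ₗ[F] K :=
  ∑ i ∈ range (m + 1), d i • (σ ^ i).toLinearMap

section SigmaPoly

variable (σ : K ≃ₐ[F] K)

@[simp]
theorem sigmaPoly_apply (d : ℕ → K) (m : ℕ) (x : K) :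
    sigmaPoly σ d m x = ∑ i ∈ range (m + 1), d i * (σ ^ i) x := by
  simp [sigmaPoly]

theorem sigmaPoly_succ (d : ℕ → K) (m : ℕ) :
    sigmaPoly σ d (m + 1) = sigmaPoly σ d m + d (m + 1) • (σ ^ (m + 1)).toLinearMap :=
  sum_range_succ _ _

theorem sigmaPoly_congr {d d' : ℕ → K} {m : ℕ} (h : ∀ i ≤ m, d i = d' i) :
    sigmaPoly σ d m = sigmaPoly σ d' m :=
  sum_congr rfl fun i hi => by rw [h i (Nat.lt_succ_iff.mp (mem_range.mp hi))]

theorem sigmaPoly_add (d d' : ℕ → K) (m : ℕ) :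
    sigmaPoly σ (d + d') m = sigmaPoly σ d m + sigmaPoly σ d' m := by
  simp only [sigmaPoly, Pi.add_apply, add_smul, sum_add_distrib]

theorem exists_sigmaPoly_succ_eq (α : K) (d : ℕ → K) (m : ℕ) :
    ∃ (e : ℕ → K) (r : K), e m = d (m + 1) ∧ d 0 = r - e 0 * α ∧
      ∀ x, sigmaPoly σ d (m + 1) x = sigmaPoly σ e m (σ x - α * x) + r * x := by
  induction m generalizing d with
  | zero =>
    refine ⟨fun _ => d 1, d 0 + d 1 * α, rfl, by ring, fun x => ?_⟩
    simp [sum_range_succ]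
    ring
  | succ m ih =>
    -- cancel the leading term `d (m + 2) σ^(m + 1) (σ x - α x)` and divide the rest
    set d' := Function.update d (m + 1) (d (m + 1) + d (m + 2) * (σ ^ (m + 1)) α)
    obtain ⟨e, r, hem, hd0, hd⟩ := ih d'
    set e' := Function.update e (m + 1) (d (m + 2))
    have hd' : sigmaPoly σ d' m = sigmaPoly σ d m :=
      sigmaPoly_congr σ fun i hi => Function.update_of_ne (by omega) ..
    have he' : sigmaPoly σ e' m = sigmaPoly σ e m :=
      sigmaPoly_congr σ fun i hi => Function.update_of_ne (by omega) ..
    refine ⟨e', r, by simp [e'], by simpa [d', e'] using hd0, fun x => ?_⟩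
    have hx := hd x
    rw [sigmaPoly_succ σ d', hd'] at hx
    rw [sigmaPoly_succ σ d (m + 1), sigmaPoly_succ σ d m, sigmaPoly_succ σ e', he']
    simp only [d', e', LinearMap.add_apply, LinearMap.smul_apply, AlgEquiv.toLinearMap_apply,
      Function.update_self, smul_eq_mul, map_sub, map_mul, pow_succ σ (m + 1),
      AlgEquiv.mul_apply] at hx ⊢
    linear_combination hx

theorem exists_sigmaPoly_eq_comp {d : ℕ → K} {m : ℕ} {u : K} (hu : u ≠ 0)
    (hdu : sigmaPoly σ d (m + 1) u = 0) :
    ∃ e : ℕ → K, e m = d (m + 1) ∧ d 0 = -(e 0 * (σ u / u)) ∧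
      sigmaPoly σ d (m + 1) = sigmaPoly σ e m ∘ₗ (σ.toLinearMap - (σ u / u) • LinearMap.id) := by
  obtain ⟨e, r, hem, hd0, hd⟩ := exists_sigmaPoly_succ_eq σ (σ u / u) d m
  have hr : r = 0 := by
    have hσu : σ u - σ u / u * u = 0 := by rw [div_mul_cancel₀ _ hu, sub_self]
    simpa [hdu, hσu, hu] using hd u
  refine ⟨e, hem, by rw [hd0, hr, zero_sub], LinearMap.ext fun x => ?_⟩
  simp [hd, hr]

end SigmaPoly

section TwistedGabidulin

variable (σ : K ≃ₐ[F] K) (φ₁ φ₂ : K →+ K) (k : ℕ) [NeZero k]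

/-- The coefficients `φ₁ a, f₁, …, f_{k-1}, φ₂ a` of an element of `H_k(φ₁, φ₂)`, encoded by
`v : Fin k → K` with `a = v 0` and `f_i = v i` for `0 < i < k`. -/
def twistedCoeff (v : Fin k → K) (i : ℕ) : K :=
  if i = 0 then φ₁ (v 0) else if h : i < k then v ⟨i, h⟩ else if i = k then φ₂ (v 0) else 0

variable {φ₁ φ₂ k}

@[simp]
theorem twistedCoeff_zero (v : Fin k → K) : twistedCoeff φ₁ φ₂ k v 0 = φ₁ (v 0) := if_pos rfl

@[simp]
theorem twistedCoeff_self (v : Fin k → K) : twistedCoeff φ₁ φ₂ k v k = φ₂ (v 0) := by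
  simp [twistedCoeff, NeZero.ne k]

theorem twistedCoeff_of_pos_of_lt (v : Fin k → K) {i : ℕ} (hi₀ : 0 < i) (hik : i < k) :
    twistedCoeff φ₁ φ₂ k v i = v ⟨i, hik⟩ := by
  simp [twistedCoeff, hi₀.ne', hik]

theorem twistedCoeff_add (v w : Fin k → K) :
    twistedCoeff φ₁ φ₂ k (v + w) = twistedCoeff φ₁ φ₂ k v + twistedCoeff φ₁ φ₂ k w := by
  ext i
  simp only [twistedCoeff, Pi.add_apply, map_add]
  split_ifs <;> simp

variable (φ₁ φ₂ k)

def twistedGabidulin : (Fin k → K) →+ (K →ₗ[F] K) where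
  toFun v := sigmaPoly σ (twistedCoeff φ₁ φ₂ k v) k
  map_zero' := by ext; simp [twistedCoeff]
  map_add' v w := by rw [twistedCoeff_add, sigmaPoly_add]

variable {σ φ₁ φ₂ k}

theorem twistedGabidulin_eq_sigmaPoly (v : Fin k → K) :
    twistedGabidulin σ φ₁ φ₂ k v = sigmaPoly σ (twistedCoeff φ₁ φ₂ k v) k :=
  rfl

theorem twistedGabidulin_apply (v : Fin k → K) (x : K) :
    twistedGabidulin σ φ₁ φ₂ k v x = φ₁ (v 0) * x
      + ∑ i ∈ Ico 1 k, twistedCoeff φ₁ φ₂ k v i * (σ ^ i) x + φ₂ (v 0) * (σ ^ k) x := by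
  rw [twistedGabidulin_eq_sigmaPoly, sigmaPoly_apply, sum_range_succ,
    range_eq_Ico, sum_eq_sum_Ico_succ_bot (Nat.pos_of_neZero k)]
  simp only [twistedCoeff_zero, twistedCoeff_self, pow_zero, AlgEquiv.one_apply]

theorem range_twistedGabidulin :
    Set.range (twistedGabidulin σ φ₁ φ₂ k) = {f | ∃ (a : K) (c : ℕ → K), ∀ x,
      f x = φ₁ a * x + ∑ i ∈ Ico 1 k, c i * (σ ^ i) x + φ₂ a * (σ ^ k) x} := by
  ext f
  constructor
  · rintro ⟨v, rfl⟩
    exact ⟨v 0, twistedCoeff φ₁ φ₂ k v, twistedGabidulin_apply v⟩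
  · rintro ⟨a, c, hf⟩
    set v : Fin k → K := fun j => if (j : ℕ) = 0 then a else c j
    have hv₀ : v 0 = a := if_pos rfl
    have hvc : ∀ i ∈ Ico 1 k, twistedCoeff φ₁ φ₂ k v i = c i := fun i hi => by
      obtain ⟨hi₁, hik⟩ := mem_Ico.mp hi
      rw [twistedCoeff_of_pos_of_lt v hi₁ hik]
      exact if_neg (Nat.one_le_iff_ne_zero.mp hi₁)
    refine ⟨v, LinearMap.ext fun x => ?_⟩
    rw [twistedGabidulin_apply, hf, hv₀, sum_congr rfl fun i hi => by rw [hvc i hi]]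

end TwistedGabidulin

section FixedField

variable {σ : K ≃ₐ[F] K} (hσ : ∀ x, σ x = x → x ∈ Set.range (algebraMap F K))
include hσ

theorem finrank_ker_sub_smul_id_le {u : K} (hu : u ≠ 0) :
    finrank F (ker (σ.toLinearMap - (σ u / u) • LinearMap.id)) ≤ 1 := by
  have hker : ker (σ.toLinearMap - (σ u / u) • LinearMap.id) ≤ Submodule.span F {u} := by
    intro x hx
    have hσx : σ x = σ u / u * x := by simpa [sub_eq_zero] using hx
    obtain ⟨c, hc⟩ := hσ (x / u) (by
      rw [map_div₀, hσx]
      field_simp [(map_ne_zero σ).mpr hu])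
    exact Submodule.mem_span_singleton.mpr ⟨c, by rw [Algebra.smul_def, hc, div_mul_cancel₀ _ hu]⟩
  exact (Submodule.finrank_mono hker).trans (finrank_span_singleton hu).le

variable [FiniteDimensional F K]

theorem finrank_ker_sigmaPoly_le {d : ℕ → K} {m : ℕ} (hd : ∃ i ≤ m, d i ≠ 0) :
    finrank F (ker (sigmaPoly σ d m)) ≤ m := by
  induction m generalizing d with
  | zero =>
    obtain ⟨i, hi, hdi⟩ := hd
    obtain rfl : i = 0 := by omega
    have hker : ker (sigmaPoly σ d 0) = ⊥ := by
      rw [ker_eq_bot']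
      simp [hdi]
    simp [hker]
  | succ m ih =>
    by_cases hdm : d (m + 1) = 0
    · obtain ⟨i, hi, hdi⟩ := hd
      have hi : i ≤ m := by
        rcases Nat.lt_or_eq_of_le hi with hi | rfl
        · omega
        · exact absurd hdm hdi
      rw [sigmaPoly_succ, hdm, zero_smul, add_zero]
      exact (ih ⟨i, hi, hdi⟩).trans m.le_succ
    by_cases hbot : ker (sigmaPoly σ d (m + 1)) = ⊥
    · rw [hbot, finrank_bot]
      exact Nat.zero_le _
    obtain ⟨u, hu, hu0⟩ := (Submodule.ne_bot_iff _).mp hbot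
    obtain ⟨e, hem, -, hcomp⟩ := exists_sigmaPoly_eq_comp σ hu0 hu
    rw [hcomp]
    have := finrank_ker_comp_le (sigmaPoly σ e m) (σ.toLinearMap - (σ u / u) • LinearMap.id)
    have := ih ⟨m, le_rfl, hem ▸ hdm⟩
    have := finrank_ker_sub_smul_id_le hσ hu0
    omega

theorem norm_coeff_zero_eq_of_le_finrank_ker {d : ℕ → K} {m : ℕ}
    (hker : m ≤ finrank F (ker (sigmaPoly σ d m))) :
    Algebra.norm F (d 0) = (-1) ^ (finrank F K * m) * Algebra.norm F (d m) := by
  induction m generalizing d with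
  | zero => simp
  | succ m ih =>
    have hbot : ker (sigmaPoly σ d (m + 1)) ≠ ⊥ := fun hbot => by
      rw [hbot, finrank_bot] at hker
      omega
    obtain ⟨u, hu, hu0⟩ := (Submodule.ne_bot_iff _).mp hbot
    obtain ⟨e, hem, hd0, hcomp⟩ := exists_sigmaPoly_eq_comp σ hu0 hu
    have hker' : m ≤ finrank F (ker (sigmaPoly σ e m)) := by
      have := finrank_ker_comp_le (sigmaPoly σ e m) (σ.toLinearMap - (σ u / u) • LinearMap.id)
      have := finrank_ker_sub_smul_id_le hσ hu0
      rw [← hcomp] at *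
      omega
    have hnorm_α : Algebra.norm F (σ u / u) = 1 := by
      refine (mul_eq_right₀ (Algebra.norm_ne_zero_iff.mpr hu0)).mp ?_
      rw [← map_mul, div_mul_cancel₀ _ hu0, Algebra.norm_eq_of_algEquiv]
    have hnorm_neg_one : Algebra.norm F (-1 : K) = (-1) ^ finrank F K := by
      rw [← map_one (algebraMap F K), ← map_neg, Algebra.norm_algebraMap]
    rw [hd0, neg_eq_neg_one_mul, map_mul, map_mul, hnorm_α, hnorm_neg_one, ih hker', ← hem]
    ring

variable {φ₁ φ₂ : K →+ K} {k : ℕ} [NeZero k]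
  (hnorm : ∀ a ≠ 0, Algebra.norm F (φ₁ a) ≠ (-1) ^ (finrank F K * k) * Algebra.norm F (φ₂ a))
include hnorm

theorem finrank_ker_twistedGabidulin_le {v : Fin k → K} (hv : v ≠ 0) :
    finrank F (ker (twistedGabidulin σ φ₁ φ₂ k v)) ≤ k - 1 := by
  by_cases hv₀ : v 0 = 0
  · obtain ⟨k, rfl⟩ := Nat.exists_eq_add_one_of_ne_zero (NeZero.ne k)
    obtain ⟨j, hj⟩ := Function.ne_iff.mp hv
    have hj₀ : 0 < (j : ℕ) :=
      Nat.pos_of_ne_zero fun h => hj (by rw [Fin.ext (b := 0) h, hv₀]; rfl)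
    have htop : twistedGabidulin σ φ₁ φ₂ (k + 1) v =
        sigmaPoly σ (twistedCoeff φ₁ φ₂ (k + 1) v) k := by
      rw [twistedGabidulin_eq_sigmaPoly, sigmaPoly_succ, twistedCoeff_self, hv₀, map_zero,
        zero_smul, add_zero]
    rw [htop]
    exact finrank_ker_sigmaPoly_le hσ ⟨j, by omega, by rwa [twistedCoeff_of_pos_of_lt v hj₀ j.isLt]⟩
  · by_contra hlt
    rw [twistedGabidulin_eq_sigmaPoly] at hlt
    refine hnorm (v 0) hv₀ ?_
    rw [← twistedCoeff_zero, ← twistedCoeff_self]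
    exact norm_coeff_zero_eq_of_le_finrank_ker hσ (by omega)

variable (hk : k ≤ finrank F K)
include hk

theorem twistedGabidulin_injective : Function.Injective (twistedGabidulin σ φ₁ φ₂ k) := by
  refine (injective_iff_map_eq_zero _).mpr fun v hv => by_contra fun hv₀ => ?_
  have hker := finrank_ker_twistedGabidulin_le hσ hnorm hv₀
  rw [hv, ker_zero, finrank_top] at hker
  have := NeZero.pos k
  omega

theorem sub_add_one_le_finrank_range_twistedGabidulin {v : Fin k → K} (hv : v ≠ 0) :
    finrank F K - k + 1 ≤ finrank F (range (twistedGabidulin σ φ₁ φ₂ k v)) := by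
  have := finrank_range_add_finrank_ker (twistedGabidulin σ φ₁ φ₂ k v)
  have := finrank_ker_twistedGabidulin_le hσ hnorm hv
  have := NeZero.pos k
  omega

end FixedField

section FiniteField

open FiniteField

variable [Fintype F]

theorem frobeniusAlgEquivOfAlgebraic_pow_pow_apply [Algebra.IsAlgebraic F K] (s i : ℕ) (x : K) :
    ((frobeniusAlgEquivOfAlgebraic F K ^ s) ^ i) x = x ^ Fintype.card F ^ (s * i) := by
  rw [← pow_mul, AlgEquiv.coe_pow, coe_frobeniusAlgEquivOfAlgebraic_iterate]

variable [Finite K]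

theorem mem_range_algebraMap_of_frobeniusAlgEquivOfAlgebraic_pow_apply_eq {s : ℕ}
    (hs : s.Coprime (finrank F K)) {x : K} (hx : (frobeniusAlgEquivOfAlgebraic F K ^ s) x = x) :
    x ∈ Set.range (algebraMap F K) := by
  obtain ⟨m, hm⟩ := exists_pow_eq_self_of_coprime (x := frobeniusAlgEquivOfAlgebraic F K) (n := s)
    (by rwa [orderOf_frobeniusAlgEquivOfAlgebraic])
  refine (IsGalois.mem_range_algebraMap_iff_fixed x).mpr fun f => ?_
  obtain ⟨j, rfl⟩ := (bijective_frobeniusAlgEquivOfAlgebraic_pow F K).2 f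
  dsimp only
  rw [← hm, ← pow_mul, AlgEquiv.coe_pow]
  exact Function.iterate_fixed hx _

theorem pow_card_pow_finrank_sub_one_div (x : K) :
    x ^ ((Fintype.card F ^ finrank F K - 1) / (Fintype.card F - 1)) =
      algebraMap F K (Algebra.norm F x) := by
  rw [algebraMap_norm_eq_pow, Module.natCard_eq_pow_finrank (K := F), Nat.card_eq_fintype_card]

end FiniteField

end

theorem twisted_gabidulin_construction_general (F : Type*) [Field F] [Fintype F]
    (K : Type*) [Field K] [Algebra F K]
    (n : ℕ) (hK : Module.finrank F K = n)
    (s : ℕ) (hs : Nat.Coprime s n)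
    (φ₁ φ₂ : K →+ K)
    (k : ℕ) (hk1 : 1 ≤ k) (hkn : k ≤ n - 1)
    (hnorm : ∀ a : K, a ≠ 0 →
      (φ₁ a) ^ ((Fintype.card F ^ n - 1) / (Fintype.card F - 1)) ≠
        (-1 : K) ^ (n * k) * (φ₂ a) ^ ((Fintype.card F ^ n - 1) / (Fintype.card F - 1))) :
    ∃ H : AddSubgroup (K →ₗ[F] K),
      (H : Set (K →ₗ[F] K)) =
        {f : K →ₗ[F] K | ∃ (a : K) (c : ℕ → K), ∀ x : K,
          f x = φ₁ a * x + (∑ i ∈ Finset.Ico 1 k, c i * x ^ (Fintype.card F ^ (s * i)))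
            + φ₂ a * x ^ (Fintype.card F ^ (s * k))} ∧
      Nat.card H = Fintype.card F ^ (n * k) ∧
      ∀ f ∈ H, f ≠ 0 → n - k + 1 ≤ Module.finrank F (LinearMap.range f) := by
  subst hK
  have : NeZero k := ⟨by omega⟩
  have : FiniteDimensional F K := Module.finite_of_finrank_pos (by omega)
  have : Finite K := Module.finite_of_finite F
  have hσ (x : K) :
      (FiniteField.frobeniusAlgEquivOfAlgebraic F K ^ s) x = x → x ∈ Set.range (algebraMap F K) :=
    mem_range_algebraMap_of_frobeniusAlgEquivOfAlgebraic_pow_apply_eq hs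
  have hnorm' (a : K) (ha : a ≠ 0) :
      Algebra.norm F (φ₁ a) ≠ (-1) ^ (finrank F K * k) * Algebra.norm F (φ₂ a) := fun h =>
    hnorm a ha (by simp [pow_card_pow_finrank_sub_one_div, h])
  have hk : k ≤ finrank F K := by omega
  refine ⟨(twistedGabidulin (FiniteField.frobeniusAlgEquivOfAlgebraic F K ^ s) φ₁ φ₂ k).range,
    ?_, ?_, ?_⟩
  · rw [AddMonoidHom.coe_range, range_twistedGabidulin]
    simp only [frobeniusAlgEquivOfAlgebraic_pow_pow_apply]
  · rw [← SetLike.coe_sort_coe, AddMonoidHom.coe_range,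
      Nat.card_range_of_injective (twistedGabidulin_injective hσ hnorm' hk), Nat.card_fun,
      Module.natCard_eq_pow_finrank (K := F), Nat.card_eq_fintype_card, Nat.card_fin, ← pow_mul]
  · rintro _ ⟨v, rfl⟩ hv
    refine sub_add_one_le_finrank_range_twistedGabidulin hσ hnorm' hk ?_
    rintro rfl
    exact hv (map_zero _)

/-- The general construction `H_k(φ₁, φ₂)`: if
`N(φ₁(a)) ≠ (-1)^(nk) N(φ₂(a))` for all nonzero `a`, then the set of linearized maps
`x ↦ φ₁(a)x + Σ_{i=1}^{k-1} f_i x^(q^(si)) + φ₂(a) x^(q^(sk))` is an additive MRD code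
of cardinality `q^(nk)` and minimum distance `n - k + 1`. -/
theorem twisted_gabidulin_construction (F : Type*) [Field F] [Fintype F]
    (K : Type*) [Field K] [Algebra F K]
    (n : ℕ) (hn : 2 ≤ n) (hK : Module.finrank F K = n)
    (s : ℕ) (hs : Nat.Coprime s n)
    (φ₁ φ₂ : K →+ K)
    (k : ℕ) (hk1 : 1 ≤ k) (hkn : k ≤ n - 1)
    (hnorm : ∀ a : K, a ≠ 0 →
      (φ₁ a) ^ ((Fintype.card F ^ n - 1) / (Fintype.card F - 1)) ≠
        (-1 : K) ^ (n * k) * (φ₂ a) ^ ((Fintype.card F ^ n - 1) / (Fintype.card F - 1))) :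
    ∃ H : AddSubgroup (K →ₗ[F] K),
      (H : Set (K →ₗ[F] K)) =
        {f : K →ₗ[F] K | ∃ (a : K) (c : ℕ → K), ∀ x : K,
          f x = φ₁ a * x + (∑ i ∈ Finset.Ico 1 k, c i * x ^ (Fintype.card F ^ (s * i)))
            + φ₂ a * x ^ (Fintype.card F ^ (s * k))} ∧
      Nat.card H = Fintype.card F ^ (n * k) ∧
      ∀ f ∈ H, f ≠ 0 → n - k + 1 ≤ Module.finrank F (LinearMap.range f) :=
  twisted_gabidulin_construction_general F K n hK s hs φ₁ φ₂ k hk1 hkn hnorm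
end

section
/- Let q be a prime power and let 1 ≤ d ≤ n. The set D = { x ↦ Σ_{i=0}^{n−d} f_i·x^(q^i) : f₀, …, f_{n−d} ∈ F_{q^n} } of F_q-linear endomorphisms of F_{q^n} is an additive subgroup of cardinality q^(n(n−d+1)) in which every nonzero element has rank at least d. In particular, additive MRD codes in M_n(F_q) with minimum distance d exist for all prime powers q and all 1 ≤ d ≤ n. -/
/-!
Write `q = #F` and `m = n - d + 1`. The map `x ↦ Σ_{i<m} cᵢ x^(q^i)` is the evaluation of the
linearized polynomial `Σ_{i<m} cᵢ X^(q^i)`, which is nonzero as soon as `c` is, and has degree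
at most `q^(m-1)`. Its kernel is therefore an `F`-subspace with at most `q^(m-1)` elements, i.e.
of dimension at most `m - 1`, so by rank–nullity the rank is at least `n - (m - 1) = d`. Since
`m - 1 < n`, the same bound shows that a nonzero `c` never gives the zero map, so
`c ↦ Σ cᵢ x^(q^i)` is injective on `K^m` and its image has `q^(nm)` elements.
-/

open Polynomial

section LinearizedPolynomial

variable {K : Type*} [Semiring K] (q : ℕ) {m : ℕ}

noncomputable def linearizedPoly (c : Fin m → K) : K[X] :=
  ∑ i, C (c i) * X ^ (q ^ (i : ℕ))

theorem eval_linearizedPoly (c : Fin m → K) (x : K) :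
    (linearizedPoly q c).eval x = ∑ i, c i * x ^ (q ^ (i : ℕ)) := by
  simp [linearizedPoly, eval_finsetSum]

variable {q}

theorem natDegree_linearizedPoly_le (hq : 0 < q) (c : Fin m → K) :
    (linearizedPoly q c).natDegree ≤ q ^ (m - 1) :=
  natDegree_sum_le_of_forall_le _ _ fun i _ ↦ (natDegree_C_mul_X_pow_le _ _).trans <|
    Nat.pow_le_pow_right hq (by omega)

theorem coeff_linearizedPoly_pow (hq : 1 < q) (c : Fin m → K) (j : Fin m) :
    (linearizedPoly q c).coeff (q ^ (j : ℕ)) = c j := by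
  rw [linearizedPoly, finsetSum_coeff, Finset.sum_eq_single j]
  · simp
  · intro i _ hij
    have hpow : q ^ (j : ℕ) ≠ q ^ (i : ℕ) :=
      (Nat.pow_right_injective hq).ne (Fin.val_injective.ne hij.symm)
    rw [coeff_C_mul_X_pow, if_neg hpow]
  · simp

theorem linearizedPoly_ne_zero (hq : 1 < q) {c : Fin m → K} (hc : c ≠ 0) :
    linearizedPoly q c ≠ 0 := by
  contrapose! hc
  ext j
  rw [← coeff_linearizedPoly_pow hq c, hc, coeff_zero, Pi.zero_apply]

end LinearizedPolynomial

section LinearizedMap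

variable (F : Type*) [Field F] [Fintype F] (K : Type*) [Field K] [Algebra F K] (m : ℕ)

noncomputable def linearizedMap : (Fin m → K) →ₗ[K] K →ₗ[F] K :=
  Fintype.linearCombination K fun i : Fin m ↦
    (FiniteField.frobeniusAlgHom F K ^ (i : ℕ)).toLinearMap

variable {F K m}

theorem linearizedMap_apply (c : Fin m → K) (x : K) :
    linearizedMap F K m c x = (linearizedPoly (Fintype.card F) c).eval x := by
  simp [linearizedMap, Fintype.linearCombination_apply, eval_linearizedPoly, AlgHom.coe_pow,
    FiniteField.coe_frobeniusAlgHom, pow_iterate]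

theorem coe_range_linearizedMap :
    (LinearMap.range (linearizedMap F K m) : Set (K →ₗ[F] K)) =
      {f | ∃ c : ℕ → K, ∀ x : K,
        f x = ∑ i ∈ Finset.range m, c i * x ^ (Fintype.card F ^ i)} := by
  ext f
  simp only [SetLike.mem_coe, LinearMap.mem_range, Set.mem_ofPred_eq, LinearMap.ext_iff,
    linearizedMap_apply, eval_linearizedPoly]
  constructor
  · rintro ⟨c, hc⟩
    refine ⟨Function.extend Fin.val c 0, fun x ↦ ?_⟩
    rw [← hc, ← Fin.sum_univ_eq_sum_range (fun i ↦ Function.extend Fin.val c 0 i * x ^ _)]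
    simp only [Fin.val_injective.extend_apply]
  · rintro ⟨c, hc⟩
    refine ⟨fun i ↦ c i, fun x ↦ ?_⟩
    rw [hc, Fin.sum_univ_eq_sum_range (fun i ↦ c i * x ^ _)]

variable (F) in
theorem natCard_ker_linearizedMap_le {c : Fin m → K} (hc : c ≠ 0) :
    Nat.card (LinearMap.ker (linearizedMap F K m c)) ≤ Fintype.card F ^ (m - 1) := by
  have hP : linearizedPoly (Fintype.card F) c ≠ 0 :=
    linearizedPoly_ne_zero Fintype.one_lt_card hc
  have hker : (LinearMap.ker (linearizedMap F K m c) : Set K) ⊆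
      (linearizedPoly (Fintype.card F) c).rootSet K := fun x hx ↦ by
    rw [mem_rootSet, coe_aeval_eq_eval, ← linearizedMap_apply]
    exact ⟨hP, hx⟩
  calc Nat.card (LinearMap.ker (linearizedMap F K m c))
      ≤ ((linearizedPoly (Fintype.card F) c).rootSet K).ncard :=
        Set.ncard_le_ncard hker (rootSet_finite _ _)
    _ ≤ (linearizedPoly (Fintype.card F) c).natDegree := ncard_rootSet_le _ _
    _ ≤ Fintype.card F ^ (m - 1) := natDegree_linearizedPoly_le Fintype.card_pos c

variable [FiniteDimensional F K]

variable (F) in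
theorem finrank_ker_linearizedMap_le {c : Fin m → K} (hc : c ≠ 0) :
    Module.finrank F (LinearMap.ker (linearizedMap F K m c)) ≤ m - 1 := by
  have hker := natCard_ker_linearizedMap_le F hc
  rw [Module.natCard_eq_pow_finrank (K := F), Nat.card_eq_fintype_card] at hker
  exact (Nat.pow_le_pow_iff_right Fintype.one_lt_card).mp hker

theorem linearizedMap_injective (hm : m ≤ Module.finrank F K) :
    Function.Injective (linearizedMap F K m) := by
  rw [← LinearMap.ker_eq_bot, LinearMap.ker_eq_bot']
  intro c h0
  by_contra hc
  have hm0 : 0 < m := Nat.pos_of_ne_zero <| by rintro rfl; exact hc (Subsingleton.elim _ _)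
  have hker := finrank_ker_linearizedMap_le F hc
  rw [h0, LinearMap.ker_zero, finrank_top] at hker
  omega

variable (F) in
theorem finrank_sub_le_finrank_range_linearizedMap {c : Fin m → K} (hc : c ≠ 0) :
    Module.finrank F K - (m - 1) ≤
      Module.finrank F (LinearMap.range (linearizedMap F K m c)) := by
  have := (linearizedMap F K m c).finrank_range_add_finrank_ker
  have := finrank_ker_linearizedMap_le F hc
  omega

theorem natCard_range_linearizedMap (hm : m ≤ Module.finrank F K) :
    Nat.card (LinearMap.range (linearizedMap F K m)) =
      Fintype.card F ^ (Module.finrank F K * m) := by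
  rw [← Nat.card_congr (LinearEquiv.ofInjective _ (linearizedMap_injective hm)).toEquiv,
    Nat.card_fun, Nat.card_fin, Module.natCard_eq_pow_finrank (K := F), Nat.card_eq_fintype_card,
    pow_mul]

end LinearizedMap

/-- **Delsarte–Gabidulin.** The set of linearized polynomial maps
`x ↦ Σ_{i=0}^{n-d} f_i x^(q^i)` is an additive subgroup of `End_{F_q}(F_{q^n})` of
cardinality `q^(n(n-d+1))` all of whose nonzero elements have rank at least `d`; in
particular additive MRD codes of minimum distance `d` exist for all `q` and `1 ≤ d ≤ n`. -/
theorem delsarte_gabidulin_is_MRD (F : Type*) [Field F] [Fintype F]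
    (K : Type*) [Field K] [Algebra F K]
    (n d : ℕ) (hK : Module.finrank F K = n) (hd1 : 1 ≤ d) (hdn : d ≤ n) :
    ∃ H : AddSubgroup (K →ₗ[F] K),
      (H : Set (K →ₗ[F] K)) =
        {f : K →ₗ[F] K | ∃ c : ℕ → K, ∀ x : K,
          f x = ∑ i ∈ Finset.range (n - d + 1), c i * x ^ (Fintype.card F ^ i)} ∧
      Nat.card H = Fintype.card F ^ (n * (n - d + 1)) ∧
      ∀ f ∈ H, f ≠ 0 → d ≤ Module.finrank F (LinearMap.range f) := by
  have : FiniteDimensional F K := .of_finrank_pos (by omega)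
  have hm : n - d + 1 ≤ Module.finrank F K := by omega
  refine ⟨(LinearMap.range (linearizedMap F K (n - d + 1))).toAddSubgroup,
    coe_range_linearizedMap, ?_, ?_⟩
  · exact (natCard_range_linearizedMap hm).trans (by rw [hK])
  · rintro _ ⟨c, rfl⟩ hf
    have hc : c ≠ 0 := by rintro rfl; exact hf (map_zero _)
    have := finrank_sub_le_finrank_range_linearizedMap F hc
    omega
end

section
/- Let q be a prime power and m ≤ n. Suppose C is an n-dimensional F_q-subspace of the m×n matrices over F_q such that every nonzero matrix in C has rank m. Then there exists an m-dimensional F_q-subspace W of the n×n matrices over F_q such that every nonzero matrix in W is invertible. -/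
/-!
Fix a basis `E₁, …, Eₙ` of `C` and, for `a ∈ F^m`, let `T_a` be the `n × n` matrix whose `i`-th row
is `a Eᵢ`. Then `v T_a = a (∑ vᵢ Eᵢ)` for every `v ∈ F^n`. If `a ≠ 0` and `v ≠ 0`, the matrix
`∑ vᵢ Eᵢ` is a nonzero element of `C`, so its rows are independent and `a (∑ vᵢ Eᵢ) ≠ 0`; hence
`T_a` is invertible. In particular `T_a ≠ 0` once `n > 0`, which `m ≤ n` guarantees as soon as
a nonzero `a` exists, so the linear map `a ↦ T_a` is injective and its image is the required space.
-/

open Matrix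

section

variable {F : Type*} [Field F] {m n ι : Type*}

theorem Matrix.linearIndependent_row_of_rank_eq_card [Fintype m] [Fintype n] {M : Matrix m n F}
    (h : M.rank = Fintype.card m) : LinearIndependent F M.row := by
  rw [linearIndependent_iff_card_eq_finrank_span, Set.finrank, ← rank_eq_finrank_span_row, h]

/-- The slice `T_a(u, v) = T(a, u, v)` of the trilinear form `T(w, u, v) = w (∑ vᵢ Eᵢ) uᵀ`. -/
def sliceMap [Fintype m] (E : ι → Matrix m n F) : (m → F) →ₗ[F] Matrix ι n F :=
  (ofLinearEquiv F).toLinearMap ∘ₗ LinearMap.pi fun i => (E i).vecMulLinear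

@[simp]
theorem sliceMap_apply [Fintype m] (E : ι → Matrix m n F) (a : m → F) (i : ι) :
    sliceMap E a i = a ᵥ* E i :=
  rfl

theorem vecMul_sliceMap [Fintype m] [Fintype ι] (E : ι → Matrix m n F) (a : m → F) (v : ι → F) :
    v ᵥ* sliceMap E a = a ᵥ* ∑ i, v i • E i := by
  simp only [vecMul_eq_sum (M := sliceMap E a), sliceMap_apply, vecMul_sum, vecMul_smul]

section FullRowRank

variable [Fintype m] [Fintype n] {C : Submodule F (Matrix m n F)} (b : Module.Basis n F C)
  (hC : ∀ X ∈ C, X ≠ 0 → Function.Injective X.vecMul)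
include hC

theorem isUnit_sliceMap [DecidableEq n] {a : m → F} (ha : a ≠ 0) :
    IsUnit (sliceMap (fun i => (b i : Matrix m n F)) a) := by
  rw [← vecMul_injective_iff_isUnit, ← coe_vecMulLinear, ← LinearMap.ker_eq_bot,
    LinearMap.ker_eq_bot']
  intro v hv
  rw [vecMulLinear_apply, vecMul_sliceMap] at hv
  by_contra hv0
  have hX : (b.equivFun.symm v : Matrix m n F) ≠ 0 := by
    simpa only [ne_eq, Submodule.coe_eq_zero, map_eq_zero_iff _ b.equivFun.symm.injective]
  refine ha (hC _ (b.equivFun.symm v).2 hX ?_)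
  simpa [Module.Basis.equivFun_symm_apply] using hv

theorem sliceMap_injective [DecidableEq n] (hmn : Fintype.card m ≤ Fintype.card n) :
    Function.Injective (sliceMap fun i => (b i : Matrix m n F)) := by
  rw [← LinearMap.ker_eq_bot, LinearMap.ker_eq_bot']
  intro a ha
  by_contra ha0
  obtain ⟨j, -⟩ := Function.ne_iff.mp ha0
  have : Nonempty n := Fintype.card_pos_iff.mp ((Fintype.card_pos_iff.mpr ⟨j⟩).trans_le hmn)
  exact not_isUnit_zero (ha ▸ isUnit_sliceMap b hC ha0)

end FullRowRank

end

theorem rectangular_MRD_gives_invertible_space_general (F : Type*) [Field F]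
    (m n : ℕ) (hmn : m ≤ n)
    (C : Submodule F (Matrix (Fin m) (Fin n) F))
    (hdim : Module.finrank F C = n)
    (hrank : ∀ X ∈ C, X ≠ 0 → X.rank = m) :
    ∃ W : Submodule F (Matrix (Fin n) (Fin n) F),
      Module.finrank F W = m ∧ ∀ Y ∈ W, Y ≠ 0 → IsUnit Y := by
  let b := Module.finBasisOfFinrankEq F C hdim
  have hC : ∀ X ∈ C, X ≠ 0 → Function.Injective X.vecMul := fun X hX hX0 =>
    vecMul_injective_iff.mpr <|
      linearIndependent_row_of_rank_eq_card (by rw [hrank X hX hX0, Fintype.card_fin])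
  refine ⟨LinearMap.range (sliceMap fun i => (b i : Matrix (Fin m) (Fin n) F)), ?_, ?_⟩
  · rw [LinearMap.finrank_range_of_inj (sliceMap_injective b hC (by simpa using hmn)),
      Module.finrank_fin_fun]
  · rintro _ ⟨a, rfl⟩ hY
    exact isUnit_sliceMap b hC fun ha => hY (by rw [ha, map_zero])

/-- From an `n`-dimensional space of `m×n` matrices over `F_q` in which
every nonzero element has full rank `m`, one obtains an `m`-dimensional space of `n×n`
matrices in which every nonzero element is invertible. -/
theorem rectangular_MRD_gives_invertible_space (F : Type*) [Field F] [Fintype F]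
    (m n : ℕ) (hmn : m ≤ n)
    (C : Submodule F (Matrix (Fin m) (Fin n) F))
    (hdim : Module.finrank F C = n)
    (hrank : ∀ X ∈ C, X ≠ 0 → X.rank = m) :
    ∃ W : Submodule F (Matrix (Fin n) (Fin n) F),
      Module.finrank F W = m ∧ ∀ Y ∈ W, Y ≠ 0 → IsUnit Y :=
  rectangular_MRD_gives_invertible_space_general F m n hmn C hdim hrank
end
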